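/- arXiv:1401.1526 — 15 statements merged into one kernel-verified Lean document; each statement's English description precedes it below -/
import Mathlib

section
/- Let X be a deck of n = a+b+1 cards (a,b ≥ 1, so c = 1) and let 𝒜 be a nonempty announcement satisfying the perfect 1-security condition, i.e., for every x ∈ X with P({x},𝒜) ≠ ∅ and every y ∈ X∖{x}, (a+b)·|{H ∈ P({x},𝒜) : y ∈ H}| = a·|P({x},𝒜)|. Then 𝒜 is a 2-design: there exists a constant λ such that every 2-element subset of X is contained in exactly λ hands of 𝒜. -/
open Finset

private lemma helper_req (a b L px py rx ry N : ℕ) (hb : 0 < b)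
    (k1 : (a + b) * L + a * px = (a + b) * ry)
    (k2 : (a + b) * L + a * py = (a + b) * rx)
    (e1 : rx + px = N) (e2 : ry + py = N) : rx = ry := by
  have e1' : a * rx + a * px = a * N := by rw [← Nat.mul_add, e1]
  have e2' : a * ry + a * py = a * N := by rw [← Nat.mul_add, e2]
  simp only [Nat.add_mul] at k1 k2
  have hbr : b * rx = b * ry := by linarith
  exact Nat.eq_of_mul_eq_mul_left hb hbr

private lemma helper_lam (a b L L' px py ry ry' : ℕ) (hab : 0 < a + b)
    (k1 : (a + b) * L + a * px = (a + b) * ry)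
    (k2 : (a + b) * L' + a * py = (a + b) * ry')
    (hp : px = py) (hr : ry = ry') : L = L' := by
  subst hp hr
  have h : (a + b) * L = (a + b) * L' := by linarith
  exact Nat.eq_of_mul_eq_mul_left hab h

/-- Theorem: for a deal with `c = 1`, a nonempty perfectly 1-secure announcement
is a 2-design: every pair of cards lies in a constant number `λ` of hands. -/
theorem stmt_3 {α : Type*} [DecidableEq α] (X : Finset α) (a b : ℕ)
    (ha : 1 ≤ a) (hb : 1 ≤ b)
    (hX : X.card = a + b + 1)
    (𝒜 : Finset (Finset α))
    (hhands : ∀ H ∈ 𝒜, H ⊆ X ∧ H.card = a)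
    (hne : 𝒜.Nonempty)
    (hsec : ∀ x ∈ X, (𝒜.filter fun H => x ∉ H).Nonempty →
      ∀ y ∈ X \ {x},
        (a + b) * (((𝒜.filter fun H => x ∉ H)).filter fun H => y ∈ H).card =
          a * (𝒜.filter fun H => x ∉ H).card) :
    ∃ lam : ℕ, ∀ T ⊆ X, T.card = 2 → (𝒜.filter fun H => T ⊆ H).card = lam := by
  classical
  obtain ⟨H₀, hH₀⟩ := hne
  have hsub := (hhands H₀ hH₀).1
  have hcardH₀ := (hhands H₀ hH₀).2
  obtain ⟨z, hzX, hzH₀⟩ : ∃ z ∈ X, z ∉ H₀ := by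
    have hne' : H₀ ≠ X := by intro h; rw [h, hX] at hcardH₀; omega
    exact Finset.exists_of_ssubset (ssubset_of_subset_of_ne hsub hne')
  have hPz : (𝒜.filter fun H => z ∉ H).Nonempty :=
    ⟨H₀, Finset.mem_filter.2 ⟨hH₀, hzH₀⟩⟩
  -- Perfect security forces every P({x}) to be nonempty.
  have hP : ∀ x ∈ X, (𝒜.filter fun H => x ∉ H).Nonempty := by
    intro x hx
    by_contra hempty
    rw [Finset.not_nonempty_iff_eq_empty, Finset.filter_eq_empty_iff] at hempty
    push_neg at hempty
    by_cases hxz : x = z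
    · subst hxz
      exact hzH₀ (hempty hH₀)
    · have hsec' := hsec z hzX hPz x (Finset.mem_sdiff.2 ⟨hx, by simp [hxz]⟩)
      have heq : ((𝒜.filter fun H => z ∉ H).filter fun H => x ∈ H)
          = 𝒜.filter fun H => z ∉ H :=
        Finset.filter_true_of_mem (fun H hH => hempty (Finset.mem_filter.1 hH).1)
      rw [heq] at hsec'
      have hppos : 0 < (𝒜.filter fun H => z ∉ H).card := Finset.card_pos.2 hPz
      simp only [Nat.add_mul] at hsec'
      have hzero : b * (𝒜.filter fun H => z ∉ H).card = 0 := by linarith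
      rcases Nat.mul_eq_zero.1 hzero with h | h <;> omega
  -- Counting identity: |P_x ∩ {y ∈ H}| + λ_{xy} = r_y.
  have hc : ∀ x y : α,
      ((𝒜.filter fun H => x ∉ H).filter fun H => y ∈ H).card
        + (𝒜.filter fun H => x ∈ H ∧ y ∈ H).card
      = (𝒜.filter fun H => y ∈ H).card := by
    intro x y
    have h1 := Finset.card_filter_add_card_filter_not
      (s := 𝒜.filter fun H => y ∈ H) (p := fun H => x ∉ H)
    rw [Finset.filter_comm] at h1
    have h2 : ((𝒜.filter fun H => y ∈ H).filter fun H => ¬x ∉ H)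
        = 𝒜.filter fun H => x ∈ H ∧ y ∈ H := by
      rw [Finset.filter_filter]
      exact Finset.filter_congr (fun H _ => by tauto)
    rw [h2] at h1
    exact h1
  have hrp : ∀ x : α,
      (𝒜.filter fun H => x ∈ H).card + (𝒜.filter fun H => x ∉ H).card = 𝒜.card :=
    fun x => Finset.card_filter_add_card_filter_not (fun H => x ∈ H)
  have hlmsymm : ∀ x y : α,
      (𝒜.filter fun H => x ∈ H ∧ y ∈ H) = 𝒜.filter fun H => y ∈ H ∧ x ∈ H :=
    fun x y => Finset.filter_congr (fun H _ => by tauto)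
  -- Key relation from the security condition.
  have hkey : ∀ x ∈ X, ∀ y ∈ X, x ≠ y →
      (a + b) * (𝒜.filter fun H => x ∈ H ∧ y ∈ H).card
        + a * (𝒜.filter fun H => x ∉ H).card
      = (a + b) * (𝒜.filter fun H => y ∈ H).card := by
    intro x hx y hy hxy
    have hs := hsec x hx (hP x hx) y (Finset.mem_sdiff.2 ⟨hy, by simp [Ne.symm hxy]⟩)
    have h1 := hc x y
    calc (a + b) * (𝒜.filter fun H => x ∈ H ∧ y ∈ H).card
          + a * (𝒜.filter fun H => x ∉ H).card
        = (a + b) * (𝒜.filter fun H => x ∈ H ∧ y ∈ H).card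
          + (a + b) * ((𝒜.filter fun H => x ∉ H).filter fun H => y ∈ H).card := by
          rw [hs]
      _ = (a + b) * (((𝒜.filter fun H => x ∉ H).filter fun H => y ∈ H).card
          + (𝒜.filter fun H => x ∈ H ∧ y ∈ H).card) := by ring
      _ = (a + b) * (𝒜.filter fun H => y ∈ H).card := by rw [h1]
  -- The announcement is a 1-design.
  have hreq : ∀ x ∈ X, ∀ y ∈ X,
      (𝒜.filter fun H => x ∈ H).card = (𝒜.filter fun H => y ∈ H).card := by
    intro x hx y hy
    rcases eq_or_ne x y with rfl | hxy
    · rfl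
    · have k1 := hkey x hx y hy hxy
      have k2 := hkey y hy x hx (Ne.symm hxy)
      rw [hlmsymm y x] at k2
      exact helper_req a b _ _ _ _ _ _ hb k1 k2 (hrp x) (hrp y)
  have hpeq : ∀ x ∈ X, ∀ x' ∈ X,
      (𝒜.filter fun H => x ∉ H).card = (𝒜.filter fun H => x' ∉ H).card := by
    intro x hx x' hx'
    have h := hreq x hx x' hx'
    have h1 := hrp x
    have h2 := hrp x'
    omega
  obtain ⟨x₀, hx₀, y₀, hy₀, hxy₀⟩ := Finset.one_lt_card.1 (by omega : 1 < X.card)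
  refine ⟨(𝒜.filter fun H => x₀ ∈ H ∧ y₀ ∈ H).card, ?_⟩
  intro T hT hT2
  obtain ⟨x, y, hxy, rfl⟩ := Finset.card_eq_two.1 hT2
  have hx : x ∈ X := hT (by simp)
  have hy : y ∈ X := hT (by simp)
  have hfe : (𝒜.filter fun H => ({x, y} : Finset α) ⊆ H)
      = 𝒜.filter fun H => x ∈ H ∧ y ∈ H := by
    apply Finset.filter_congr
    intro H _
    simp [Finset.insert_subset_iff]
  rw [hfe]
  exact helper_lam a b _ _ _ _ _ _ (by omega)
    (hkey x hx y hy hxy) (hkey x₀ hx₀ y₀ hy₀ hxy₀)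
    (hpeq x hx x₀ hx₀) (hreq y hy y₀ hy₀)
end

section
/- Let X be a deck of n = a+b+c cards (a,b,c ≥ 1) and suppose an announcement 𝒜 is a t-(n,a,λ)-design with λ ≥ 1, c ≤ t−1 and t ≤ a. Then 𝒜 satisfies the perfect (t−c)-security condition: for every c-element subset H_C ⊆ X and every nonempty Y ⊆ X∖H_C with |Y| = δ' ≤ t−c, one has C(a+b,δ')·|{H ∈ P(H_C,𝒜) : Y ⊆ H}| = C(a,δ')·|P(H_C,𝒜)|, where C denotes the binomial coefficient. -/
/-!
Write `N(Y, Z)` for the number of blocks containing `Y` and avoiding `Z`. Double counting the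
pairs `(T, H)` with `Y ⊆ T ⊆ H`, `|T| = t`, shows that `N(Y, ∅)` depends only on `|Y|` when
`|Y| ≤ t`. Splitting the blocks counted by `N(Y, Z)` according to whether they contain a point
`x ∉ Y ∪ Z` gives `N(Y, Z) = N(Y ∪ {x}, Z) + N(Y, Z ∪ {x})`, a Pascal recurrence, so by
induction on `|Z|` the count `N(Y, Z)` is proportional to `C(n - |Y| - |Z|, a - |Y|)` whenever
`|Y| + |Z| ≤ t`. Comparing `N(Y, H_C)` with `N(∅, H_C)` through
`C(m, |Y|) C(m - |Y|, a - |Y|) = C(m, a) C(a, |Y|)`, `m = n - c = a + b`, gives the security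
condition.
-/

open Finset

section

variable {α : Type*} [DecidableEq α]

structure IsBlockDesign (X : Finset α) (a t lam : ℕ) (𝒜 : Finset (Finset α)) : Prop where
  subset : ∀ H ∈ 𝒜, H ⊆ X
  card_eq : ∀ H ∈ 𝒜, H.card = a
  card_filter_superset : ∀ T ⊆ X, T.card = t → #{H ∈ 𝒜 | T ⊆ H} = lam

lemma filter_subset_powersetCard (k : ℕ) (S H : Finset α) :
    {T ∈ S.powersetCard k | T ⊆ H} = (S ∩ H).powersetCard k := by
  ext T
  simp only [mem_filter, mem_powersetCard, subset_inter_iff]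
  tauto

lemma card_filter_insert_subset_add_card_filter_disjoint_insert (𝒜 : Finset (Finset α))
    (x : α) (Y Z : Finset α) :
    #{H ∈ 𝒜 | insert x Y ⊆ H ∧ Disjoint H Z} +
        #{H ∈ 𝒜 | Y ⊆ H ∧ Disjoint H (insert x Z)} =
      #{H ∈ 𝒜 | Y ⊆ H ∧ Disjoint H Z} := by
  rw [← card_filter_add_card_filter_not (s := {H ∈ 𝒜 | Y ⊆ H ∧ Disjoint H Z}) (x ∈ ·),
    filter_filter, filter_filter]
  congr 2 <;>
  · refine filter_congr fun H _ => ?_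
    simp only [insert_subset_iff, disjoint_insert_right]
    tauto

namespace IsBlockDesign

variable {X : Finset α} {a t lam : ℕ} {𝒜 : Finset (Finset α)}

theorem choose_mul_card_filter_superset (h𝒜 : IsBlockDesign X a t lam 𝒜)
    {Y : Finset α} (hYX : Y ⊆ X) (hYt : Y.card ≤ t) :
    (a - Y.card).choose (t - Y.card) * #{H ∈ 𝒜 | Y ⊆ H} =
      lam * (X.card - Y.card).choose (t - Y.card) := by
  have above : ∀ H ∈ {H ∈ 𝒜 | Y ⊆ H},
      #(((X \ Y).powersetCard (t - Y.card)).bipartiteAbove (fun H T => T ⊆ H) H) =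
        (a - Y.card).choose (t - Y.card) := by
    intro H hH
    obtain ⟨hH𝒜, hYH⟩ := mem_filter.1 hH
    have hXYH : (X \ Y) ∩ H = H \ Y := by
      rw [sdiff_inter_right_comm, inter_eq_right.2 (h𝒜.subset H hH𝒜)]
    rw [bipartiteAbove, filter_subset_powersetCard, hXYH, card_powersetCard,
      card_sdiff_of_subset hYH, h𝒜.card_eq H hH𝒜]
  have below : ∀ T ∈ (X \ Y).powersetCard (t - Y.card),
      #({H ∈ 𝒜 | Y ⊆ H}.bipartiteBelow (fun H T => T ⊆ H) T) = lam := by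
    intro T hT
    obtain ⟨hTXY, hTcard⟩ := mem_powersetCard.1 hT
    have hYT : Disjoint Y T := disjoint_of_subset_right hTXY disjoint_sdiff
    rw [bipartiteBelow, filter_filter]
    simp_rw [← union_subset_iff]
    refine h𝒜.card_filter_superset _ (union_subset hYX (hTXY.trans sdiff_subset)) ?_
    rw [card_union_of_disjoint hYT, hTcard]
    omega
  rw [mul_comm, card_mul_eq_card_mul _ above below, card_powersetCard,
    card_sdiff_of_subset hYX, mul_comm]

theorem choose_mul_card_filter_superset_disjoint (h𝒜 : IsBlockDesign X a t lam 𝒜)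
    (hta : t ≤ a) (haX : a ≤ X.card) {Y Z : Finset α} (hYX : Y ⊆ X) (hZX : Z ⊆ X)
    (hYZ : Disjoint Y Z) (hYZt : Y.card + Z.card ≤ t) :
    (X.card - t).choose (a - t) * #{H ∈ 𝒜 | Y ⊆ H ∧ Disjoint H Z} =
      lam * (X.card - Y.card - Z.card).choose (a - Y.card) := by
  induction Z using Finset.induction_on generalizing Y with
  | empty =>
    simp only [disjoint_empty_right, and_true, card_empty, Nat.sub_zero]
    have hpos : 0 < (a - Y.card).choose (t - Y.card) := Nat.choose_pos (by omega)
    have hY := h𝒜.choose_mul_card_filter_superset hYX (by simpa using hYZt)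
    have hchoose := Nat.choose_mul (n := X.card - Y.card) (k := a - Y.card)
      (s := t - Y.card) (by omega)
    rw [show X.card - Y.card - (t - Y.card) = X.card - t by omega,
      show a - Y.card - (t - Y.card) = a - t by omega] at hchoose
    apply Nat.eq_of_mul_eq_mul_left hpos
    calc (a - Y.card).choose (t - Y.card) * ((X.card - t).choose (a - t) * #{H ∈ 𝒜 | Y ⊆ H})
        = (X.card - t).choose (a - t) * (lam * (X.card - Y.card).choose (t - Y.card)) := by
          rw [← hY]; ring
      _ = lam * ((X.card - Y.card).choose (t - Y.card) * (X.card - t).choose (a - t)) := by ring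
      _ = (a - Y.card).choose (t - Y.card) * (lam * (X.card - Y.card).choose (a - Y.card)) := by
          rw [← hchoose]; ring
  | insert x Z hxZ ih =>
    rw [insert_subset_iff] at hZX
    rw [disjoint_insert_right] at hYZ
    rw [card_insert_of_notMem hxZ] at hYZt ⊢
    have hsplit := card_filter_insert_subset_add_card_filter_disjoint_insert 𝒜 x Y Z
    have hY := ih hYX hZX.2 hYZ.2 (by omega)
    have hxY := ih (insert_subset hZX.1 hYX) hZX.2
      (disjoint_insert_left.2 ⟨hxZ, hYZ.2⟩) (by rw [card_insert_of_notMem hYZ.1]; omega)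
    rw [card_insert_of_notMem hYZ.1] at hxY
    obtain ⟨m, hm⟩ : ∃ m, X.card - Y.card - Z.card = m + 1 :=
      ⟨_, (Nat.sub_add_cancel (by omega)).symm⟩
    obtain ⟨k, hk⟩ : ∃ k, a - Y.card = k + 1 := ⟨_, (Nat.sub_add_cancel (by omega)).symm⟩
    rw [hm, hk, Nat.choose_succ_succ', ← hsplit, mul_add, mul_add, hxY] at hY
    rw [show X.card - Y.card - (Z.card + 1) = m by omega, hk]
    rw [show X.card - (Y.card + 1) - Z.card = m by omega,
      show a - (Y.card + 1) = k by omega] at hY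
    exact Nat.add_left_cancel hY

theorem choose_mul_card_filter_superset_disjoint_eq (h𝒜 : IsBlockDesign X a t lam 𝒜)
    (hta : t ≤ a) (haX : a ≤ X.card) {Y Z : Finset α} (hYX : Y ⊆ X) (hZX : Z ⊆ X)
    (hYZ : Disjoint Y Z) (hYZt : Y.card + Z.card ≤ t) :
    (X.card - Z.card).choose Y.card * #{H ∈ 𝒜 | Y ⊆ H ∧ Disjoint H Z} =
      a.choose Y.card * #{H ∈ 𝒜 | Disjoint H Z} := by
  have hY := h𝒜.choose_mul_card_filter_superset_disjoint hta (by omega) hYX hZX hYZ hYZt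
  have hempty := h𝒜.choose_mul_card_filter_superset_disjoint hta (by omega) (empty_subset X)
    hZX (disjoint_empty_left Z) (by simpa using (show Z.card ≤ t by omega))
  simp only [empty_subset, true_and, card_empty, Nat.sub_zero] at hempty
  have hchoose := Nat.choose_mul (n := X.card - Z.card) (k := a) (s := Y.card) (by omega)
  rw [show X.card - Z.card - Y.card = X.card - Y.card - Z.card by omega] at hchoose
  have hpos : 0 < (X.card - t).choose (a - t) := Nat.choose_pos (by omega)
  apply Nat.eq_of_mul_eq_mul_left hpos
  calc (X.card - t).choose (a - t) * ((X.card - Z.card).choose Y.card *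
          #{H ∈ 𝒜 | Y ⊆ H ∧ Disjoint H Z})
      = lam * ((X.card - Z.card).choose Y.card *
          (X.card - Y.card - Z.card).choose (a - Y.card)) := by rw [mul_left_comm, hY]; ring
    _ = (X.card - t).choose (a - t) * (a.choose Y.card * #{H ∈ 𝒜 | Disjoint H Z}) := by
        rw [← hchoose, mul_left_comm _ (a.choose _), hempty]; ring

end IsBlockDesign

end

theorem stmt_4_general {α : Type*} [DecidableEq α] (X : Finset α) (a b c t lam : ℕ)
    (hX : X.card = a + b + c)
    (hta : t ≤ a)
    (𝒜 : Finset (Finset α))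
    (hhands : ∀ H ∈ 𝒜, H ⊆ X ∧ H.card = a)
    (hdesign : ∀ T ⊆ X, T.card = t → (𝒜.filter fun H => T ⊆ H).card = lam) :
    ∀ HC ⊆ X, HC.card = c →
      ∀ Y ⊆ X \ HC, Y.Nonempty → Y.card ≤ t - c →
        (a + b).choose Y.card *
            (((𝒜.filter fun H => Disjoint H HC)).filter fun H => Y ⊆ H).card =
          a.choose Y.card * (𝒜.filter fun H => Disjoint H HC).card := by
  intro HC hHCX hHCc Y hY hYne hYt
  have h𝒜 : IsBlockDesign X a t lam 𝒜 :=
    ⟨fun H hH => (hhands H hH).1, fun H hH => (hhands H hH).2, hdesign⟩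
  have hYpos : 0 < Y.card := hYne.card_pos
  rw [filter_filter, filter_congr fun H _ => and_comm, ← show X.card - HC.card = a + b by omega]
  exact h𝒜.choose_mul_card_filter_superset_disjoint_eq hta (by omega) (hY.trans sdiff_subset)
    hHCX (disjoint_of_subset_left hY sdiff_disjoint) (by omega)

/-- Theorem: if an announcement is a `t-(n,a,λ)`-design with `c ≤ t-1` and `t ≤ a`,
then it satisfies the perfect `(t-c)`-security condition. -/
theorem stmt_4 {α : Type*} [DecidableEq α] (X : Finset α) (a b c t lam : ℕ)
    (ha : 1 ≤ a) (hb : 1 ≤ b) (hc : 1 ≤ c)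
    (hX : X.card = a + b + c)
    (hlam : 1 ≤ lam) (hct : c + 1 ≤ t) (hta : t ≤ a)
    (𝒜 : Finset (Finset α))
    (hhands : ∀ H ∈ 𝒜, H ⊆ X ∧ H.card = a)
    (hdesign : ∀ T ⊆ X, T.card = t → (𝒜.filter fun H => T ⊆ H).card = lam) :
    ∀ HC ⊆ X, HC.card = c →
      ∀ Y ⊆ X \ HC, Y.Nonempty → Y.card ≤ t - c →
        (a + b).choose Y.card *
            (((𝒜.filter fun H => Disjoint H HC)).filter fun H => Y ⊆ H).card =
          a.choose Y.card * (𝒜.filter fun H => Disjoint H HC).card :=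
  stmt_4_general X a b c t lam hX hta 𝒜 hhands hdesign
end

section
/- Let X be a deck of n = a+b+1 cards (a,b ≥ 1, so c = 1), let δ ≥ 1, and let 𝒜 be a nonempty announcement satisfying the perfect δ-security condition with c = 1: for every x ∈ X with P({x},𝒜) ≠ ∅ and every nonempty Y ⊆ X∖{x} with |Y| = δ' ≤ δ, C(a+b,δ')·|{H ∈ P({x},𝒜) : Y ⊆ H}| = C(a,δ')·|P({x},𝒜)|. Then there exists a constant λ such that every (δ+1)-element subset of X is contained in exactly λ hands of 𝒜. -/
open Finset

/-- Theorem: for a deal with `c = 1`, a nonempty perfectly `δ`-secure announcement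
is a `(δ+1)`-design: every `(δ+1)`-subset lies in a constant number `λ` of hands. -/
theorem stmt_5 {α : Type*} [DecidableEq α] (X : Finset α) (a b δ : ℕ)
    (ha : 1 ≤ a) (hb : 1 ≤ b) (hδ : 1 ≤ δ)
    (hX : X.card = a + b + 1)
    (𝒜 : Finset (Finset α))
    (hhands : ∀ H ∈ 𝒜, H ⊆ X ∧ H.card = a)
    (hne : 𝒜.Nonempty)
    (hsec : ∀ x ∈ X, (𝒜.filter fun H => x ∉ H).Nonempty →
      ∀ Y ⊆ X \ {x}, Y.Nonempty → Y.card ≤ δ →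
        (a + b).choose Y.card *
            (((𝒜.filter fun H => x ∉ H)).filter fun H => Y ⊆ H).card =
          a.choose Y.card * (𝒜.filter fun H => x ∉ H).card) :
    ∃ lam : ℕ, ∀ T ⊆ X, T.card = δ + 1 → (𝒜.filter fun H => T ⊆ H).card = lam := by
  classical
  -- basic decomposition lemma
  have hD : ∀ (Y : Finset α) (x : α), x ∉ Y →
      (𝒜.filter fun H => Y ⊆ H).card =
        (𝒜.filter fun H => insert x Y ⊆ H).card +
        ((𝒜.filter fun H => x ∉ H).filter fun H => Y ⊆ H).card := by
    intro Y x hx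
    have key := Finset.card_filter_add_card_filter_not
      (s := 𝒜.filter fun H => Y ⊆ H) (p := fun H => x ∈ H)
    rw [Finset.filter_filter, Finset.filter_filter] at key
    have h1 : (𝒜.filter fun H => Y ⊆ H ∧ x ∈ H) = 𝒜.filter fun H => insert x Y ⊆ H := by
      apply Finset.filter_congr
      intro H _
      simp [Finset.insert_subset_iff, and_comm]
    have h2 : (𝒜.filter fun H => Y ⊆ H ∧ ¬ x ∈ H)
        = (𝒜.filter fun H => x ∉ H).filter fun H => Y ⊆ H := by
      rw [Finset.filter_filter]
      apply Finset.filter_congr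
      intro H _
      simp [and_comm]
    rw [h1, h2] at key
    omega
  have hempty : ∀ (s : Finset (Finset α)),
      (s.filter fun H => (∅ : Finset α) ⊆ H) = s := by
    intro s
    exact Finset.filter_true_of_mem (fun H _ => Finset.empty_subset H)
  -- existence of x0 with P_{x0} nonempty
  obtain ⟨H0, hH0⟩ := hne
  obtain ⟨hH0X, hH0card⟩ := hhands H0 hH0
  have hH0ss : H0 ⊂ X := by
    refine HasSubset.Subset.ssubset_of_ne hH0X ?_
    intro h
    rw [h] at hH0card
    omega
  obtain ⟨x0, hx0X, hx0H0⟩ := Finset.exists_of_ssubset hH0ss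
  have hPx0 : (𝒜.filter fun H => x0 ∉ H).Nonempty :=
    ⟨H0, Finset.mem_filter.2 ⟨hH0, hx0H0⟩⟩
  -- P_x nonempty for every x ∈ X
  have hPne : ∀ x ∈ X, (𝒜.filter fun H => x ∉ H).Nonempty := by
    intro x hx
    by_contra hcon
    have hall : ∀ H ∈ 𝒜, x ∈ H := by
      intro H hH
      by_contra hx'
      exact hcon ⟨H, Finset.mem_filter.2 ⟨hH, hx'⟩⟩
    have hxx0 : x ≠ x0 := by
      rintro rfl
      exact hx0H0 (hall H0 hH0)
    have hY : ({x} : Finset α) ⊆ X \ {x0} := by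
      simp [Finset.singleton_subset_iff, Finset.mem_sdiff, hx, hxx0]
    have hs := hsec x0 hx0X hPx0 {x} hY (Finset.singleton_nonempty x)
      (by simpa using hδ)
    have hfull : (((𝒜.filter fun H => x0 ∉ H)).filter fun H => ({x} : Finset α) ⊆ H)
        = 𝒜.filter fun H => x0 ∉ H := by
      apply Finset.filter_true_of_mem
      intro H hH
      simpa [Finset.singleton_subset_iff] using hall H (Finset.mem_filter.1 hH).1
    rw [hfull] at hs
    simp only [Finset.card_singleton, Nat.choose_one_right] at hs
    have hppos : 0 < (𝒜.filter fun H => x0 ∉ H).card := Finset.card_pos.2 hPx0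
    have := Nat.eq_of_mul_eq_mul_right hppos hs
    omega
  -- restated security
  have hsec' : ∀ x ∈ X, ∀ Y ⊆ X, x ∉ Y → Y.Nonempty → Y.card ≤ δ →
      (a + b).choose Y.card *
        ((𝒜.filter fun H => x ∉ H).filter fun H => Y ⊆ H).card
        = a.choose Y.card * (𝒜.filter fun H => x ∉ H).card := by
    intro x hx Y hYX hxY hYne hYd
    refine hsec x hx (hPne x hx) Y ?_ hYne hYd
    rw [Finset.subset_sdiff]
    exact ⟨hYX, by simp [Finset.disjoint_singleton_right, hxY]⟩
  -- all p_x are equal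
  have hpconst : ∀ x ∈ X,
      (𝒜.filter fun H => x ∉ H).card = (𝒜.filter fun H => x0 ∉ H).card := by
    intro x hx
    rcases eq_or_ne x x0 with rfl | hxne
    · rfl
    · have hx0Y : x0 ∉ ({x} : Finset α) := by simp [hxne.symm, Ne.symm hxne]
      have hxY : x ∉ ({x0} : Finset α) := by simp [hxne]
      have E1 := hD ∅ x (Finset.notMem_empty x)
      have E4 := hD ∅ x0 (Finset.notMem_empty x0)
      have E2 := hD {x} x0 hx0Y
      have E3 := hD {x0} x hxY
      rw [hempty, hempty] at E1 E4
      have hpair : insert x0 ({x} : Finset α) = insert x ({x0} : Finset α) := by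
        exact Finset.pair_comm x0 x
      rw [hpair] at E2
      have hinsx : insert x (∅ : Finset α) = {x} := rfl
      have hinsx0 : insert x0 (∅ : Finset α) = {x0} := rfl
      rw [hinsx] at E1
      rw [hinsx0] at E4
      have S2 := hsec' x0 hx0X {x} (Finset.singleton_subset_iff.2 hx) hx0Y
        (Finset.singleton_nonempty x) (by simpa using hδ)
      have S3 := hsec' x hx {x0} (Finset.singleton_subset_iff.2 hx0X) hxY
        (Finset.singleton_nonempty x0) (by simpa using hδ)
      simp only [Finset.card_singleton, Nat.choose_one_right] at S2 S3
      -- pass to ℤ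
      set q1 := (𝒜.filter fun H => ({x} : Finset α) ⊆ H).card
      set q0 := (𝒜.filter fun H => ({x0} : Finset α) ⊆ H).card
      set m2 := (𝒜.filter fun H => insert x ({x0} : Finset α) ⊆ H).card
      set p1 := (𝒜.filter fun H => x ∉ H).card
      set p0 := (𝒜.filter fun H => x0 ∉ H).card
      set r2 := ((𝒜.filter fun H => x0 ∉ H).filter fun H => ({x} : Finset α) ⊆ H).card
      set r3 := ((𝒜.filter fun H => x ∉ H).filter fun H => ({x0} : Finset α) ⊆ H).card
      -- E1 : 𝒜.card = q1 + p1 ; E4 : 𝒜.card = q0 + p0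
      -- E2 : q1 = m2 + r2 ; E3 : q0 = m2 + r3
      -- S2 : (a+b) * r2 = a * p0 ; S3 : (a+b) * r3 = a * p1
      have key : (b : ℤ) * p1 = (b : ℤ) * p0 := by
        have e1 : (𝒜.card : ℤ) = q1 + p1 := by exact_mod_cast E1
        have e4 : (𝒜.card : ℤ) = q0 + p0 := by exact_mod_cast E4
        have e2 : (q1 : ℤ) = m2 + r2 := by exact_mod_cast E2
        have e3 : (q0 : ℤ) = m2 + r3 := by exact_mod_cast E3
        have s2 : ((a : ℤ) + b) * r2 = a * p0 := by exact_mod_cast S2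
        have s3 : ((a : ℤ) + b) * r3 = a * p1 := by exact_mod_cast S3
        linear_combination s3 - s2 + ((a : ℤ) + b) * (e3 - e2) + ((a : ℤ) + b) * (e4 - e1)
      have hb' : (b : ℤ) ≠ 0 := by exact_mod_cast (by omega : b ≠ 0)
      have : (p1 : ℤ) = p0 := mul_left_cancel₀ hb' key
      exact_mod_cast this
  -- trivial case: δ + 1 > |X|
  by_cases hδab : δ ≤ a + b
  · -- main induction
    have main : ∀ k, k ≤ δ + 1 → ∃ μ, ∀ Y ⊆ X, Y.card = k →
        (𝒜.filter fun H => Y ⊆ H).card = μ := by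
      intro k
      induction k with
      | zero =>
        intro _
        refine ⟨𝒜.card, fun Y _ hY => ?_⟩
        rw [Finset.card_eq_zero.1 hY, hempty]
      | succ k ih =>
        intro hk
        obtain ⟨μ, hμ⟩ := ih (by omega)
        refine ⟨μ - (a.choose k * (𝒜.filter fun H => x0 ∉ H).card) / (a + b).choose k, ?_⟩
        intro Z hZX hZcard
        obtain ⟨x, hxZ⟩ : Z.Nonempty := Finset.card_pos.1 (by omega)
        have hYX : Z.erase x ⊆ X := (Finset.erase_subset _ _).trans hZX
        have hYcard : (Z.erase x).card = k := by
          rw [Finset.card_erase_of_mem hxZ, hZcard]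
          omega
        have hxY : x ∉ Z.erase x := Finset.notMem_erase _ _
        have hxX : x ∈ X := hZX hxZ
        have hdec := hD (Z.erase x) x hxY
        rw [Finset.insert_erase hxZ] at hdec
        have hμY := hμ (Z.erase x) hYX hYcard
        have hCpos : 0 < (a + b).choose k := Nat.choose_pos (by omega)
        have hmP : ((𝒜.filter fun H => x ∉ H).filter fun H => Z.erase x ⊆ H).card
            = (a.choose k * (𝒜.filter fun H => x0 ∉ H).card) / (a + b).choose k := by
          rcases Nat.eq_zero_or_pos k with rfl | hkpos
          · have hYe : Z.erase x = ∅ := Finset.card_eq_zero.1 hYcard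
            rw [hYe, hempty]
            simpa using hpconst x hxX
          · have hs := hsec' x hxX (Z.erase x) hYX hxY
              (Finset.card_pos.1 (by omega)) (by omega)
            rw [hYcard, hpconst x hxX] at hs
            symm
            refine Nat.div_eq_of_eq_mul_left hCpos ?_
            rw [← hs, Nat.mul_comm]
        omega
    obtain ⟨μ, hμ⟩ := main (δ + 1) le_rfl
    exact ⟨μ, hμ⟩
  · refine ⟨0, fun T hT hc => ?_⟩
    have := Finset.card_le_card hT
    rw [hX, hc] at this
    omega
end

section
/- Let X be a deck of n = a+b+c cards (a,b,c ≥ 1), let δ ≥ 1, and let 𝒜 be a nonempty announcement satisfying the perfect δ-security condition: for every c-element subset H_C ⊆ X with P(H_C,𝒜) ≠ ∅ and every nonempty Y ⊆ X∖H_C with |Y| = δ' ≤ δ, C(a+b,δ')·|{H ∈ P(H_C,𝒜) : Y ⊆ H}| = C(a,δ')·|P(H_C,𝒜)|. Then there exists a constant λ such that every (c+δ)-element subset of X is contained in exactly λ hands of 𝒜. -/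
open Finset

section Aux
variable {α : Type*} [DecidableEq α]

/-- number of hands disjoint from `S` -/
private def ppA (𝒜 : Finset (Finset α)) (S : Finset α) : ℕ :=
  (𝒜.filter fun H => Disjoint H S).card

/-- number of hands disjoint from `S` containing `Y` -/
private def ffA (𝒜 : Finset (Finset α)) (Y S : Finset α) : ℕ :=
  (𝒜.filter fun H => Disjoint H S ∧ Y ⊆ H).card

private lemma aux_step (X : Finset α) (a b c δ : ℕ) (hδ : 1 ≤ δ)
    (𝒜 : Finset (Finset α))
    (hsec : ∀ HC ⊆ X, HC.card = c →
      (𝒜.filter fun H => Disjoint H HC).Nonempty →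
      ∀ Y ⊆ X \ HC, Y.Nonempty → Y.card ≤ δ →
        (a + b).choose Y.card *
            (((𝒜.filter fun H => Disjoint H HC)).filter fun H => Y ⊆ H).card =
          a.choose Y.card * (𝒜.filter fun H => Disjoint H HC).card)
    (S : Finset α) (hSX : S ⊆ X) (hSc : S.card = c)
    (hPne : (𝒜.filter fun H => Disjoint H S).Nonempty)
    (y : α) (hyX : y ∈ X) (hyS : y ∉ S) :
    (a + b) * ppA 𝒜 (insert y S) = b * ppA 𝒜 S := by
  have h1 := hsec S hSX hSc hPne {y}
    (by simp [Finset.singleton_subset_iff, Finset.mem_sdiff, hyX, hyS])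
    (Finset.singleton_nonempty y) (by simpa using hδ)
  simp only [Finset.card_singleton, Nat.choose_one_right] at h1
  have hsplit :
      (((𝒜.filter fun H => Disjoint H S)).filter fun H => ({y} : Finset α) ⊆ H).card
        + ppA 𝒜 (insert y S) = ppA 𝒜 S := by
    have hneg : ((𝒜.filter fun H => Disjoint H S).filter fun H => ¬ ({y} : Finset α) ⊆ H)
        = 𝒜.filter fun H => Disjoint H (insert y S) := by
      rw [Finset.filter_filter]
      apply Finset.filter_congr
      intro H _
      simp [Finset.disjoint_insert_right, Finset.singleton_subset_iff, and_comm]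
    have := Finset.card_filter_add_card_filter_not
      (s := 𝒜.filter fun H => Disjoint H S) (p := fun H => ({y} : Finset α) ⊆ H)
    rw [hneg] at this
    exact this
  have key : (a+b) * (((𝒜.filter fun H => Disjoint H S)).filter
        fun H => ({y} : Finset α) ⊆ H).card + (a+b) * ppA 𝒜 (insert y S)
      = (a+b) * ppA 𝒜 S := by
    rw [← Nat.mul_add, hsplit]
  rw [h1] at key
  have expand : (a+b) * ppA 𝒜 S = a * ppA 𝒜 S + b * ppA 𝒜 S := by ring
  rw [expand] at key
  exact Nat.add_left_cancel key

private lemma aux_conn (X : Finset α) (a b c δ : ℕ) (hb : 1 ≤ b) (hc : 1 ≤ c) (hδ : 1 ≤ δ)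
    (𝒜 : Finset (Finset α))
    (hsec : ∀ HC ⊆ X, HC.card = c →
      (𝒜.filter fun H => Disjoint H HC).Nonempty →
      ∀ Y ⊆ X \ HC, Y.Nonempty → Y.card ≤ δ →
        (a + b).choose Y.card *
            (((𝒜.filter fun H => Disjoint H HC)).filter fun H => Y ⊆ H).card =
          a.choose Y.card * (𝒜.filter fun H => Disjoint H HC).card) :
    ∀ (k : ℕ) (S S' : Finset α), S ⊆ X → S' ⊆ X → S.card = c → S'.card = c →
      (S' \ S).card = k → (𝒜.filter fun H => Disjoint H S).Nonempty →
      (𝒜.filter fun H => Disjoint H S').Nonempty ∧ ppA 𝒜 S' = ppA 𝒜 S := by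
  intro k
  induction k with
  | zero =>
    intro S S' hSX hS'X hSc hS'c hk hPne
    have hsub : S' ⊆ S := by
      rwa [Finset.card_eq_zero, Finset.sdiff_eq_empty_iff_subset] at hk
    have : S' = S := Finset.eq_of_subset_of_card_le hsub (by omega)
    subst this; exact ⟨hPne, rfl⟩
  | succ k ih =>
    intro S S' hSX hS'X hSc hS'c hk hPne
    have hyne : (S' \ S).Nonempty := by
      rw [← Finset.card_pos, hk]; omega
    obtain ⟨y, hy⟩ := hyne
    have hyS' : y ∈ S' := (Finset.mem_sdiff.mp hy).1
    have hyS : y ∉ S := (Finset.mem_sdiff.mp hy).2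
    have hxne : (S \ S').Nonempty := by
      by_contra hcon
      rw [Finset.not_nonempty_iff_eq_empty, Finset.sdiff_eq_empty_iff_subset] at hcon
      have : S = S' := Finset.eq_of_subset_of_card_le hcon (by omega)
      subst this
      simp at hy
    obtain ⟨x, hx⟩ := hxne
    have hxS : x ∈ S := (Finset.mem_sdiff.mp hx).1
    have hxS' : x ∉ S' := (Finset.mem_sdiff.mp hx).2
    set S₁ : Finset α := insert y (S.erase x) with hS₁def
    have hS₁X : S₁ ⊆ X :=
      Finset.insert_subset (hS'X hyS') ((Finset.erase_subset x S).trans hSX)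
    have hS₁c : S₁.card = c := by
      rw [hS₁def, Finset.card_insert_of_notMem (fun h => hyS (Finset.mem_of_mem_erase h)),
        Finset.card_erase_of_mem hxS, hSc]
      omega
    have step1 := aux_step X a b c δ hδ 𝒜 hsec S hSX hSc hPne y (hS'X hyS') hyS
    have hppS : 0 < ppA 𝒜 S := Finset.card_pos.mpr hPne
    have hins_pos : 0 < ppA 𝒜 (insert y S) := by
      have h2 : 0 < (a + b) * ppA 𝒜 (insert y S) := by
        rw [step1]; exact Nat.mul_pos (by omega) hppS
      exact Nat.pos_of_ne_zero fun h => by simp [h] at h2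
    have hins_ne : (𝒜.filter fun H => Disjoint H (insert y S)).Nonempty :=
      Finset.card_pos.mp hins_pos
    have hP₁ne : (𝒜.filter fun H => Disjoint H S₁).Nonempty := by
      obtain ⟨H, hH⟩ := hins_ne
      rw [Finset.mem_filter] at hH
      exact ⟨H, Finset.mem_filter.mpr ⟨hH.1, hH.2.mono_right
        (Finset.insert_subset_insert y (Finset.erase_subset x S))⟩⟩
    have hxX : x ∈ X := hSX hxS
    have hxS₁ : x ∉ S₁ := by
      rw [hS₁def]
      simp only [Finset.mem_insert, Finset.mem_erase]
      push_neg
      exact ⟨fun h => hyS (h ▸ hxS), fun h => absurd rfl h⟩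
    have step2 := aux_step X a b c δ hδ 𝒜 hsec S₁ hS₁X hS₁c hP₁ne x hxX hxS₁
    have hkey : insert x S₁ = insert y S := by
      rw [hS₁def, Finset.insert_comm, Finset.insert_erase hxS]
    rw [hkey] at step2
    have hppS₁ : ppA 𝒜 S₁ = ppA 𝒜 S := by
      have : b * ppA 𝒜 S₁ = b * ppA 𝒜 S := by rw [← step2, step1]
      exact Nat.eq_of_mul_eq_mul_left (by omega) this
    have hcard : (S' \ S₁).card = k := by
      have hset : S' \ S₁ = (S' \ S).erase y := by
        ext z
        simp only [hS₁def, Finset.mem_sdiff, Finset.mem_insert, Finset.mem_erase]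
        constructor
        · rintro ⟨hz1, hz2⟩
          push_neg at hz2
          obtain ⟨hzy, hz3⟩ := hz2
          refine ⟨hzy, hz1, fun hzS => ?_⟩
          have hzx : z ≠ x := fun h => hxS' (h ▸ hz1)
          exact (hz3 hzx) hzS
        · rintro ⟨hzy, hz1, hz2⟩
          push_neg
          exact ⟨hz1, hzy, fun _ => hz2⟩
      rw [hset, Finset.card_erase_of_mem hy, hk]
      omega
    obtain ⟨hne', heq⟩ := ih S₁ S' hS₁X hS'X hS₁c hS'c hcard hP₁ne
    exact ⟨hne', heq.trans hppS₁⟩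

private lemma aux_IE (𝒜 : Finset (Finset α)) (Y S : Finset α) :
    ((𝒜.filter fun H => Y ∪ S ⊆ H).card : ℤ)
      = ∑ W ∈ S.powerset, (-1 : ℤ) ^ W.card * (ffA 𝒜 Y W : ℤ) := by
  have h1 : ∀ W ∈ S.powerset, (-1:ℤ) ^ W.card * (ffA 𝒜 Y W : ℤ)
      = ∑ H ∈ 𝒜, (if Disjoint H W ∧ Y ⊆ H then (-1:ℤ) ^ W.card else 0) := by
    intro W _
    simp only [ffA, Finset.card_filter]
    push_cast
    rw [Finset.mul_sum]
    exact Finset.sum_congr rfl fun H _ => by rw [mul_ite, mul_one, mul_zero]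
  rw [Finset.sum_congr rfl h1, Finset.sum_comm, Finset.card_filter]
  push_cast
  apply Finset.sum_congr rfl
  intro H _
  by_cases hY : Y ⊆ H
  · rw [← Finset.sum_filter]
    have hfil : S.powerset.filter (fun W => Disjoint H W ∧ Y ⊆ H) = (S \ H).powerset := by
      ext W
      simp only [Finset.mem_filter, Finset.mem_powerset, hY, and_true]
      constructor
      · rintro ⟨hp1, hp2⟩; exact Finset.subset_sdiff.mpr ⟨hp1, hp2.symm⟩
      · intro h
        obtain ⟨hp1, hp2⟩ := Finset.subset_sdiff.mp h
        exact ⟨hp1, hp2.symm⟩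
    rw [hfil, Finset.sum_powerset_neg_one_pow_card]
    have hiff : (Y ∪ S ⊆ H) ↔ (S \ H = ∅) := by
      rw [Finset.sdiff_eq_empty_iff_subset, Finset.union_subset_iff]
      exact ⟨fun h => h.2, fun h => ⟨hY, h⟩⟩
    simp only [hiff]
  · rw [if_neg (fun hcon => hY ((Finset.union_subset_iff.mp hcon).1))]
    symm
    apply Finset.sum_eq_zero
    intro W _
    exact if_neg (fun hcon => hY hcon.2)

end Aux

/-- Theorem: a nonempty perfectly `δ`-secure announcement for an `(a,b,c)`-deal
is a `(c+δ)`-design: every `(c+δ)`-subset lies in a constant number `λ` of hands. -/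
theorem stmt_6 {α : Type*} [DecidableEq α] (X : Finset α) (a b c δ : ℕ)
    (ha : 1 ≤ a) (hb : 1 ≤ b) (hc : 1 ≤ c) (hδ : 1 ≤ δ)
    (hX : X.card = a + b + c)
    (𝒜 : Finset (Finset α))
    (hhands : ∀ H ∈ 𝒜, H ⊆ X ∧ H.card = a)
    (hne : 𝒜.Nonempty)
    (hsec : ∀ HC ⊆ X, HC.card = c →
      (𝒜.filter fun H => Disjoint H HC).Nonempty →
      ∀ Y ⊆ X \ HC, Y.Nonempty → Y.card ≤ δ →
        (a + b).choose Y.card *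
            (((𝒜.filter fun H => Disjoint H HC)).filter fun H => Y ⊆ H).card =
          a.choose Y.card * (𝒜.filter fun H => Disjoint H HC).card) :
    ∃ lam : ℕ, ∀ T ⊆ X, T.card = c + δ → (𝒜.filter fun H => T ⊆ H).card = lam := by
  by_cases hn : c + δ ≤ X.card
  swap
  · exact ⟨0, fun T hT hTc => absurd (hTc ▸ Finset.card_le_card hT) (by omega)⟩
  have hδab : δ ≤ a + b := by omega
  -- a base c-set with nonempty P
  obtain ⟨H0, hH0⟩ := hne
  obtain ⟨hH0X, hH0c⟩ := hhands H0 hH0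
  have hbc : c ≤ (X \ H0).card := by
    rw [Finset.card_sdiff_of_subset hH0X, hX, hH0c]; omega
  obtain ⟨S0, hS0sub, hS0c⟩ := Finset.exists_subset_card_eq hbc
  have hS0X : S0 ⊆ X := hS0sub.trans (Finset.sdiff_subset)
  have hS0ne : (𝒜.filter fun H => Disjoint H S0).Nonempty :=
    ⟨H0, Finset.mem_filter.mpr ⟨hH0, ((Finset.subset_sdiff.mp hS0sub).2).symm⟩⟩
  -- level-c constancy
  have hN : ∀ S : Finset α, S ⊆ X → S.card = c →
      (𝒜.filter fun H => Disjoint H S).Nonempty ∧ ppA 𝒜 S = ppA 𝒜 S0 :=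
    fun S hS hc' =>
      aux_conn X a b c δ hb hc hδ 𝒜 hsec (S \ S0).card S0 S hS0X hS hS0c hc' rfl hS0ne
  -- L1
  have hL1 : ∀ Y S : Finset α, Y ⊆ X → S ⊆ X → Disjoint Y S → Y.card = δ → S.card = c →
      (a + b).choose δ * ffA 𝒜 Y S = a.choose δ * ppA 𝒜 S0 := by
    intro Y S hYX hSX hdisj hYc hSc
    obtain ⟨hPne, hpS⟩ := hN S hSX hSc
    have h := hsec S hSX hSc hPne Y (Finset.subset_sdiff.mpr ⟨hYX, hdisj⟩)
      (Finset.card_pos.mp (by omega)) (by omega)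
    rw [Finset.filter_filter, hYc] at h
    simp only [ffA, ppA] at hpS ⊢
    rw [h, hpS]
  -- L2 : double counting down from level c
  have hL2 : ∀ Y W : Finset α, Y ⊆ X → W ⊆ X → Disjoint Y W → Y.card = δ → W.card ≤ c →
      (a + b).choose δ * ((b + (c - W.card)).choose (c - W.card) * ffA 𝒜 Y W)
        = (a + b - δ + (c - W.card)).choose (c - W.card) * (a.choose δ * ppA 𝒜 S0) := by
    intro Y W hYX hWX hdisj hYc hWc
    set k := c - W.card with hk
    set A := X \ (Y ∪ W) with hA
    have hYWX : Y ∪ W ⊆ X := Finset.union_subset hYX hWX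
    have hYWcard : (Y ∪ W).card = δ + W.card := by
      rw [Finset.card_union_of_disjoint hdisj, hYc]
    have hAcard : A.card = a + b - δ + k := by
      rw [hA, Finset.card_sdiff_of_subset hYWX, hYWcard, hX]; omega
    have claim1 : ∑ K ∈ A.powersetCard k, ffA 𝒜 Y (W ∪ K)
        = (b + k).choose k * ffA 𝒜 Y W := by
      simp only [ffA, Finset.card_filter]
      rw [Finset.sum_comm, Finset.mul_sum]
      apply Finset.sum_congr rfl
      intro H hH
      obtain ⟨hHX, hHc⟩ := hhands H hH
      by_cases hcase : Disjoint H W ∧ Y ⊆ H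
      · have hterm : ∀ K ∈ A.powersetCard k,
            (if Disjoint H (W ∪ K) ∧ Y ⊆ H then (1:ℕ) else 0)
              = if Disjoint H K then 1 else 0 := by
          intro K _
          simp [Finset.disjoint_union_right, hcase.1, hcase.2]
        rw [Finset.sum_congr rfl hterm, ← Finset.card_filter]
        have hfil : (A.powersetCard k).filter (fun K => Disjoint H K)
            = (A \ H).powersetCard k := by
          ext K
          simp only [Finset.mem_filter, Finset.mem_powersetCard]
          constructor
          · rintro ⟨⟨h1, h2⟩, h3⟩
            exact ⟨Finset.subset_sdiff.mpr ⟨h1, h3.symm⟩, h2⟩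
          · rintro ⟨h1, h2⟩
            obtain ⟨h1a, h1b⟩ := Finset.subset_sdiff.mp h1
            exact ⟨⟨h1a, h2⟩, h1b.symm⟩
        have hAH : A \ H = X \ (W ∪ H) := by
          have hYH : ∀ z, z ∈ Y → z ∈ H := fun z hz => hcase.2 hz
          ext z
          simp only [hA, Finset.mem_sdiff, Finset.mem_union]
          constructor
          · rintro ⟨⟨hz1, hz2⟩, hz3⟩; push_neg at hz2; exact ⟨hz1, by tauto⟩
          · rintro ⟨hz1, hz2⟩; push_neg at hz2
            exact ⟨⟨hz1, by push_neg; exact ⟨fun hzY => hz2.2 (hYH z hzY), hz2.1⟩⟩, hz2.2⟩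
        have hcardAH : (A \ H).card = b + k := by
          rw [hAH, Finset.card_sdiff_of_subset (Finset.union_subset hWX hHX),
            Finset.card_union_of_disjoint hcase.1.symm, hX, hHc]
          omega
        rw [hfil, Finset.card_powersetCard, hcardAH, if_pos hcase, Nat.mul_one]
      · rw [if_neg hcase, Nat.mul_zero]
        apply Finset.sum_eq_zero
        intro K _
        rw [if_neg]
        rintro ⟨h1, h2⟩
        exact hcase ⟨(Finset.disjoint_union_right.mp h1).1, h2⟩
    have claim2 : (a + b).choose δ * (∑ K ∈ A.powersetCard k, ffA 𝒜 Y (W ∪ K))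
        = (a + b - δ + k).choose k * (a.choose δ * ppA 𝒜 S0) := by
      rw [Finset.mul_sum]
      have hterm : ∀ K ∈ A.powersetCard k,
          (a + b).choose δ * ffA 𝒜 Y (W ∪ K) = a.choose δ * ppA 𝒜 S0 := by
        intro K hK
        obtain ⟨hKA, hKc⟩ := Finset.mem_powersetCard.mp hK
        have hKX : K ⊆ X := hKA.trans (Finset.sdiff_subset)
        have hKdisj : Disjoint K (Y ∪ W) := (Finset.subset_sdiff.mp hKA).2
        have hKY : Disjoint K Y := (Finset.disjoint_union_right.mp hKdisj).1
        have hKW : Disjoint K W := (Finset.disjoint_union_right.mp hKdisj).2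
        apply hL1 Y (W ∪ K) hYX (Finset.union_subset hWX hKX)
        · exact Finset.disjoint_union_right.mpr ⟨hdisj, hKY.symm⟩
        · exact hYc
        · rw [Finset.card_union_of_disjoint hKW.symm, hKc]
          omega
      rw [Finset.sum_congr rfl hterm, Finset.sum_const, Finset.card_powersetCard, hAcard,
        smul_eq_mul]
    rw [← claim2, claim1]
  -- L3 : constancy of ffA on each level
  have hL3 : ∀ Y W Y' W' : Finset α, Y ⊆ X → W ⊆ X → Disjoint Y W → Y.card = δ →
      W.card ≤ c → Y' ⊆ X → W' ⊆ X → Disjoint Y' W' → Y'.card = δ → W'.card = W.card →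
      ffA 𝒜 Y W = ffA 𝒜 Y' W' := by
    intro Y W Y' W' hYX hWX hd hYc hWc hY'X hW'X hd' hY'c hW'W
    have e1 := hL2 Y W hYX hWX hd hYc hWc
    have e2 := hL2 Y' W' hY'X hW'X hd' hY'c (by omega)
    rw [hW'W] at e2
    have h1 : 0 < (a + b).choose δ := Nat.choose_pos hδab
    have h2 : 0 < (b + (c - W.card)).choose (c - W.card) :=
      Nat.choose_pos (Nat.le_add_left _ _)
    exact Nat.eq_of_mul_eq_mul_left h2
      (Nat.eq_of_mul_eq_mul_left h1 (e1.trans e2.symm))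
  -- final assembly
  obtain ⟨T0, hT0X, hT0c⟩ := Finset.exists_subset_card_eq hn
  refine ⟨(𝒜.filter fun H => T0 ⊆ H).card, ?_⟩
  intro T hTX hTc
  obtain ⟨Y1, hY1T, hY1c⟩ := Finset.exists_subset_card_eq (show δ ≤ T.card by omega)
  obtain ⟨Y0, hY0T, hY0c⟩ := Finset.exists_subset_card_eq (show δ ≤ T0.card by omega)
  have hS1c : (T \ Y1).card = c := by rw [Finset.card_sdiff_of_subset hY1T, hTc, hY1c]; omega
  have hS0c' : (T0 \ Y0).card = c := by rw [Finset.card_sdiff_of_subset hY0T, hT0c, hY0c]; omega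
  have hu1 : Y1 ∪ (T \ Y1) = T := Finset.union_sdiff_of_subset hY1T
  have hu0 : Y0 ∪ (T0 \ Y0) = T0 := Finset.union_sdiff_of_subset hY0T
  have e1 := aux_IE 𝒜 Y1 (T \ Y1)
  have e0 := aux_IE 𝒜 Y0 (T0 \ Y0)
  simp only [hu1] at e1
  simp only [hu0] at e0
  rw [Finset.sum_powerset, hS1c] at e1
  rw [Finset.sum_powerset, hS0c'] at e0
  have hY1X : Y1 ⊆ X := hY1T.trans hTX
  have hY0X : Y0 ⊆ X := hY0T.trans hT0X
  have hsum : ∀ j ∈ Finset.range (c + 1),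
      (∑ W ∈ (T \ Y1).powersetCard j, (-1:ℤ) ^ W.card * (ffA 𝒜 Y1 W : ℤ))
        = ∑ W ∈ (T0 \ Y0).powersetCard j, (-1:ℤ) ^ W.card * (ffA 𝒜 Y0 W : ℤ) := by
    intro j hj
    rw [Finset.mem_range] at hj
    obtain ⟨W0, hW0⟩ := Finset.powersetCard_nonempty.mpr
      (show j ≤ (T0 \ Y0).card by omega)
    obtain ⟨hW0S, hW0c⟩ := Finset.mem_powersetCard.mp hW0
    have hW0X : W0 ⊆ X := hW0S.trans (Finset.sdiff_subset.trans hT0X)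
    have hd0 : Disjoint Y0 W0 := Finset.disjoint_sdiff.mono_right hW0S
    have lhs_eq : (∑ W ∈ (T \ Y1).powersetCard j, (-1:ℤ) ^ W.card * (ffA 𝒜 Y1 W : ℤ))
        = ((T \ Y1).powersetCard j).card • ((-1:ℤ) ^ j * (ffA 𝒜 Y0 W0 : ℤ)) := by
      rw [← Finset.sum_const]
      apply Finset.sum_congr rfl
      intro W hW
      obtain ⟨hWS, hWc⟩ := Finset.mem_powersetCard.mp hW
      have : ffA 𝒜 Y1 W = ffA 𝒜 Y0 W0 :=
        hL3 Y1 W Y0 W0 hY1X (hWS.trans (Finset.sdiff_subset.trans hTX))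
          (Finset.disjoint_sdiff.mono_right hWS) hY1c (by omega)
          hY0X hW0X hd0 hY0c (by omega)
      rw [hWc, this]
    have rhs_eq : (∑ W ∈ (T0 \ Y0).powersetCard j, (-1:ℤ) ^ W.card * (ffA 𝒜 Y0 W : ℤ))
        = ((T0 \ Y0).powersetCard j).card • ((-1:ℤ) ^ j * (ffA 𝒜 Y0 W0 : ℤ)) := by
      rw [← Finset.sum_const]
      apply Finset.sum_congr rfl
      intro W hW
      obtain ⟨hWS, hWc⟩ := Finset.mem_powersetCard.mp hW
      have : ffA 𝒜 Y0 W = ffA 𝒜 Y0 W0 :=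
        hL3 Y0 W Y0 W0 hY0X (hWS.trans (Finset.sdiff_subset.trans hT0X))
          (Finset.disjoint_sdiff.mono_right hWS) hY0c (by omega)
          hY0X hW0X hd0 hY0c (by omega)
      rw [hWc, this]
    rw [lhs_eq, rhs_eq, Finset.card_powersetCard, Finset.card_powersetCard, hS1c, hS0c']
  have final := e1.trans ((Finset.sum_congr rfl hsum).trans e0.symm)
  exact_mod_cast final
end

section
/- Let X be a deck of n = a+b+c cards (a,b,c ≥ 1) and let 𝒜 be a nonempty announcement that is informative for Bob and satisfies the weak 1-security condition. Then c < b. -/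
open Finset

/-! If `b ≤ c`, take any announced hand `H₀` and let Cathy hold `c` of the `b + c` cards outside
it. Weak 1-security then forces at least two announced hands avoiding Cathy's cards, and these two
hands also avoid any `b` of Cathy's cards, so Bob could not tell them apart. -/

section

variable {α : Type*} [DecidableEq α]

theorem card_filter_disjoint_le_one_of_informative {X : Finset α} {b : ℕ} {𝒜 : Finset (Finset α)}
    (hinf : ∀ HB ⊆ X, HB.card = b →
      ∀ H ∈ 𝒜, ∀ H' ∈ 𝒜, Disjoint H HB → Disjoint H' HB → H = H')
    {Y : Finset α} (hYX : Y ⊆ X) (hbY : b ≤ Y.card) :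
    (𝒜.filter fun H => Disjoint H Y).card ≤ 1 := by
  obtain ⟨HB, hHBY, hHBcard⟩ := exists_subset_card_eq hbY
  refine card_le_one.mpr fun H hH H' hH' => ?_
  rw [mem_filter] at hH hH'
  exact hinf HB (hHBY.trans hYX) hHBcard H hH.1 H' hH'.1
    (hH.2.mono_right hHBY) (hH'.2.mono_right hHBY)

end

theorem stmt_7_general {α : Type*} [DecidableEq α] (X : Finset α) (a b c : ℕ)
    (ha : 1 ≤ a)
    (hX : X.card = a + b + c)
    (𝒜 : Finset (Finset α))
    (hhands : ∀ H ∈ 𝒜, H ⊆ X ∧ H.card = a)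
    (hne : 𝒜.Nonempty)
    (hinf : ∀ HB ⊆ X, HB.card = b →
      ∀ H ∈ 𝒜, ∀ H' ∈ 𝒜, Disjoint H HB → Disjoint H' HB → H = H')
    (hsec : ∀ HC ⊆ X, HC.card = c →
      (𝒜.filter fun H => Disjoint H HC).Nonempty →
      ∀ x ∈ X \ HC,
        1 ≤ (((𝒜.filter fun H => Disjoint H HC)).filter fun H => x ∈ H).card ∧
        (((𝒜.filter fun H => Disjoint H HC)).filter fun H => x ∈ H).card ≤
          (𝒜.filter fun H => Disjoint H HC).card - 1) :
    c < b := by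
  by_contra! hbc
  obtain ⟨H₀, hH₀⟩ := hne
  obtain ⟨hH₀X, hH₀card⟩ := hhands H₀ hH₀
  obtain ⟨HC, hHC, hHCcard⟩ := exists_subset_card_eq (s := X \ H₀) (n := c)
    (by rw [card_sdiff_of_subset hH₀X]; omega)
  have hHCX : HC ⊆ X := hHC.trans sdiff_subset
  have hH₀HC : Disjoint H₀ HC := disjoint_of_subset_right hHC disjoint_sdiff
  obtain ⟨x, hx⟩ : H₀.Nonempty := card_pos.mp (by omega)
  have hxHC : x ∈ X \ HC := mem_sdiff.mpr ⟨hH₀X hx, disjoint_left.mp hH₀HC hx⟩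
  have hP : (𝒜.filter fun H => Disjoint H HC).Nonempty := ⟨H₀, mem_filter.mpr ⟨hH₀, hH₀HC⟩⟩
  have hsplit := hsec HC hHCX hHCcard hP x hxHC
  -- `hsplit` needs two hands avoiding `HC`; `hone` allows at most one
  have hone := card_filter_disjoint_le_one_of_informative hinf hHCX (hHCcard ▸ hbc)
  omega

/-- Theorem: if a nonempty announcement is informative for Bob and weakly
1-secure against Cathy, then `c < b`. -/
theorem stmt_7 {α : Type*} [DecidableEq α] (X : Finset α) (a b c : ℕ)
    (ha : 1 ≤ a) (hb : 1 ≤ b) (hc : 1 ≤ c)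
    (hX : X.card = a + b + c)
    (𝒜 : Finset (Finset α))
    (hhands : ∀ H ∈ 𝒜, H ⊆ X ∧ H.card = a)
    (hne : 𝒜.Nonempty)
    (hinf : ∀ HB ⊆ X, HB.card = b →
      ∀ H ∈ 𝒜, ∀ H' ∈ 𝒜, Disjoint H HB → Disjoint H' HB → H = H')
    (hsec : ∀ HC ⊆ X, HC.card = c →
      (𝒜.filter fun H => Disjoint H HC).Nonempty →
      ∀ x ∈ X \ HC,
        1 ≤ (((𝒜.filter fun H => Disjoint H HC)).filter fun H => x ∈ H).card ∧
        (((𝒜.filter fun H => Disjoint H HC)).filter fun H => x ∈ H).card ≤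
          (𝒜.filter fun H => Disjoint H HC).card - 1) :
    c < b :=
  stmt_7_general X a b c ha hX 𝒜 hhands hne hinf hsec
end

section
/- Let X be a deck of n = a+b+c cards (a,b,c ≥ 1) with a > c, and suppose an announcement 𝒜 is a t-(n,a,1)-design with t ≤ a−c. Then 𝒜 is informative for Bob: for every b-element subset H_B ⊆ X there is at most one H ∈ 𝒜 with H ∩ H_B = ∅. -/
open Finset

/-- Corollary: if `a > c` and an announcement is a `t-(n,a,1)`-design with
`t ≤ a - c`, then the announcement is informative for Bob. -/
theorem stmt_8 {α : Type*} [DecidableEq α] (X : Finset α) (a b c t : ℕ)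
    (ha : 1 ≤ a) (hb : 1 ≤ b) (hc : 1 ≤ c) (hac : c < a)
    (hX : X.card = a + b + c)
    (hta : t ≤ a - c) (ht : 1 ≤ t)
    (𝒜 : Finset (Finset α))
    (hhands : ∀ H ∈ 𝒜, H ⊆ X ∧ H.card = a)
    (hdesign : ∀ T ⊆ X, T.card = t → (𝒜.filter fun H => T ⊆ H).card = 1) :
    ∀ HB ⊆ X, HB.card = b →
      ∀ H ∈ 𝒜, ∀ H' ∈ 𝒜, Disjoint H HB → Disjoint H' HB → H = H' := by
  intro HB hHBX hHBcard H hH H' hH' hd hd'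
  obtain ⟨hHX, hHcard⟩ := hhands H hH
  obtain ⟨hHX', hHcard'⟩ := hhands H' hH'
  have hsub : H ⊆ X \ HB := subset_sdiff.2 ⟨hHX, hd⟩
  have hsub' : H' ⊆ X \ HB := subset_sdiff.2 ⟨hHX', hd'⟩
  have hcardsd : (X \ HB).card = a + c := by
    rw [card_sdiff_of_subset hHBX, hX, hHBcard]; omega
  have hun : (H ∪ H').card ≤ a + c := by
    rw [← hcardsd]; exact card_le_card (union_subset hsub hsub')
  have hint : t ≤ (H ∩ H').card := by
    have := card_union_add_card_inter H H'
    omega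
  obtain ⟨T, hTsub, hTcard⟩ := exists_subset_card_eq hint
  have hTX : T ⊆ X := hTsub.trans ((inter_subset_left).trans hHX)
  have h1 := hdesign T hTX hTcard
  have hHm : H ∈ 𝒜.filter fun H => T ⊆ H :=
    mem_filter.2 ⟨hH, hTsub.trans inter_subset_left⟩
  have hHm' : H' ∈ 𝒜.filter fun H => T ⊆ H :=
    mem_filter.2 ⟨hH', hTsub.trans inter_subset_right⟩
  exact (card_le_one.1 h1.le) H hHm H' hHm'
end

section
/- Let X be a deck of n = a+b+c cards (a,b,c ≥ 1) with a > c, and suppose an announcement 𝒜 is a t-(n,a,λ)-design with λ ≥ 1, t ≤ a and t ≥ a−c. If 𝒜 is informative for Bob, then t = a−c and λ = 1. -/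
open Finset

/-- Lemma: if `a > c` and an announcement is a `t-(n,a,λ)`-design with
`a - c ≤ t ≤ a`, and the announcement is informative for Bob, then `t = a - c`
and `λ = 1`. -/
theorem stmt_9 {α : Type*} [DecidableEq α] (X : Finset α) (a b c t lam : ℕ)
    (ha : 1 ≤ a) (hb : 1 ≤ b) (hc : 1 ≤ c) (hac : c < a)
    (hX : X.card = a + b + c)
    (hlam : 1 ≤ lam) (hta : t ≤ a) (hat : a - c ≤ t)
    (𝒜 : Finset (Finset α))
    (hhands : ∀ H ∈ 𝒜, H ⊆ X ∧ H.card = a)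
    (hdesign : ∀ T ⊆ X, T.card = t → (𝒜.filter fun H => T ⊆ H).card = lam)
    (hinf : ∀ HB ⊆ X, HB.card = b →
      ∀ H ∈ 𝒜, ∀ H' ∈ 𝒜, Disjoint H HB → Disjoint H' HB → H = H') :
    t = a - c ∧ lam = 1 := by
  -- Key: two hands meeting in at least a - c cards coincide.
  have key : ∀ H ∈ 𝒜, ∀ H' ∈ 𝒜, a - c ≤ (H ∩ H').card → H = H' := by
    intro H hH H' hH' hk
    obtain ⟨hHX, hHa⟩ := hhands H hH
    obtain ⟨hH'X, hH'a⟩ := hhands H' hH'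
    have hU : (H ∪ H') ⊆ X := union_subset hHX hH'X
    have hcu : (H ∪ H').card + (H ∩ H').card = H.card + H'.card :=
      card_union_add_card_inter H H'
    have hUX : (H ∪ H').card ≤ X.card := card_le_card hU
    have hsd : (X \ (H ∪ H')).card = X.card - (H ∪ H').card := card_sdiff_of_subset hU
    have hble : b ≤ (X \ (H ∪ H')).card := by omega
    obtain ⟨HB, hHBsub, hHBcard⟩ := exists_subset_card_eq hble
    have hdisj : Disjoint HB (H ∪ H') := sdiff_disjoint.mono_left hHBsub
    exact hinf HB (hHBsub.trans (sdiff_subset)) hHBcard H hH H' hH'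
      (hdisj.symm.mono_left subset_union_left)
      (hdisj.symm.mono_left subset_union_right)
  -- A t-subset of X exists; get a hand containing it.
  have htX : t ≤ X.card := by omega
  obtain ⟨T₀, hT₀X, hT₀card⟩ := exists_subset_card_eq htX
  have hfilt := hdesign T₀ hT₀X hT₀card
  have hne : (𝒜.filter fun H => T₀ ⊆ H).Nonempty := by
    rw [← card_pos, hfilt]; omega
  obtain ⟨H, hHmem⟩ := hne
  have hH𝒜 : H ∈ 𝒜 := (mem_filter.mp hHmem).1
  have hT₀H : T₀ ⊆ H := (mem_filter.mp hHmem).2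
  -- λ = 1: the filter has at most one element.
  have hlam1 : lam = 1 := by
    have hle : (𝒜.filter fun H => T₀ ⊆ H).card ≤ 1 := by
      apply card_le_one.mpr
      intro x hx y hy
      rw [mem_filter] at hx hy
      apply key x hx.1 y hy.1
      have : T₀ ⊆ x ∩ y := subset_inter hx.2 hy.2
      have := card_le_card this
      omega
    omega
  refine ⟨?_, hlam1⟩
  -- t = a - c: otherwise build a t-set straddling H.
  by_contra hne'
  have htgt : a - c < t := lt_of_le_of_ne hat (Ne.symm hne')
  obtain ⟨hHX, hHa⟩ := hhands H hH𝒜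
  have ht1 : t - 1 ≤ H.card := by omega
  obtain ⟨S, hSH, hScard⟩ := exists_subset_card_eq ht1
  have hXH : (X \ H).Nonempty := by
    rw [← card_pos, card_sdiff_of_subset hHX]; omega
  obtain ⟨x, hx⟩ := hXH
  have hxX : x ∈ X := (mem_sdiff.mp hx).1
  have hxH : x ∉ H := (mem_sdiff.mp hx).2
  have hxS : x ∉ S := fun h => hxH (hSH h)
  set T := insert x S with hT
  have hTcard : T.card = t := by
    rw [card_insert_of_notMem hxS, hScard]; omega
  have hTX : T ⊆ X := insert_subset hxX (hSH.trans hHX)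
  have hfilt2 := hdesign T hTX hTcard
  have hne2 : (𝒜.filter fun H => T ⊆ H).Nonempty := by
    rw [← card_pos, hfilt2]; omega
  obtain ⟨H', hH'mem⟩ := hne2
  rw [mem_filter] at hH'mem
  obtain ⟨hH'𝒜, hTH'⟩ := hH'mem
  have hSint : S ⊆ H ∩ H' := subset_inter hSH ((subset_insert x S).trans hTH')
  have hEq : H = H' := key H hH𝒜 H' hH'𝒜 (by have := card_le_card hSint; omega)
  exact hxH (hEq ▸ hTH' (mem_insert_self x S))
end

section
/- Let X be a deck of n = a+b+c cards (a,b,c ≥ 1) with a − c = 2, and let 𝒜 be a nonempty announcement that is informative for Bob and satisfies the perfect 1-security condition. Then a = 3 and c = 1. -/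
open Finset

/-- Theorem: if `a - c = 2` and a nonempty announcement is informative for Bob
and perfectly 1-secure against Cathy, then `a = 3` and `c = 1`. -/
theorem stmt_10 {α : Type*} [DecidableEq α] (X : Finset α) (a b c : ℕ)
    (ha : 1 ≤ a) (hb : 1 ≤ b) (hc : 1 ≤ c) (hac : a - c = 2)
    (hX : X.card = a + b + c)
    (𝒜 : Finset (Finset α))
    (hhands : ∀ H ∈ 𝒜, H ⊆ X ∧ H.card = a)
    (hne : 𝒜.Nonempty)
    (hinf : ∀ HB ⊆ X, HB.card = b →
      ∀ H ∈ 𝒜, ∀ H' ∈ 𝒜, Disjoint H HB → Disjoint H' HB → H = H')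
    (hsec : ∀ HC ⊆ X, HC.card = c →
      (𝒜.filter fun H => Disjoint H HC).Nonempty →
      ∀ Y ⊆ X \ HC, Y.Nonempty → Y.card ≤ 1 →
        (a + b).choose Y.card *
            (((𝒜.filter fun H => Disjoint H HC)).filter fun H => Y ⊆ H).card =
          a.choose Y.card * (𝒜.filter fun H => Disjoint H HC).card) :
    a = 3 ∧ c = 1 := by
  have haeq : a = c + 2 := by omega
  suffices hc1 : c = 1 by exact ⟨by omega, hc1⟩
  by_contra hcne
  have hc2 : 2 ≤ c := by omega
  have ha4 : 4 ≤ a := by omega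
  -- Step 0: distinct hands intersect in at most one card
  have hpair : ∀ H ∈ 𝒜, ∀ H' ∈ 𝒜, H ≠ H' → (H ∩ H').card ≤ 1 := by
    intro H hH H' hH' hne'
    by_contra hge
    push_neg at hge
    obtain ⟨hHX, hHc⟩ := hhands H hH
    obtain ⟨hH'X, hH'c⟩ := hhands H' hH'
    have hUsub : H ∪ H' ⊆ X := union_subset hHX hH'X
    have hUc : (H ∪ H').card + (H ∩ H').card = a + a := by
      rw [card_union_add_card_inter, hHc, hH'c]
    have hIle : (H ∩ H').card ≤ a := by
      calc (H ∩ H').card ≤ H.card := card_le_card inter_subset_left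
      _ = a := hHc
    have hUle : (H ∪ H').card ≤ X.card := card_le_card hUsub
    have hcsd : (X \ (H ∪ H')).card = X.card - (H ∪ H').card := card_sdiff_of_subset hUsub
    have hble : b ≤ (X \ (H ∪ H')).card := by omega
    obtain ⟨HB, hHBsub, hHBc⟩ := Finset.exists_subset_card_eq hble
    have hHBX : HB ⊆ X := hHBsub.trans sdiff_subset
    have hd1 : Disjoint H HB := by
      rw [disjoint_right]
      intro x hx
      have := mem_sdiff.1 (hHBsub hx)
      exact fun hxH => this.2 (mem_union_left _ hxH)
    have hd2 : Disjoint H' HB := by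
      rw [disjoint_right]
      intro x hx
      have := mem_sdiff.1 (hHBsub hx)
      exact fun hxH => this.2 (mem_union_right _ hxH)
    exact hne' (hinf HB hHBX hHBc H hH H' hH' hd1 hd2)
  -- security for a single card
  have hdeg : ∀ HC, HC ⊆ X → HC.card = c →
      (𝒜.filter fun H => Disjoint H HC).Nonempty →
      ∀ y ∈ X, y ∉ HC →
      (a + b) * (((𝒜.filter fun H => Disjoint H HC)).filter fun H => y ∈ H).card
        = a * (𝒜.filter fun H => Disjoint H HC).card := by
    intro HC hHCX hHCc hne' y hyX hyHC
    have h := hsec HC hHCX hHCc hne' {y}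
      (by rw [singleton_subset_iff, mem_sdiff]; exact ⟨hyX, hyHC⟩)
      (singleton_nonempty y) (by simp)
    simpa [Nat.choose_one_right, singleton_subset_iff] using h
  -- fix a hand H1
  obtain ⟨H1, hH1⟩ := hne
  obtain ⟨hH1X, hH1c⟩ := hhands H1 hH1
  have hsd : (X \ H1).card = b + c := by
    rw [card_sdiff_of_subset hH1X]; omega
  -- Step 1: find a hand H2 meeting H1 in at most one point u
  obtain ⟨HC₀, hHC₀sub, hHC₀c⟩ := Finset.exists_subset_card_eq
    (show c ≤ (X \ H1).card by omega)
  have hHC₀X : HC₀ ⊆ X := hHC₀sub.trans sdiff_subset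
  have hdisj0 : Disjoint H1 HC₀ := by
    rw [disjoint_right]
    intro x hx
    exact (mem_sdiff.1 (hHC₀sub hx)).2
  have hH1P0 : H1 ∈ 𝒜.filter fun H => Disjoint H HC₀ := mem_filter.2 ⟨hH1, hdisj0⟩
  have hycard : (X \ (H1 ∪ HC₀)).card = b := by
    rw [card_sdiff_of_subset (union_subset hH1X hHC₀X), card_union_of_disjoint hdisj0]
    omega
  obtain ⟨y, hy⟩ := card_pos.1 (show 0 < (X \ (H1 ∪ HC₀)).card by omega)
  have hyX : y ∈ X := (mem_sdiff.1 hy).1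
  have hynH1 : y ∉ H1 := fun h => (mem_sdiff.1 hy).2 (mem_union_left _ h)
  have hynHC₀ : y ∉ HC₀ := fun h => (mem_sdiff.1 hy).2 (mem_union_right _ h)
  have hdy := hdeg HC₀ hHC₀X hHC₀c ⟨H1, hH1P0⟩ y hyX hynHC₀
  have hP0pos : 0 < (𝒜.filter fun H => Disjoint H HC₀).card :=
    card_pos.2 ⟨H1, hH1P0⟩
  have hdypos : 0 < ((𝒜.filter fun H => Disjoint H HC₀).filter fun H => y ∈ H).card := by
    rcases Nat.eq_zero_or_pos ((𝒜.filter fun H => Disjoint H HC₀).filter fun H => y ∈ H).card with h0 | h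
    · rw [h0, Nat.mul_zero] at hdy
      have : 0 < a * (𝒜.filter fun H => Disjoint H HC₀).card := Nat.mul_pos (by omega) hP0pos
      omega
    · exact h
  obtain ⟨H2, hH2mem⟩ := card_pos.1 hdypos
  have hH2A : H2 ∈ 𝒜 := (mem_filter.1 (mem_filter.1 hH2mem).1).1
  have hyH2 : y ∈ H2 := (mem_filter.1 hH2mem).2
  have hH2ne : H2 ≠ H1 := fun h => hynH1 (h ▸ hyH2)
  have hH2H1 : (H2 ∩ H1).card ≤ 1 := hpair H2 hH2A H1 hH1 hH2ne
  -- choose u ∈ H1 with H2 ∩ H1 ⊆ {u}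
  obtain ⟨u, huH1, hsub2⟩ : ∃ u, u ∈ H1 ∧ H2 ∩ H1 ⊆ {u} := by
    rcases (H2 ∩ H1).eq_empty_or_nonempty with h | ⟨w, hw⟩
    · obtain ⟨u, hu⟩ := card_pos.1 (show 0 < H1.card by omega)
      exact ⟨u, hu, by simp [h]⟩
    · refine ⟨w, (mem_inter.1 hw).2, ?_⟩
      intro x hx
      rw [mem_singleton]
      exact card_le_one.1 hH2H1 x hx w hw
  -- choose v ∈ H1, v ≠ u
  obtain ⟨v, hvH1, hvu⟩ := Finset.exists_mem_ne (show 1 < H1.card by omega) u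
  -- Step 2: #Su = #Sv ≥ 1 where Sw = {H ∈ 𝒜 : H ∩ H1 = {w}}
  have huvsub : {u, v} ⊆ H1 := by
    intro x hx
    rcases mem_insert.1 hx with h | h
    · exact h ▸ huH1
    · exact (mem_singleton.1 h) ▸ hvH1
  have hHC'c : (H1 \ {u, v}).card = c := by
    rw [card_sdiff_of_subset huvsub, card_pair (Ne.symm hvu), hH1c]; omega
  have hHC'X : (H1 \ {u, v}) ⊆ X := (sdiff_subset).trans hH1X
  have hHC'subH1 : (H1 \ {u, v}) ⊆ H1 := sdiff_subset
  have hHC'ne : (H1 \ {u, v}).Nonempty := card_pos.1 (by omega)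
  have hH1nd : ¬ Disjoint H1 (H1 \ {u, v}) := by
    obtain ⟨x, hx⟩ := hHC'ne
    exact fun hd => (disjoint_right.1 hd hx) (hHC'subH1 hx)
  have hH2P' : H2 ∈ 𝒜.filter fun H => Disjoint H (H1 \ {u, v}) := by
    refine mem_filter.2 ⟨hH2A, ?_⟩
    rw [disjoint_right]
    intro x hx hxH2
    have hxH1 : x ∈ H1 := hHC'subH1 hx
    have : x ∈ ({u} : Finset α) := hsub2 (mem_inter.2 ⟨hxH2, hxH1⟩)
    have hxu : x = u := mem_singleton.1 this
    exact (mem_sdiff.1 hx).2 (by rw [hxu]; exact mem_insert_self u {v})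
  have hP'ne : (𝒜.filter fun H => Disjoint H (H1 \ {u, v})).Nonempty := ⟨H2, hH2P'⟩
  -- the degree filter at a point w ∈ {u,v} equals S_w
  have hfilt : ∀ w, w ∈ H1 → w ∈ ({u, v} : Finset α) →
      ((𝒜.filter fun H => Disjoint H (H1 \ {u, v})).filter fun H => w ∈ H)
        = 𝒜.filter (fun H => H ∩ H1 = {w}) := by
    intro w hwH1 hwuv
    ext H
    simp only [mem_filter]
    constructor
    · rintro ⟨⟨hHA, hdisj⟩, hwH⟩
      refine ⟨hHA, ?_⟩
      have hHne1 : H ≠ H1 := by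
        rintro rfl
        exact hH1nd hdisj
      have hcle : (H ∩ H1).card ≤ 1 := hpair H hHA H1 hH1 hHne1
      have hwin : w ∈ H ∩ H1 := mem_inter.2 ⟨hwH, hwH1⟩
      exact Finset.eq_singleton_iff_unique_mem.2
        ⟨hwin, fun x hx => card_le_one.1 hcle x hx w hwin⟩
    · rintro ⟨hHA, heq⟩
      have hwH : w ∈ H := by
        have : w ∈ H ∩ H1 := heq ▸ mem_singleton_self w
        exact (mem_inter.1 this).1
      refine ⟨⟨hHA, ?_⟩, hwH⟩
      rw [disjoint_right]
      intro x hx hxH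
      have hxH1 : x ∈ H1 := hHC'subH1 hx
      have : x ∈ ({w} : Finset α) := heq ▸ mem_inter.2 ⟨hxH, hxH1⟩
      have hxw : x = w := mem_singleton.1 this
      exact (mem_sdiff.1 hx).2 (hxw ▸ hwuv)
  have hvuv : v ∈ ({u, v} : Finset α) := mem_insert.2 (Or.inr (mem_singleton_self v))
  have hdu := hdeg (H1 \ {u, v}) hHC'X hHC'c hP'ne u (hH1X huH1)
    (fun h => (mem_sdiff.1 h).2 (mem_insert_self u {v}))
  have hdv := hdeg (H1 \ {u, v}) hHC'X hHC'c hP'ne v (hH1X hvH1)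
    (fun h => (mem_sdiff.1 h).2 hvuv)
  rw [hfilt u huH1 (mem_insert_self u {v})] at hdu
  rw [hfilt v hvH1 hvuv] at hdv
  have hsusv : (𝒜.filter (fun H => H ∩ H1 = {u})).card
      = (𝒜.filter (fun H => H ∩ H1 = {v})).card := by
    have h : (a + b) * (𝒜.filter (fun H => H ∩ H1 = {u})).card
        = (a + b) * (𝒜.filter (fun H => H ∩ H1 = {v})).card := by rw [hdu, hdv]
    exact Nat.eq_of_mul_eq_mul_left (by omega) h
  have hsupos : 0 < (𝒜.filter (fun H => H ∩ H1 = {u})).card := by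
    have hP'pos : 0 < (𝒜.filter fun H => Disjoint H (H1 \ {u, v})).card := card_pos.2 hP'ne
    rcases Nat.eq_zero_or_pos (𝒜.filter (fun H => H ∩ H1 = {u})).card with h0 | h
    · rw [h0, Nat.mul_zero] at hdu
      have : 0 < a * (𝒜.filter fun H => Disjoint H (H1 \ {u, v})).card :=
        Nat.mul_pos (by omega) hP'pos
      omega
    · exact h
  -- pick F with F ∩ H1 = {u}
  obtain ⟨F, hFmem⟩ := card_pos.1 hsupos
  have hFA : F ∈ 𝒜 := (mem_filter.1 hFmem).1
  have hFint : F ∩ H1 = {u} := (mem_filter.1 hFmem).2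
  obtain ⟨hFX, hFc⟩ := hhands F hFA
  have huF : u ∈ F := by
    have : u ∈ F ∩ H1 := hFint ▸ mem_singleton_self u
    exact (mem_inter.1 this).1
  have hvnF : v ∉ F := by
    intro h
    have : v ∈ ({u} : Finset α) := hFint ▸ mem_inter.2 ⟨h, hvH1⟩
    exact hvu (mem_singleton.1 this)
  -- Step 3 key claim: for every z' ∈ F \ {u}, exactly one G with G ∩ H1 = {v}
  -- meets F \ {u, z'}
  have key : ∀ z' ∈ F \ {u},
      ((𝒜.filter (fun H => H ∩ H1 = {v})).filter
        fun G => ¬ Disjoint G (F \ {u, z'})).card = 1 := by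
    intro z' hz'
    have hz'F : z' ∈ F := (mem_sdiff.1 hz').1
    have hz'u : z' ≠ u := fun h => (mem_sdiff.1 hz').2 (h ▸ mem_singleton_self z')
    have huz'sub : {u, z'} ⊆ F := by
      intro x hx
      rcases mem_insert.1 hx with h | h
      · exact h ▸ huF
      · exact (mem_singleton.1 h) ▸ hz'F
    have hHC₃c : (F \ {u, z'}).card = c := by
      rw [card_sdiff_of_subset huz'sub, card_pair (Ne.symm hz'u), hFc]; omega
    have hHC₃X : (F \ {u, z'}) ⊆ X := sdiff_subset.trans hFX
    have hHC₃F : (F \ {u, z'}) ⊆ F := sdiff_subset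
    have hHC₃ne : (F \ {u, z'}).Nonempty := card_pos.1 (by omega)
    -- F \ {u, z'} misses H1
    have hHC₃H1 : ∀ x ∈ F \ {u, z'}, x ∉ H1 := by
      intro x hx hxH1
      have hxF : x ∈ F := hHC₃F hx
      have : x ∈ ({u} : Finset α) := hFint ▸ mem_inter.2 ⟨hxF, hxH1⟩
      exact (mem_sdiff.1 hx).2 ((mem_singleton.1 this) ▸ mem_insert_self u {z'})
    have hH1d3 : Disjoint H1 (F \ {u, z'}) := by
      rw [disjoint_right]
      intro x hx
      exact hHC₃H1 x hx
    have hH1P3 : H1 ∈ 𝒜.filter fun H => Disjoint H (F \ {u, z'}) :=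
      mem_filter.2 ⟨hH1, hH1d3⟩
    have hP3ne : (𝒜.filter fun H => Disjoint H (F \ {u, z'})).Nonempty := ⟨H1, hH1P3⟩
    -- degree filter at a point w of H1 not in F \ {u, z'}
    have hfilt3 : ∀ w, w ∈ H1 → w ∉ (F \ {u, z'}) →
        ((𝒜.filter fun H => Disjoint H (F \ {u, z'})).filter fun H => w ∈ H)
          = insert H1 ((𝒜.filter (fun H => H ∩ H1 = {w})).filter
              fun H => Disjoint H (F \ {u, z'})) := by
      intro w hwH1 hwn3
      ext H
      simp only [mem_filter, mem_insert]
      constructor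
      · rintro ⟨⟨hHA, hdisj⟩, hwH⟩
        by_cases hHeq : H = H1
        · exact Or.inl hHeq
        · refine Or.inr ⟨⟨hHA, ?_⟩, hdisj⟩
          have hcle : (H ∩ H1).card ≤ 1 := hpair H hHA H1 hH1 hHeq
          have hwin : w ∈ H ∩ H1 := mem_inter.2 ⟨hwH, hwH1⟩
          exact Finset.eq_singleton_iff_unique_mem.2
            ⟨hwin, fun x hx => card_le_one.1 hcle x hx w hwin⟩
      · rintro (rfl | ⟨⟨hHA, heq⟩, hdisj⟩)
        · exact ⟨⟨hH1, hH1d3⟩, hwH1⟩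
        · have hwH : w ∈ H := by
            have : w ∈ H ∩ H1 := heq ▸ mem_singleton_self w
            exact (mem_inter.1 this).1
          exact ⟨⟨hHA, hdisj⟩, hwH⟩
    have hH1notin : ∀ w : α, H1 ∉ (𝒜.filter (fun H => H ∩ H1 = {w})).filter
        fun H => Disjoint H (F \ {u, z'}) := by
      intro w hmem
      have h1 : H1 ∩ H1 = {w} := (mem_filter.1 (mem_filter.1 hmem).1).2
      rw [inter_self] at h1
      have : H1.card = 1 := by rw [h1, card_singleton]
      omega
    have hun3 : u ∉ F \ {u, z'} := fun h => (mem_sdiff.1 h).2 (mem_insert_self u {z'})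
    have hvn3 : v ∉ F \ {u, z'} := fun h => hvnF (hHC₃F h)
    have hdu3 := hdeg (F \ {u, z'}) hHC₃X hHC₃c hP3ne u (hH1X huH1) hun3
    have hdv3 := hdeg (F \ {u, z'}) hHC₃X hHC₃c hP3ne v (hH1X hvH1) hvn3
    rw [hfilt3 u huH1 hun3, card_insert_of_notMem (hH1notin u)] at hdu3
    rw [hfilt3 v hvH1 hvn3, card_insert_of_notMem (hH1notin v)] at hdv3
    -- t_u = t_v
    have htuv : ((𝒜.filter (fun H => H ∩ H1 = {u})).filter
          fun H => Disjoint H (F \ {u, z'})).card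
        = ((𝒜.filter (fun H => H ∩ H1 = {v})).filter
          fun H => Disjoint H (F \ {u, z'})).card := by
      have h := hdu3.trans hdv3.symm
      have h2 := Nat.eq_of_mul_eq_mul_left (show 0 < a + b by omega) h
      omega
    -- t_u = #Su - 1
    have htu : ((𝒜.filter (fun H => H ∩ H1 = {u})).filter
        fun H => Disjoint H (F \ {u, z'}))
        = (𝒜.filter (fun H => H ∩ H1 = {u})).erase F := by
      ext H
      simp only [mem_filter, mem_erase]
      constructor
      · rintro ⟨⟨hHA, heq⟩, hdisj⟩
        refine ⟨?_, hHA, heq⟩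
        rintro rfl
        obtain ⟨x, hx⟩ := hHC₃ne
        exact (disjoint_right.1 hdisj hx) (hHC₃F hx)
      · rintro ⟨hHF, hHA, heq⟩
        refine ⟨⟨hHA, heq⟩, ?_⟩
        rw [disjoint_right]
        intro x hx hxH
        have hxF : x ∈ F := hHC₃F hx
        have huH : u ∈ H := by
          have : u ∈ H ∩ H1 := heq ▸ mem_singleton_self u
          exact (mem_inter.1 this).1
        have hcle : (H ∩ F).card ≤ 1 := hpair H hHA F hFA hHF
        have huin : u ∈ H ∩ F := mem_inter.2 ⟨huH, huF⟩
        have hxin : x ∈ H ∩ F := mem_inter.2 ⟨hxH, hxF⟩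
        have hxu : x = u := card_le_one.1 hcle x hxin u huin
        exact hun3 (hxu ▸ hx)
    have htucard : ((𝒜.filter (fun H => H ∩ H1 = {u})).filter
        fun H => Disjoint H (F \ {u, z'})).card
        = (𝒜.filter (fun H => H ∩ H1 = {u})).card - 1 := by
      rw [htu, card_erase_of_mem hFmem]
    -- partition of Sv
    have hpart : ((𝒜.filter (fun H => H ∩ H1 = {v})).filter
          fun H => Disjoint H (F \ {u, z'})).card
        + ((𝒜.filter (fun H => H ∩ H1 = {v})).filter
          fun G => ¬ Disjoint G (F \ {u, z'})).card
        = (𝒜.filter (fun H => H ∩ H1 = {v})).card :=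
      card_filter_add_card_filter_not _
    omega
  -- Endgame: three applications of `key` give a contradiction
  have hFu_card : (F \ {u}).card = a - 1 := by
    rw [card_sdiff_of_subset (singleton_subset_iff.2 huF), card_singleton, hFc]
  obtain ⟨z₀, hz₀⟩ := card_pos.1 (show 0 < (F \ {u}).card by omega)
  obtain ⟨G₀, hG₀eq⟩ := card_eq_one.1 (key z₀ hz₀)
  have hG₀mem : G₀ ∈ (𝒜.filter (fun H => H ∩ H1 = {v})).filter
      fun G => ¬ Disjoint G (F \ {u, z₀}) := by
    rw [hG₀eq]; exact mem_singleton_self G₀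
  have hG₀A : G₀ ∈ 𝒜 := (mem_filter.1 (mem_filter.1 hG₀mem).1).1
  have hG₀int : G₀ ∩ H1 = {v} := (mem_filter.1 (mem_filter.1 hG₀mem).1).2
  obtain ⟨w₀, hw₀G₀, hw₀F'⟩ := Finset.not_disjoint_iff.1 (mem_filter.1 hG₀mem).2
  have hw₀F : w₀ ∈ F := (mem_sdiff.1 hw₀F').1
  have hw₀u : w₀ ≠ u := fun h =>
    (mem_sdiff.1 hw₀F').2 (by rw [h]; exact mem_insert_self u {z₀})
  have hG₀F : G₀ ≠ F := by
    intro h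
    have : v ∈ ({u} : Finset α) := hFint ▸ (h ▸ (hG₀int ▸ mem_singleton_self v :
      v ∈ G₀ ∩ H1) : v ∈ F ∩ H1)
    exact hvu (mem_singleton.1 this)
  have hG₀Fle : (G₀ ∩ F).card ≤ 1 := hpair G₀ hG₀A F hFA hG₀F
  have hG₀Fsing : ∀ x ∈ G₀ ∩ F, x = w₀ := fun x hx =>
    card_le_one.1 hG₀Fle x hx w₀ (mem_inter.2 ⟨hw₀G₀, hw₀F⟩)
  -- apply key at w₀
  have hw₀Fu : w₀ ∈ F \ {u} := mem_sdiff.2 ⟨hw₀F, fun h => hw₀u (mem_singleton.1 h)⟩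
  obtain ⟨G₁, hG₁eq⟩ := card_eq_one.1 (key w₀ hw₀Fu)
  have hG₁mem : G₁ ∈ (𝒜.filter (fun H => H ∩ H1 = {v})).filter
      fun G => ¬ Disjoint G (F \ {u, w₀}) := by
    rw [hG₁eq]; exact mem_singleton_self G₁
  have hG₁A : G₁ ∈ 𝒜 := (mem_filter.1 (mem_filter.1 hG₁mem).1).1
  have hG₁int : G₁ ∩ H1 = {v} := (mem_filter.1 (mem_filter.1 hG₁mem).1).2
  obtain ⟨w₁, hw₁G₁, hw₁F'⟩ := Finset.not_disjoint_iff.1 (mem_filter.1 hG₁mem).2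
  have hw₁F : w₁ ∈ F := (mem_sdiff.1 hw₁F').1
  have hw₁u : w₁ ≠ u := fun h => (mem_sdiff.1 hw₁F').2 (by rw [h]; exact mem_insert_self u {w₀})
  have hw₁w₀ : w₁ ≠ w₀ := fun h => (mem_sdiff.1 hw₁F').2
    (by rw [h]; exact mem_insert.2 (Or.inr (mem_singleton_self w₀)))
  have hG₁G₀ : G₁ ≠ G₀ := by
    intro h
    have : w₁ ∈ G₀ ∩ F := mem_inter.2 ⟨h ▸ hw₁G₁, hw₁F⟩
    exact hw₁w₀ (hG₀Fsing w₁ this)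
  -- pick z₂ ∈ F \ {u, w₀, w₁}
  have huw01sub : {u, w₀, w₁} ⊆ F := by
    intro x hx
    rcases mem_insert.1 hx with h | h
    · exact h ▸ huF
    · rcases mem_insert.1 h with h' | h'
      · exact h' ▸ hw₀F
      · exact (mem_singleton.1 h') ▸ hw₁F
  have hcard3 : ({u, w₀, w₁} : Finset α).card ≤ 3 := by
    apply le_trans (card_insert_le _ _)
    have : ({w₀, w₁} : Finset α).card ≤ 2 := le_trans (card_insert_le _ _) (by simp)
    omega
  have hz₂ex : 0 < (F \ {u, w₀, w₁}).card := by
    rw [card_sdiff_of_subset huw01sub, hFc]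
    omega
  obtain ⟨z₂, hz₂⟩ := card_pos.1 hz₂ex
  have hz₂F : z₂ ∈ F := (mem_sdiff.1 hz₂).1
  have hz₂u : z₂ ≠ u := fun h => (mem_sdiff.1 hz₂).2 (by rw [h]; exact mem_insert_self u _)
  have hz₂w₀ : z₂ ≠ w₀ := fun h => (mem_sdiff.1 hz₂).2
    (by rw [h]; exact mem_insert.2 (Or.inr (mem_insert_self w₀ {w₁})))
  have hz₂w₁ : z₂ ≠ w₁ := fun h => (mem_sdiff.1 hz₂).2
    (by rw [h]; exact mem_insert.2 (Or.inr (mem_insert.2 (Or.inr (mem_singleton_self w₁)))))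
  have hz₂Fu : z₂ ∈ F \ {u} := mem_sdiff.2 ⟨hz₂F, fun h => hz₂u (mem_singleton.1 h)⟩
  -- both G₀ and G₁ lie in the filter at z₂
  have hG₀in : G₀ ∈ (𝒜.filter (fun H => H ∩ H1 = {v})).filter
      fun G => ¬ Disjoint G (F \ {u, z₂}) := by
    refine mem_filter.2 ⟨mem_filter.2 ⟨hG₀A, hG₀int⟩, ?_⟩
    apply Finset.not_disjoint_iff.2
    refine ⟨w₀, hw₀G₀, mem_sdiff.2 ⟨hw₀F, ?_⟩⟩
    intro h
    rcases mem_insert.1 h with h' | h'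
    · exact hw₀u h'
    · exact hz₂w₀ ((mem_singleton.1 h').symm)
  have hG₁in : G₁ ∈ (𝒜.filter (fun H => H ∩ H1 = {v})).filter
      fun G => ¬ Disjoint G (F \ {u, z₂}) := by
    refine mem_filter.2 ⟨mem_filter.2 ⟨hG₁A, hG₁int⟩, ?_⟩
    apply Finset.not_disjoint_iff.2
    refine ⟨w₁, hw₁G₁, mem_sdiff.2 ⟨hw₁F, ?_⟩⟩
    intro h
    rcases mem_insert.1 h with h' | h'
    · exact hw₁u h'
    · exact hz₂w₁ ((mem_singleton.1 h').symm)
  have hpairsub : ({G₁, G₀} : Finset (Finset α)) ⊆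
      (𝒜.filter (fun H => H ∩ H1 = {v})).filter
        fun G => ¬ Disjoint G (F \ {u, z₂}) := by
    intro G hG
    rcases mem_insert.1 hG with h | h
    · exact h ▸ hG₁in
    · exact (mem_singleton.1 h) ▸ hG₀in
  have h2le : 2 ≤ ((𝒜.filter (fun H => H ∩ H1 = {v})).filter
      fun G => ¬ Disjoint G (F \ {u, z₂})).card := by
    calc 2 = ({G₁, G₀} : Finset (Finset α)).card := (card_pair hG₁G₀).symm
    _ ≤ _ := card_le_card hpairsub
  have h1eq := key z₂ hz₂Fu
  omega
end

section
/- Let X be a deck of n = a+b+c cards (a,b,c ≥ 1) with a ≥ c+2, and let 𝒜 be a nonempty announcement that is informative for Bob and satisfies the perfect (a−c−1)-security condition. Then c = 1. -/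
open Finset

/-- Theorem: if `a ≥ c + 2` and a nonempty announcement is informative for Bob
and perfectly `(a-c-1)`-secure against Cathy, then `c = 1`. -/
theorem stmt_11 {α : Type*} [DecidableEq α] (X : Finset α) (a b c : ℕ)
    (ha : 1 ≤ a) (hb : 1 ≤ b) (hc : 1 ≤ c) (hac : c + 2 ≤ a)
    (hX : X.card = a + b + c)
    (𝒜 : Finset (Finset α))
    (hhands : ∀ H ∈ 𝒜, H ⊆ X ∧ H.card = a)
    (hne : 𝒜.Nonempty)
    (hinf : ∀ HB ⊆ X, HB.card = b →
      ∀ H ∈ 𝒜, ∀ H' ∈ 𝒜, Disjoint H HB → Disjoint H' HB → H = H')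
    (hsec : ∀ HC ⊆ X, HC.card = c →
      (𝒜.filter fun H => Disjoint H HC).Nonempty →
      ∀ Y ⊆ X \ HC, Y.Nonempty → Y.card ≤ a - c - 1 →
        (a + b).choose Y.card *
            (((𝒜.filter fun H => Disjoint H HC)).filter fun H => Y ⊆ H).card =
          a.choose Y.card * (𝒜.filter fun H => Disjoint H HC).card) :
    c = 1 := by
  by_contra hc1
  have hc2 : 2 ≤ c := by omega
  set δ : ℕ := a - c - 1 with hδdef
  have hδ1 : 1 ≤ δ := by omega
  have hδa : δ + c + 1 = a := by omega
  set f : Finset α → ℕ := fun C => (𝒜.filter fun H => Disjoint H C).card with hf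
  -- Step 1: distinct hands intersect in at most δ cards
  have hinter : ∀ H ∈ 𝒜, ∀ H' ∈ 𝒜, H ≠ H' → (H ∩ H').card ≤ δ := by
    intro H hH H' hH' hne'
    by_contra hbig
    push_neg at hbig
    obtain ⟨hHX, hHa⟩ := hhands H hH
    obtain ⟨hH'X, hH'a⟩ := hhands H' hH'
    have hUX : H ∪ H' ⊆ X := union_subset hHX hH'X
    have hcardU : (H ∪ H').card + (H ∩ H').card = a + a := by
      rw [card_union_add_card_inter, hHa, hH'a]
    have hUle : (H ∪ H').card ≤ X.card := card_le_card hUX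
    have hXU : b ≤ (X \ (H ∪ H')).card := by
      rw [card_sdiff_of_subset hUX, hX]; omega
    obtain ⟨HB, hHBsub, hHBcard⟩ := exists_subset_card_eq hXU
    have hHBX : HB ⊆ X := hHBsub.trans (sdiff_subset)
    have hdisj : Disjoint (H ∪ H') HB := by
      have := (subset_sdiff.mp hHBsub).2
      exact this.symm
    exact hne' (hinf HB hHBX hHBcard H hH H' hH'
      (hdisj.mono_left subset_union_left) (hdisj.mono_left subset_union_right))
  -- Step 2: one-point extension formula for f
  have hstep : ∀ C ⊆ X, C.card = c → f C ≠ 0 → ∀ x ∈ X, x ∉ C →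
      b * f C = (a + b) * f (insert x C) ∧ f (insert x C) ≠ 0 := by
    intro C hCX hCc hfC x hxX hxC
    have hA : (𝒜.filter fun H => Disjoint H C).Nonempty := by
      rw [← card_pos]; exact Nat.pos_of_ne_zero hfC
    have hx : ({x} : Finset α) ⊆ X \ C := by
      simp [subset_sdiff, hxX, hxC]
    have hs := hsec C hCX hCc hA {x} hx (singleton_nonempty x) (by simp; omega)
    rw [card_singleton, Nat.choose_one_right, Nat.choose_one_right] at hs
    have hsplit : ((𝒜.filter fun H => Disjoint H C).filter fun H => ({x} : Finset α) ⊆ H).card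
        + f (insert x C) = f C := by
      have hrw : ((𝒜.filter fun H => Disjoint H C).filter fun H => ¬ (({x} : Finset α) ⊆ H))
          = 𝒜.filter fun H => Disjoint H (insert x C) := by
        rw [filter_filter]
        apply filter_congr
        intro H _
        simp [disjoint_insert_right, and_comm]
      calc ((𝒜.filter fun H => Disjoint H C).filter fun H => ({x} : Finset α) ⊆ H).card
            + f (insert x C)
          = ((𝒜.filter fun H => Disjoint H C).filter fun H => ({x} : Finset α) ⊆ H).card
            + ((𝒜.filter fun H => Disjoint H C).filter fun H => ¬ (({x} : Finset α) ⊆ H)).card := by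
            rw [hrw]
        _ = f C := card_filter_add_card_filter_not _
    have hmain : b * f C = (a + b) * f (insert x C) := by
      have h2 : a * f C + b * f C = a * f C + (a + b) * f (insert x C) := by
        calc a * f C + b * f C = (a + b) * f C := (Nat.add_mul a b _).symm
          _ = (a + b) * (((𝒜.filter fun H => Disjoint H C).filter
                fun H => ({x} : Finset α) ⊆ H).card + f (insert x C)) := by rw [hsplit]
          _ = (a + b) * ((𝒜.filter fun H => Disjoint H C).filter
                fun H => ({x} : Finset α) ⊆ H).card + (a + b) * f (insert x C) :=
              Nat.mul_add _ _ _
          _ = a * f C + (a + b) * f (insert x C) := by rw [hs]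
      exact Nat.add_left_cancel h2
    refine ⟨hmain, fun h0 => ?_⟩
    rw [h0, Nat.mul_zero] at hmain
    rcases Nat.mul_eq_zero.mp hmain with h | h
    · omega
    · exact hfC h
  -- Step 3: swapping one element of C preserves f
  have hswap : ∀ C ⊆ X, C.card = c → f C ≠ 0 → ∀ x ∈ X, x ∉ C → ∀ y ∈ C,
      f (insert x (C.erase y)) = f C ∧ f (insert x (C.erase y)) ≠ 0 := by
    intro C hCX hCc hfC x hxX hxC y hyC
    set C' := insert x (C.erase y) with hC'
    have hC'X : C' ⊆ X := by
      rw [hC']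
      exact insert_subset hxX ((erase_subset y C).trans hCX)
    have hC'c : C'.card = c := by
      rw [hC', card_insert_of_notMem (fun h => hxC (mem_of_mem_erase h)),
        card_erase_of_mem hyC, hCc]
      omega
    have hyx : y ≠ x := fun h => hxC (h ▸ hyC)
    have hyC' : y ∉ C' := by
      rw [hC']
      simp [hyx, notMem_erase]
    have heq : insert y C' = insert x C := by
      rw [hC']
      ext t
      simp only [mem_insert, mem_erase]
      constructor
      · rintro (rfl | rfl | ⟨-, htC⟩)
        · exact Or.inr hyC
        · exact Or.inl rfl
        · exact Or.inr htC
      · rintro (rfl | htC)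
        · exact Or.inr (Or.inl rfl)
        · by_cases hty : t = y
          · exact Or.inl hty
          · exact Or.inr (Or.inr ⟨hty, htC⟩)
    obtain ⟨h1, h1ne⟩ := hstep C hCX hCc hfC x hxX hxC
    have hfC'ne : f C' ≠ 0 := by
      intro h0
      apply h1ne
      have hsub : (𝒜.filter fun H => Disjoint H (insert y C'))
          ⊆ 𝒜.filter fun H => Disjoint H C' := fun H hH =>
        mem_filter.mpr ⟨(mem_filter.mp hH).1,
          Disjoint.mono_right (subset_insert _ _) (mem_filter.mp hH).2⟩
      have := card_le_card hsub
      rw [heq] at this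
      simp only [hf] at h0 ⊢
      omega
    obtain ⟨h2, _⟩ := hstep C' hC'X hC'c hfC'ne y (hCX hyC) hyC'
    rw [heq] at h2
    have : b * f C' = b * f C := by omega
    exact ⟨Nat.eq_of_mul_eq_mul_left hb this, hfC'ne⟩
  -- Step 4: f is constant on c-subsets of X
  obtain ⟨H₀, hH₀⟩ := hne
  obtain ⟨hH₀X, hH₀a⟩ := hhands H₀ hH₀
  have hXH₀ : (X \ H₀).card = b + c := by
    rw [card_sdiff_of_subset hH₀X, hX, hH₀a]; omega
  obtain ⟨C₀, hC₀sub, hC₀c⟩ := exists_subset_card_eq (show c ≤ (X \ H₀).card by omega)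
  have hC₀X : C₀ ⊆ X := hC₀sub.trans sdiff_subset
  have hfC₀ : f C₀ ≠ 0 := by
    have hd : Disjoint H₀ C₀ := ((subset_sdiff.mp hC₀sub).2).symm
    have : H₀ ∈ 𝒜.filter fun H => Disjoint H C₀ := mem_filter.mpr ⟨hH₀, hd⟩
    simp only [hf]
    exact card_ne_zero_of_mem this
  set m : ℕ := f C₀ with hm
  have hconst : ∀ n : ℕ, ∀ C' : Finset α, C' ⊆ X → C'.card = c →
      ∀ C : Finset α, C ⊆ X → C.card = c → (C' \ C).card = n → f C ≠ 0 →
      f C' = f C := by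
    intro n
    induction n with
    | zero =>
      intro C' hC'X hC'c C hCX hCc hdiff hfC
      have hsub : C' ⊆ C := by
        rw [← sdiff_eq_empty_iff_subset]
        exact card_eq_zero.mp hdiff
      have : C' = C := eq_of_subset_of_card_le hsub (by omega)
      rw [this]
    | succ n ih =>
      intro C' hC'X hC'c C hCX hCc hdiff hfC
      have hne1 : (C' \ C).Nonempty := by
        rw [← card_pos, hdiff]; omega
      obtain ⟨x, hx⟩ := hne1
      have hxC' : x ∈ C' := (mem_sdiff.mp hx).1
      have hxC : x ∉ C := (mem_sdiff.mp hx).2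
      have hne2 : (C \ C').Nonempty := by
        by_contra h
        rw [not_nonempty_iff_eq_empty, sdiff_eq_empty_iff_subset] at h
        have : C = C' := eq_of_subset_of_card_le h (by omega)
        rw [← this] at hdiff
        simp at hdiff
      obtain ⟨y, hy⟩ := hne2
      have hyC : y ∈ C := (mem_sdiff.mp hy).1
      have hyC' : y ∉ C' := (mem_sdiff.mp hy).2
      obtain ⟨hswapeq, hswapne⟩ := hswap C hCX hCc hfC x (hC'X hxC') hxC y hyC
      set C'' := insert x (C.erase y) with hC''
      have hC''X : C'' ⊆ X := insert_subset (hC'X hxC') ((erase_subset y C).trans hCX)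
      have hC''c : C''.card = c := by
        rw [hC'', card_insert_of_notMem (fun h => hxC (mem_of_mem_erase h)),
          card_erase_of_mem hyC, hCc]
        omega
      have hdiff' : (C' \ C'').card = n := by
        have heq2 : C' \ C'' = (C' \ C).erase x := by
          ext t
          simp only [hC'', mem_sdiff, mem_erase, mem_insert, not_or, not_and]
          constructor
          · rintro ⟨htC', htx, hte⟩
            exact ⟨htx, htC', hte (fun hty => hyC' (hty ▸ htC'))⟩
          · rintro ⟨htx, htC', htC⟩
            exact ⟨htC', htx, fun _ => htC⟩
        rw [heq2, card_erase_of_mem hx, hdiff]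
        omega
      rw [ih C' hC'X hC'c C'' hC''X hC''c hdiff' hswapne, hswapeq]
  have hfall : ∀ C : Finset α, C ⊆ X → C.card = c → f C = m := by
    intro C hCX hCc
    exact hconst (C \ C₀).card C hCX hCc C₀ hC₀X hC₀c rfl hfC₀
  -- Step 5: the counting lemma for δ-sets
  have hmpos : 0 < m := Nat.pos_of_ne_zero hfC₀
  have hkey : ∀ C ⊆ X, C.card = c → ∀ Y ⊆ X, Disjoint Y C → Y.card = δ →
      (a + b).choose δ * ((𝒜.filter fun H => Disjoint H C).filter fun H => Y ⊆ H).card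
        = a.choose δ * m := by
    intro C hCX hCc Y hYX hYd hYc
    have hfC : f C = m := hfall C hCX hCc
    have hA : (𝒜.filter fun H => Disjoint H C).Nonempty := by
      rw [← card_pos]
      have : f C ≠ 0 := by omega
      exact Nat.pos_of_ne_zero this
    have hs := hsec C hCX hCc hA Y (subset_sdiff.mpr ⟨hYX, hYd⟩)
      (by rw [← card_pos, hYc]; omega) (by omega)
    rw [hYc] at hs
    rw [hs]
    simp only [hf] at hfC
    rw [hfC]
  -- Step 6: build the contradiction
  obtain ⟨Y, hYH₀, hYc⟩ := exists_subset_card_eq (show δ ≤ H₀.card by rw [hH₀a]; omega)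
  have hYX : Y ⊆ X := hYH₀.trans hH₀X
  have hR₀c : (H₀ \ Y).card = c + 1 := by
    rw [card_sdiff_of_subset hYH₀, hH₀a, hYc]; omega
  obtain ⟨Ca, hCaR₀, hCac⟩ := exists_subset_card_eq (show c ≤ (H₀ \ Y).card by omega)
  have hCaX : Ca ⊆ X := hCaR₀.trans (sdiff_subset.trans hH₀X)
  have hYCa : Disjoint Y Ca := by
    rw [disjoint_right]
    intro t htCa htY
    exact (mem_sdiff.mp (hCaR₀ htCa)).2 htY
  -- intersections-with-H₀ are exactly Y
  have hinterY : ∀ H ∈ 𝒜, ∀ H' ∈ 𝒜, H ≠ H' → Y ⊆ H → Y ⊆ H' → H ∩ H' = Y := by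
    intro H hH H' hH' hne' hYH hYH'
    have h1 : Y ⊆ H ∩ H' := subset_inter hYH hYH'
    have h2 : (H ∩ H').card ≤ Y.card := by rw [hYc]; exact hinter H hH H' hH' hne'
    exact (eq_of_subset_of_card_le h1 h2).symm
  set Λ := 𝒜.filter fun H => Y ⊆ H with hΛ
  have heqA : ((𝒜.filter fun H => Disjoint H Ca).filter fun H => Y ⊆ H) = Λ.erase H₀ := by
    ext H
    simp only [hΛ, mem_filter, mem_erase]
    constructor
    · rintro ⟨⟨hH, hd⟩, hYH⟩
      refine ⟨fun h => ?_, hH, hYH⟩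
      subst h
      obtain ⟨r, hr⟩ := card_pos.mp (show 0 < Ca.card by omega)
      exact (disjoint_left.mp hd (mem_sdiff.mp (hCaR₀ hr)).1) hr
    · rintro ⟨hne', hH, hYH⟩
      refine ⟨⟨hH, ?_⟩, hYH⟩
      rw [disjoint_right]
      intro t htCa htH
      have ht₀ := mem_sdiff.mp (hCaR₀ htCa)
      have : H ∩ H₀ = Y := hinterY H hH H₀ hH₀ hne' hYH hYH₀
      exact ht₀.2 (this ▸ mem_inter.mpr ⟨htH, ht₀.1⟩)
  have hA1 := hkey Ca hCaX hCac Y hYX hYCa hYc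
  rw [heqA] at hA1
  have hchooseA : 0 < a.choose δ := Nat.choose_pos (by omega)
  have hchooseN : 0 < (a + b).choose δ := Nat.choose_pos (by omega)
  have hcardA : (Λ.erase H₀).card ≠ 0 := by
    intro h0
    rw [h0, Nat.mul_zero] at hA1
    rcases Nat.mul_eq_zero.mp hA1.symm with h | h
    · omega
    · omega
  obtain ⟨H₁, hH₁e⟩ := card_pos.mp (Nat.pos_of_ne_zero hcardA)
  have hH₁ne : H₁ ≠ H₀ := (mem_erase.mp hH₁e).1
  have hH₁Λ := (mem_erase.mp hH₁e).2
  have hH₁ : H₁ ∈ 𝒜 := (mem_filter.mp hH₁Λ).1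
  have hYH₁ : Y ⊆ H₁ := (mem_filter.mp hH₁Λ).2
  obtain ⟨hH₁X, hH₁a⟩ := hhands H₁ hH₁
  have hH₁₀ : H₁ ∩ H₀ = Y := hinterY H₁ hH₁ H₀ hH₀ hH₁ne hYH₁ hYH₀
  have hR₁c : (H₁ \ Y).card = c + 1 := by
    rw [card_sdiff_of_subset hYH₁, hH₁a, hYc]; omega
  obtain ⟨C'', hC''R₁, hC''c⟩ := exists_subset_card_eq (show c - 1 ≤ (H₁ \ Y).card by omega)
  obtain ⟨r, hr⟩ := card_pos.mp (show 0 < Ca.card by omega)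
  have hrR₀ : r ∈ H₀ \ Y := hCaR₀ hr
  have hrH₀ : r ∈ H₀ := (mem_sdiff.mp hrR₀).1
  have hrY : r ∉ Y := (mem_sdiff.mp hrR₀).2
  have hrC'' : r ∉ C'' := by
    intro h
    have := mem_sdiff.mp (hC''R₁ h)
    exact hrY (hH₁₀ ▸ mem_inter.mpr ⟨this.1, hrH₀⟩)
  set Cb := insert r C'' with hCb
  have hCbc : Cb.card = c := by
    rw [hCb, card_insert_of_notMem hrC'', hC''c]; omega
  have hCbX : Cb ⊆ X := insert_subset (hH₀X hrH₀) (hC''R₁.trans (sdiff_subset.trans hH₁X))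
  have hYCb : Disjoint Y Cb := by
    rw [hCb, disjoint_insert_right]
    refine ⟨hrY, disjoint_right.mpr fun t ht => (mem_sdiff.mp (hC''R₁ ht)).2⟩
  have heqB : ((𝒜.filter fun H => Disjoint H Cb).filter fun H => Y ⊆ H)
      = (Λ.erase H₀).erase H₁ := by
    ext H
    simp only [hΛ, mem_filter, mem_erase]
    constructor
    · rintro ⟨⟨hH, hd⟩, hYH⟩
      refine ⟨fun h => ?_, fun h => ?_, hH, hYH⟩
      · subst h
        obtain ⟨t, ht⟩ := card_pos.mp (show 0 < C''.card by omega)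
        exact (disjoint_left.mp hd (mem_sdiff.mp (hC''R₁ ht)).1)
          (mem_insert_of_mem ht)
      · subst h
        exact (disjoint_left.mp hd hrH₀) (mem_insert_self r C'')
    · rintro ⟨hne1, hne0, hH, hYH⟩
      refine ⟨⟨hH, ?_⟩, hYH⟩
      have hint0 : H ∩ H₀ = Y := hinterY H hH H₀ hH₀ hne0 hYH hYH₀
      have hint1 : H ∩ H₁ = Y := hinterY H hH H₁ hH₁ hne1 hYH hYH₁
      rw [hCb, disjoint_insert_right]
      constructor
      · intro hrH
        exact hrY (hint0 ▸ mem_inter.mpr ⟨hrH, hrH₀⟩)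
      · rw [disjoint_right]
        intro t htC'' htH
        have := mem_sdiff.mp (hC''R₁ htC'')
        exact this.2 (hint1 ▸ mem_inter.mpr ⟨htH, this.1⟩)
  have hA2 := hkey Cb hCbX hCbc Y hYX hYCb hYc
  rw [heqB] at hA2
  have hcards : ((Λ.erase H₀).erase H₁).card = (Λ.erase H₀).card - 1 :=
    card_erase_of_mem hH₁e
  have : (a + b).choose δ * ((Λ.erase H₀).card - 1) = (a + b).choose δ * (Λ.erase H₀).card := by
    rw [← hcards, hA2, hA1]
  have := Nat.eq_of_mul_eq_mul_left hchooseN this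
  omega
end

section
/- Let X be a deck of n = a+b+1 cards (a ≥ 3, b ≥ 1, c = 1), and let 𝒜 be a nonempty announcement that is informative for Bob and satisfies the perfect (a−2)-security condition. Then 𝒜 is a Steiner system S(a−1,a,n): every (a−1)-element subset of X is contained in exactly one hand of 𝒜. -/
open Finset

/-- Corollary: for a deal with `c = 1` and `a ≥ 3`, a nonempty announcement that
is informative for Bob and perfectly `(a-2)`-secure against Cathy is a Steiner
system `S(a-1, a, n)`: every `(a-1)`-subset of the deck lies in exactly one hand. -/
theorem stmt_12 {α : Type*} [DecidableEq α] (X : Finset α) (a b : ℕ)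
    (ha : 3 ≤ a) (hb : 1 ≤ b)
    (hX : X.card = a + b + 1)
    (𝒜 : Finset (Finset α))
    (hhands : ∀ H ∈ 𝒜, H ⊆ X ∧ H.card = a)
    (hne : 𝒜.Nonempty)
    (hinf : ∀ HB ⊆ X, HB.card = b →
      ∀ H ∈ 𝒜, ∀ H' ∈ 𝒜, Disjoint H HB → Disjoint H' HB → H = H')
    (hsec : ∀ HC ⊆ X, HC.card = 1 →
      (𝒜.filter fun H => Disjoint H HC).Nonempty →
      ∀ Y ⊆ X \ HC, Y.Nonempty → Y.card ≤ a - 2 →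
        (a + b).choose Y.card *
            (((𝒜.filter fun H => Disjoint H HC)).filter fun H => Y ⊆ H).card =
          a.choose Y.card * (𝒜.filter fun H => Disjoint H HC).card) :
    ∀ S ⊆ X, S.card = a - 1 → (𝒜.filter fun H => S ⊆ H).card = 1 := by
  classical
  -- Uniqueness: two hands sharing at least a-1 cards are equal.
  have huniq : ∀ H ∈ 𝒜, ∀ H' ∈ 𝒜, a - 1 ≤ (H ∩ H').card → H = H' := by
    intro H hH H' hH' hcap
    obtain ⟨hHX, hHa⟩ := hhands H hH
    obtain ⟨hH'X, hH'a⟩ := hhands H' hH'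
    have hu : (H ∪ H').card + (H ∩ H').card = a + a := by
      rw [card_union_add_card_inter, hHa, hH'a]
    have hUX : H ∪ H' ⊆ X := union_subset hHX hH'X
    have hK : (X \ (H ∪ H')).card = X.card - (H ∪ H').card := card_sdiff_of_subset hUX
    have hb' : b ≤ (X \ (H ∪ H')).card := by omega
    obtain ⟨HB, hBsub, hBcard⟩ := exists_subset_card_eq hb'
    have hBX : HB ⊆ X := hBsub.trans sdiff_subset
    have hd1 : Disjoint H HB := by
      rw [disjoint_right]
      intro x hx hxH
      have h := hBsub hx
      rw [mem_sdiff] at h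
      exact h.2 (mem_union_left _ hxH)
    have hd2 : Disjoint H' HB := by
      rw [disjoint_right]
      intro x hx hxH
      have h := hBsub hx
      rw [mem_sdiff] at h
      exact h.2 (mem_union_right _ hxH)
    exact hinf HB hBX hBcard H hH H' hH' hd1 hd2
  -- filter conversion
  have hconv : ∀ x : α, (𝒜.filter fun H => Disjoint H {x}) = 𝒜.filter fun H => x ∉ H := by
    intro x
    apply filter_congr
    intro H _
    simp [disjoint_singleton_right]
  -- restated security condition
  have hsec' : ∀ x ∈ X, (𝒜.filter fun H => x ∉ H).Nonempty →
      ∀ Y ⊆ X, x ∉ Y → Y.Nonempty → Y.card ≤ a - 2 →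
      (a + b).choose Y.card * (𝒜.filter fun H => x ∉ H ∧ Y ⊆ H).card
        = a.choose Y.card * (𝒜.filter fun H => x ∉ H).card := by
    intro x hx hnx Y hY hxY hYne hYc
    have h3 : Y ⊆ X \ {x} := by
      intro y hy
      rw [mem_sdiff, mem_singleton]
      exact ⟨hY hy, fun h => hxY (h ▸ hy)⟩
    have h := hsec {x} (singleton_subset_iff.2 hx) (card_singleton x)
      (by rw [hconv x]; exact hnx) Y h3 hYne hYc
    rw [hconv x, filter_filter] at h
    exact h
  -- every card in X has a hand avoiding it
  have hP : ∀ x ∈ X, (𝒜.filter fun H => x ∉ H).Nonempty := by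
    intro x hx
    obtain ⟨H0, hH0⟩ := hne
    by_cases hxH0 : x ∈ H0
    · obtain ⟨hH0X, hH0a⟩ := hhands H0 hH0
      have hcs : (X \ H0).card = X.card - H0.card := card_sdiff_of_subset hH0X
      have hyne : (X \ H0).Nonempty := by rw [← card_pos]; omega
      obtain ⟨y, hy'⟩ := hyne
      rw [mem_sdiff] at hy'
      obtain ⟨hyX, hyH0⟩ := hy'
      have hNy : (𝒜.filter fun H => y ∉ H).Nonempty := ⟨H0, mem_filter.2 ⟨hH0, hyH0⟩⟩
      have hyx : y ∉ ({x} : Finset α) := by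
        rw [mem_singleton]
        rintro rfl
        exact hyH0 hxH0
      have hs := hsec' y hyX hNy {x} (singleton_subset_iff.2 hx) hyx
        (singleton_nonempty x) (by rw [card_singleton]; omega)
      rw [card_singleton, Nat.choose_one_right, Nat.choose_one_right] at hs
      set P := 𝒜.filter fun H => y ∉ H with hPdef
      set k := (𝒜.filter fun H => y ∉ H ∧ ({x} : Finset α) ⊆ H).card with hkdef
      have hP0 : 0 < P.card := card_pos.2 hNy
      have hklt : k < P.card := by
        by_contra hle
        push_neg at hle
        have h1 : (a + b) * P.card ≤ (a + b) * k := Nat.mul_le_mul_left _ hle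
        rw [hs] at h1
        have h4 : a * P.card + b * P.card = (a + b) * P.card := (add_mul a b _).symm
        have h5 : 0 < b * P.card := Nat.mul_pos (by omega) hP0
        linarith
      have hex : ∃ H ∈ P, x ∉ H := by
        by_contra hc
        push_neg at hc
        have heq : P.filter (fun H => ({x} : Finset α) ⊆ H) = P :=
          filter_true_of_mem (by intro H hH; simpa using hc H hH)
        have hkeq : k = P.card := by
          rw [hkdef, hPdef, ← filter_filter, heq]
        omega
      obtain ⟨H, hHP, hHx⟩ := hex
      exact ⟨H, mem_filter.2 ⟨(mem_filter.1 hHP).1, hHx⟩⟩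
    · exact ⟨H0, mem_filter.2 ⟨hH0, hxH0⟩⟩
  -- the number of hands avoiding x is independent of x ∈ X
  have hNconst : ∀ x ∈ X, ∀ z ∈ X,
      (𝒜.filter fun H => x ∉ H).card = (𝒜.filter fun H => z ∉ H).card := by
    intro x hx z hz
    by_cases hxz : x = z
    · rw [hxz]
    have hzx : z ≠ x := fun h => hxz h.symm
    -- security both ways
    have h1 := hsec' x hx (hP x hx) {z} (singleton_subset_iff.2 hz)
      (by rw [mem_singleton]; exact hxz) (singleton_nonempty z)
      (by rw [card_singleton]; omega)
    have h2 := hsec' z hz (hP z hz) {x} (singleton_subset_iff.2 hx)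
      (by rw [mem_singleton]; exact hzx) (singleton_nonempty x)
      (by rw [card_singleton]; omega)
    rw [card_singleton, Nat.choose_one_right, Nat.choose_one_right] at h1 h2
    have hq1 : (𝒜.filter fun H => x ∉ H ∧ ({z} : Finset α) ⊆ H)
        = 𝒜.filter fun H => x ∉ H ∧ z ∈ H := by
      apply filter_congr; intro H _; simp
    have hq2 : (𝒜.filter fun H => z ∉ H ∧ ({x} : Finset α) ⊆ H)
        = 𝒜.filter fun H => z ∉ H ∧ x ∈ H := by
      apply filter_congr; intro H _; simp
    rw [hq1] at h1
    rw [hq2] at h2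
    set dx := (𝒜.filter fun H => x ∈ H).card with hdx
    set dz := (𝒜.filter fun H => z ∈ H).card with hdz
    set Nx := (𝒜.filter fun H => x ∉ H).card with hNx
    set Nz := (𝒜.filter fun H => z ∉ H).card with hNz
    set e := (𝒜.filter fun H => z ∈ H ∧ x ∈ H).card with he
    set qxz := (𝒜.filter fun H => x ∉ H ∧ z ∈ H).card with hqxz
    set qzx := (𝒜.filter fun H => z ∉ H ∧ x ∈ H).card with hqzx
    -- splits
    have hA1 : dx + Nx = 𝒜.card := card_filter_add_card_filter_not (p := fun H => x ∈ H)
    have hA2 : dz + Nz = 𝒜.card := card_filter_add_card_filter_not (p := fun H => z ∈ H)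
    have hsplit1 : dz = e + qxz := by
      have h := card_filter_add_card_filter_not
        (s := 𝒜.filter fun H => z ∈ H) (p := fun H => x ∈ H)
      rw [filter_filter, filter_filter] at h
      have hcm : (𝒜.filter fun H => z ∈ H ∧ x ∉ H) = 𝒜.filter fun H => x ∉ H ∧ z ∈ H := by
        apply filter_congr; intro H _; exact and_comm
      rw [hcm] at h
      omega
    have hsplit2 : dx = e + qzx := by
      have h := card_filter_add_card_filter_not
        (s := 𝒜.filter fun H => x ∈ H) (p := fun H => z ∈ H)
      rw [filter_filter, filter_filter] at h
      have hcm1 : (𝒜.filter fun H => x ∈ H ∧ z ∈ H) = 𝒜.filter fun H => z ∈ H ∧ x ∈ H := by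
        apply filter_congr; intro H _; exact and_comm
      have hcm2 : (𝒜.filter fun H => x ∈ H ∧ z ∉ H) = 𝒜.filter fun H => z ∉ H ∧ x ∈ H := by
        apply filter_congr; intro H _; exact and_comm
      rw [hcm1, hcm2] at h
      omega
    -- combine
    have k1 : (a + b) * dz = (a + b) * e + a * Nx := by
      rw [hsplit1, Nat.mul_add, h1]
    have k2 : (a + b) * dx = (a + b) * e + a * Nz := by
      rw [hsplit2, Nat.mul_add, h2]
    have k3 : a * (dx + Nx) = a * (dz + Nz) := by rw [hA1, hA2]
    have key : b * dz = b * dx := by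
      have e1 : a * dz + b * dz = a * e + b * e + a * Nx := by
        rw [← add_mul, ← add_mul]; exact k1
      have e2 : a * dx + b * dx = a * e + b * e + a * Nz := by
        rw [← add_mul, ← add_mul]; exact k2
      have e3 : a * dx + a * Nx = a * dz + a * Nz := by
        rw [← Nat.mul_add, ← Nat.mul_add]; exact k3
      zify at e1 e2 e3 ⊢
      linarith
    have hdxz : dz = dx := Nat.eq_of_mul_eq_mul_left (by omega) key
    omega
  -- main argument
  intro S hS hScard
  have hSne : S.Nonempty := by rw [← card_pos]; omega
  obtain ⟨s, hs⟩ := hSne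
  set Y := S.erase s with hYdef
  have hYcard : Y.card = a - 2 := by
    rw [hYdef, card_erase_of_mem hs, hScard]; omega
  have hYsub : Y ⊆ X := (erase_subset _ _).trans hS
  have hsX : s ∈ X := hS hs
  have hsY : s ∉ Y := notMem_erase s S
  have hYne : Y.Nonempty := by rw [← card_pos, hYcard]; omega
  have hNs := hP s hsX
  have hgs := hsec' s hsX hNs Y hYsub hsY hYne (by omega)
  -- a hand containing Y but not s exists
  have hgspos : 0 < (𝒜.filter fun H => s ∉ H ∧ Y ⊆ H).card := by
    rcases Nat.eq_zero_or_pos (𝒜.filter fun H => s ∉ H ∧ Y ⊆ H).card with h | h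
    · exfalso
      rw [h, Nat.mul_zero] at hgs
      have h1 : 0 < a.choose Y.card := Nat.choose_pos (by omega)
      have h2 : 0 < (𝒜.filter fun H => s ∉ H).card := card_pos.2 hNs
      have := Nat.mul_pos h1 h2
      omega
    · exact h
  obtain ⟨H, hHmem⟩ := card_pos.1 hgspos
  rw [mem_filter] at hHmem
  obtain ⟨hH𝒜, hsH, hYH⟩ := hHmem
  obtain ⟨hHX, hHa⟩ := hhands H hH𝒜
  have hwne : (H \ Y).Nonempty := by
    rw [← card_pos, card_sdiff_of_subset hYH, hHa, hYcard]; omega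
  obtain ⟨w, hw⟩ := hwne
  rw [mem_sdiff] at hw
  obtain ⟨hwH, hwY⟩ := hw
  have hwX : w ∈ X := hHX hwH
  have hNws : (𝒜.filter fun H => w ∉ H).card = (𝒜.filter fun H => s ∉ H).card :=
    hNconst w hwX s hsX
  have hgw := hsec' w hwX (hP w hwX) Y hYsub hwY hYne (by omega)
  have hchpos : 0 < (a + b).choose Y.card := Nat.choose_pos (by omega)
  have hgweq : (𝒜.filter fun H => w ∉ H ∧ Y ⊆ H).card
      = (𝒜.filter fun H => s ∉ H ∧ Y ⊆ H).card := by
    apply Nat.eq_of_mul_eq_mul_left hchpos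
    rw [hgw, hgs, hNws]
  -- splits of the count of hands containing Y
  have hsplit_s : (𝒜.filter fun H => Y ⊆ H).card
      = (𝒜.filter fun H => Y ⊆ H ∧ s ∈ H).card + (𝒜.filter fun H => s ∉ H ∧ Y ⊆ H).card := by
    have h := card_filter_add_card_filter_not
      (s := 𝒜.filter fun H => Y ⊆ H) (p := fun H => s ∈ H)
    rw [filter_filter, filter_filter] at h
    have hcm : (𝒜.filter fun H => Y ⊆ H ∧ s ∉ H) = 𝒜.filter fun H => s ∉ H ∧ Y ⊆ H := by
      apply filter_congr; intro H _; exact and_comm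
    rw [hcm] at h
    omega
  have hsplit_w : (𝒜.filter fun H => Y ⊆ H).card
      = (𝒜.filter fun H => Y ⊆ H ∧ w ∈ H).card + (𝒜.filter fun H => w ∉ H ∧ Y ⊆ H).card := by
    have h := card_filter_add_card_filter_not
      (s := 𝒜.filter fun H => Y ⊆ H) (p := fun H => w ∈ H)
    rw [filter_filter, filter_filter] at h
    have hcm : (𝒜.filter fun H => Y ⊆ H ∧ w ∉ H) = 𝒜.filter fun H => w ∉ H ∧ Y ⊆ H := by
      apply filter_congr; intro H _; exact and_comm
    rw [hcm] at h
    omega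
  have hwpos : 0 < (𝒜.filter fun H => Y ⊆ H ∧ w ∈ H).card :=
    card_pos.2 ⟨H, mem_filter.2 ⟨hH𝒜, hYH, hwH⟩⟩
  -- identify the goal filter with Y ⊆ H ∧ s ∈ H
  have hSY : (𝒜.filter fun H => S ⊆ H) = 𝒜.filter fun H => Y ⊆ H ∧ s ∈ H := by
    apply filter_congr
    intro H _
    rw [hYdef]
    constructor
    · intro hSH
      exact ⟨(erase_subset _ _).trans hSH, hSH hs⟩
    · intro ⟨hYH', hsH'⟩
      intro x hxS
      by_cases hxs : x = s
      · rw [hxs]; exact hsH'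
      · exact hYH' (mem_erase.2 ⟨hxs, hxS⟩)
  have hle : (𝒜.filter fun H => S ⊆ H).card ≤ 1 := by
    apply card_le_one.2
    intro H1 h1 H2 h2
    rw [mem_filter] at h1 h2
    apply huniq H1 h1.1 H2 h2.1
    have : S ⊆ H1 ∩ H2 := subset_inter h1.2 h2.2
    calc a - 1 = S.card := hScard.symm
      _ ≤ (H1 ∩ H2).card := card_le_card this
  have hge : 1 ≤ (𝒜.filter fun H => S ⊆ H).card := by
    rw [hSY]
    omega
  omega
end

section
/- Let X be a deck of n = a+b+c cards (a,b,c ≥ 1), let δ ≥ 1, and let 𝒜 be a nonempty announcement that is informative for Bob and satisfies the perfect δ-security condition. Then δ ≤ a − 2c. -/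
/-!
Informativity forces two distinct hands to share at most `a - c - 1` cards. Security for a
single card gives `(a + b) * |P(C ∪ {z})| = b * |P(C)|`; as `C ∪ {z}` is also `C' ∪ {x}` for the
exchanged set `C' = C - x + z`, the number `|P(C)|` survives exchanges and is the same positive
number for every `c`-set `C`. Fix `δ` cards `Y` of a hand `H₁`. Security for `Y` then says that
the hands through `Y` avoid every `c`-subset of `X \ Y` equally often, i.e. their complements
form a `c`-design, and hence so do the hands themselves. So some hand `H₂ ≠ H₁` contains `Y`,
`c - 1` further cards of `H₁` and one card outside `H₁`, whence `δ + c - 1 ≤ a - c - 1`.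
-/
open Finset

section Design

variable {α : Type*} [DecidableEq α]

/-- The paper's `P(Y, 𝒜)`. -/
def avoiding (𝒜 : Finset (Finset α)) (Y : Finset α) : Finset (Finset α) :=
  {H ∈ 𝒜 | Disjoint H Y}

@[simp]
theorem mem_avoiding {𝒜 : Finset (Finset α)} {Y H : Finset α} :
    H ∈ avoiding 𝒜 Y ↔ H ∈ 𝒜 ∧ Disjoint H Y :=
  mem_filter

@[simp]
theorem avoiding_empty (ℬ : Finset (Finset α)) : avoiding ℬ ∅ = ℬ :=
  filter_true_of_mem fun _ _ => disjoint_empty_right _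

theorem avoiding_subset_avoiding (𝒜 : Finset (Finset α)) {Y Y' : Finset α} (h : Y ⊆ Y') :
    avoiding 𝒜 Y' ⊆ avoiding 𝒜 Y :=
  fun _ hH => mem_avoiding.mpr ⟨(mem_avoiding.mp hH).1, (mem_avoiding.mp hH).2.mono_right h⟩

variable {ℬ : Finset (Finset α)} {V : Finset α} {s c : ℕ}

theorem card_avoiding_eq_add (ℬ : Finset (Finset α)) (U E : Finset α) (u : α) :
    #{H ∈ avoiding ℬ E | U ⊆ H} =
      #{H ∈ avoiding ℬ E | insert u U ⊆ H} + #{H ∈ avoiding ℬ (insert u E) | U ⊆ H} := by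
  rw [← card_filter_add_card_filter_not (fun H => u ∈ H)]
  simp only [avoiding, filter_filter, insert_subset_iff, disjoint_insert_right]
  congr 2 <;> ext H <;> simp only [mem_filter] <;> tauto

theorem card_sdiff_sdiff_of_card_inter {E H : Finset α} (hE : E ⊆ V) (hHE : Disjoint H E)
    (hHV : #(H ∩ V) = s) : #((V \ E) \ H) = #V - #E - s := by
  have hunion : (E ∪ H) ∩ V = E ∪ H ∩ V := by
    rw [union_inter_distrib_right, inter_eq_left.mpr hE]
  rw [show (V \ E) \ H = V \ (E ∪ H) from sdiff_sdiff_left, card_sdiff, hunion,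
    card_union_of_disjoint (hHE.symm.mono_right inter_subset_left), hHV, Nat.sub_sub]

theorem sum_card_avoiding_union (hs : ∀ H ∈ ℬ, #(H ∩ V) = s) {E : Finset α} (hE : E ⊆ V)
    (j : ℕ) :
    ∑ F ∈ (V \ E).powersetCard j, #(avoiding ℬ (E ∪ F)) =
      #(avoiding ℬ E) * (#V - #E - s).choose j := by
  simp only [avoiding, card_filter, sum_mul]
  rw [sum_comm]
  refine sum_congr rfl fun H hH => ?_
  by_cases hHE : Disjoint H E
  · have hpow : {F ∈ (V \ E).powersetCard j | Disjoint H F} = ((V \ E) \ H).powersetCard j := by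
      ext F
      simp only [mem_filter, mem_powersetCard, subset_sdiff, disjoint_comm (a := H)]
      tauto
    simp only [disjoint_union_right, hHE, true_and, if_true, one_mul]
    rw [sum_boole, hpow, card_powersetCard,
      card_sdiff_sdiff_of_card_inter hE hHE (hs H hH), Nat.cast_id]
  · simp [disjoint_union_right, hHE]

theorem card_avoiding_mul_choose {k : ℕ} (hs : ∀ H ∈ ℬ, #(H ∩ V) = s)
    (hk : ∀ C ⊆ V, #C = c → #(avoiding ℬ C) = k) {E : Finset α} (hE : E ⊆ V) (hEc : #E ≤ c) :
    #(avoiding ℬ E) * (#V - #E - s).choose (c - #E) = (#V - #E).choose (c - #E) * k := by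
  rw [← sum_card_avoiding_union hs hE, ← card_sdiff_of_subset hE, ← card_powersetCard,
    ← smul_eq_mul, ← sum_const]
  refine sum_congr rfl fun F hF => hk _ (union_subset hE ?_) ?_
  · exact (mem_powersetCard.mp hF).1.trans sdiff_subset
  · obtain ⟨hFV, hFc⟩ := mem_powersetCard.mp hF
    rw [card_union_of_disjoint (disjoint_of_subset_right hFV disjoint_sdiff), hFc]
    omega

theorem card_avoiding_eq_of_card_eq {k : ℕ} (hs : ∀ H ∈ ℬ, #(H ∩ V) = s) (hcV : s + c ≤ #V)
    (hk : ∀ C ⊆ V, #C = c → #(avoiding ℬ C) = k) {E E' : Finset α} (hE : E ⊆ V) (hE' : E' ⊆ V)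
    (hEE' : #E = #E') (hEc : #E ≤ c) : #(avoiding ℬ E) = #(avoiding ℬ E') := by
  have hpos : 0 < (#V - #E - s).choose (c - #E) := Nat.choose_pos (by omega)
  have h := card_avoiding_mul_choose hs hk hE hEc
  have h' := card_avoiding_mul_choose hs hk hE' (hEE' ▸ hEc)
  rw [← hEE'] at h'
  exact Nat.eq_of_mul_eq_mul_right hpos (h.trans h'.symm)

/-- By `card_avoiding_eq_add`, every count is determined by those with `U = ∅`. -/
theorem card_filter_avoiding_eq_of_card_eq
    (hav : ∀ E ⊆ V, ∀ E' ⊆ V, #E = #E' → #E ≤ c → #(avoiding ℬ E) = #(avoiding ℬ E'))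
    {U E U' E' : Finset α} (hU : U ⊆ V) (hE : E ⊆ V) (hU' : U' ⊆ V) (hE' : E' ⊆ V)
    (hUE : Disjoint U E) (hUE' : Disjoint U' E') (hUU' : #U = #U') (hEE' : #E = #E')
    (hc : #U + #E ≤ c) :
    #{H ∈ avoiding ℬ E | U ⊆ H} = #{H ∈ avoiding ℬ E' | U' ⊆ H} := by
  induction hn : #U generalizing U E U' E' with
  | zero =>
    obtain rfl := card_eq_zero.mp hn
    obtain rfl := card_eq_zero.mp (hUU'.symm.trans hn)
    simp only [empty_subset, filter_true]
    exact hav E hE E' hE' hEE' (by omega)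
  | succ n ih =>
    obtain ⟨u, hu⟩ := card_pos.mp (by omega : 0 < #U)
    obtain ⟨u', hu'⟩ := card_pos.mp (by omega : 0 < #U')
    have split := card_avoiding_eq_add ℬ (U.erase u) E u
    have split' := card_avoiding_eq_add ℬ (U'.erase u') E' u'
    rw [insert_erase hu] at split
    rw [insert_erase hu'] at split'
    have hUu : #(U.erase u) = n := by rw [card_erase_of_mem hu]; omega
    have hUu' : #(U'.erase u') = n := by rw [card_erase_of_mem hu']; omega
    have huE : u ∉ E := disjoint_left.mp hUE hu
    have huE' : u' ∉ E' := disjoint_left.mp hUE' hu'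
    have h₁ := ih ((erase_subset u U).trans hU) hE ((erase_subset u' U').trans hU') hE'
      (hUE.mono_left (erase_subset u U)) (hUE'.mono_left (erase_subset u' U'))
      (hUu.trans hUu'.symm) hEE' (by omega) hUu
    have h₂ := ih ((erase_subset u U).trans hU) (insert_subset (hU hu) hE)
      ((erase_subset u' U').trans hU') (insert_subset (hU' hu') hE')
      (disjoint_insert_right.mpr ⟨notMem_erase u U, hUE.mono_left (erase_subset u U)⟩)
      (disjoint_insert_right.mpr ⟨notMem_erase u' U', hUE'.mono_left (erase_subset u' U')⟩)
      (hUu.trans hUu'.symm) (by rw [card_insert_of_notMem huE, card_insert_of_notMem huE', hEE'])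
      (by rw [card_insert_of_notMem huE]; omega) hUu
    omega

theorem card_filter_superset_eq_of_card_avoiding_eq {k : ℕ} (hs : ∀ H ∈ ℬ, #(H ∩ V) = s)
    (hcV : s + c ≤ #V) (hk : ∀ C ⊆ V, #C = c → #(avoiding ℬ C) = k) {U U' : Finset α}
    (hU : U ⊆ V) (hU' : U' ⊆ V) (hUc : #U = c) (hU'c : #U' = c) :
    #{H ∈ ℬ | U ⊆ H} = #{H ∈ ℬ | U' ⊆ H} := by
  simpa only [avoiding_empty] using card_filter_avoiding_eq_of_card_eq
    (fun E hE E' hE' => card_avoiding_eq_of_card_eq hs hcV hk hE hE')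
    hU (empty_subset V) hU' (empty_subset V) (disjoint_empty_right U) (disjoint_empty_right U')
    (hUc.trans hU'c.symm) rfl (by simp [hUc])

end Design

theorem Finset.induction_on_exchange {α : Type*} [DecidableEq α] {X : Finset α} {n : ℕ}
    {p : Finset α → Prop}
    (hp : ∀ C ⊆ X, #C = n → p C → ∀ x ∈ C, ∀ y ∈ X \ C, p (insert y (C.erase x)))
    {C D : Finset α} (hC : C ⊆ X) (hD : D ⊆ X) (hCn : #C = n) (hDn : #D = n) (hpC : p C) :
    p D := by
  induction hm : #(D \ C) generalizing C with
  | zero =>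
    have hDC : D ⊆ C := sdiff_eq_empty_iff_subset.mp (card_eq_zero.mp hm)
    rwa [eq_of_subset_of_card_le hDC (by omega)]
  | succ m ih =>
    obtain ⟨y, hy⟩ := card_pos.mp (by omega : 0 < #(D \ C))
    obtain ⟨x, hx⟩ := card_pos.mp
      (by rw [card_sdiff_comm (hCn.trans hDn.symm)]; omega : 0 < #(C \ D))
    rw [mem_sdiff] at hx hy
    have hyC : y ∉ C.erase x := fun h => hy.2 (mem_of_mem_erase h)
    have hdiff : D \ insert y (C.erase x) = (D \ C).erase y := by
      ext z
      simp only [mem_sdiff, mem_insert, mem_erase]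
      constructor
      · rintro ⟨hzD, hz⟩
        exact ⟨fun h => hz (Or.inl h), hzD, fun hzC => hz (Or.inr ⟨fun h => hx.2 (h ▸ hzD), hzC⟩)⟩
      · rintro ⟨hzy, hzD, hzC⟩
        exact ⟨hzD, fun h => h.elim hzy fun h => hzC h.2⟩
    refine ih (insert_subset (hD hy.1) ((erase_subset x C).trans hC)) ?_
      (hp C hC hCn hpC x hx.1 y (mem_sdiff.mpr ⟨hD hy.1, hy.2⟩)) ?_
    · rw [card_insert_of_notMem hyC, card_erase_of_mem hx.1]
      have : 0 < #C := card_pos.mpr ⟨x, hx.1⟩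
      omega
    · rw [hdiff, card_erase_of_mem (mem_sdiff.mpr hy), hm, Nat.add_sub_cancel]

section RussianCards

variable {α : Type*} [DecidableEq α] {X : Finset α} {a b c δ : ℕ} {𝒜 : Finset (Finset α)}

def IsInformative (X : Finset α) (b : ℕ) (𝒜 : Finset (Finset α)) : Prop :=
  ∀ HB ⊆ X, #HB = b → ∀ H ∈ 𝒜, ∀ H' ∈ 𝒜, Disjoint H HB → Disjoint H' HB → H = H'

def IsPerfectlySecure (X : Finset α) (a b c δ : ℕ) (𝒜 : Finset (Finset α)) : Prop :=
  ∀ HC ⊆ X, #HC = c → (avoiding 𝒜 HC).Nonempty → ∀ Y ⊆ X \ HC, Y.Nonempty → #Y ≤ δ →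
    (a + b).choose #Y * #{H ∈ avoiding 𝒜 HC | Y ⊆ H} = a.choose #Y * #(avoiding 𝒜 HC)

theorem IsInformative.card_inter_add_lt (hinf : IsInformative X b 𝒜) (hX : #X = a + b + c)
    (hhands : ∀ H ∈ 𝒜, H ⊆ X ∧ #H = a) {H H' : Finset α} (hH : H ∈ 𝒜) (hH' : H' ∈ 𝒜)
    (hne : H ≠ H') : #(H ∩ H') + c < a := by
  by_contra! hle
  obtain ⟨hHX, hHa⟩ := hhands H hH
  obtain ⟨hH'X, hH'a⟩ := hhands H' hH'
  have hunion : #(H ∪ H') + #(H ∩ H') = a + a := by rw [card_union_add_card_inter, hHa, hH'a]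
  obtain ⟨B, hB, hBc⟩ := exists_subset_card_eq (s := X \ (H ∪ H')) (n := b)
    (by rw [card_sdiff_of_subset (union_subset hHX hH'X)]; omega)
  have hdisj : Disjoint (H ∪ H') B := disjoint_sdiff.mono_right hB
  exact hne (hinf B (hB.trans sdiff_subset) hBc H hH H' hH'
    (hdisj.mono_left subset_union_left) (hdisj.mono_left subset_union_right))

namespace IsPerfectlySecure

variable (hsec : IsPerfectlySecure X a b c δ 𝒜)
include hsec

theorem exists_superset {C Y : Finset α} (hC : C ⊆ X) (hCc : #C = c)
    (hP : (avoiding 𝒜 C).Nonempty) (hY : Y ⊆ X \ C) (hYne : Y.Nonempty) (hYδ : #Y ≤ δ)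
    (hYa : #Y ≤ a) : ∃ H ∈ avoiding 𝒜 C, Y ⊆ H := by
  have hpos : 0 < (a + b).choose #Y * #{H ∈ avoiding 𝒜 C | Y ⊆ H} := by
    rw [hsec C hC hCc hP Y hY hYne hYδ]
    exact Nat.mul_pos (Nat.choose_pos hYa) (card_pos.mpr hP)
  obtain ⟨H, hH⟩ := card_pos.mp (Nat.pos_of_mul_pos_left hpos)
  exact ⟨H, (mem_filter.mp hH).1, (mem_filter.mp hH).2⟩

theorem card_avoiding_insert (hδ : 1 ≤ δ) {C : Finset α} {z : α} (hC : C ⊆ X) (hCc : #C = c)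
    (hP : (avoiding 𝒜 C).Nonempty) (hz : z ∈ X \ C) :
    (a + b) * #(avoiding 𝒜 (insert z C)) = b * #(avoiding 𝒜 C) := by
  have hmem := hsec C hC hCc hP {z} (singleton_subset_iff.mpr hz) (singleton_nonempty z)
    (by rwa [card_singleton])
  have hsplit : #(avoiding 𝒜 C) =
      #{H ∈ avoiding 𝒜 C | {z} ⊆ H} + #(avoiding 𝒜 (insert z C)) := by
    simpa using card_avoiding_eq_add 𝒜 ∅ C z
  rw [card_singleton, Nat.choose_one_right, Nat.choose_one_right, hsplit] at hmem
  rw [hsplit]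
  linarith

theorem card_avoiding_exchange (hb : 1 ≤ b) (hδ : 1 ≤ δ) {C : Finset α} {x y : α}
    (hC : C ⊆ X) (hCc : #C = c) (hP : (avoiding 𝒜 C).Nonempty) (hx : x ∈ C) (hy : y ∈ X \ C) :
    (avoiding 𝒜 (insert y (C.erase x))).Nonempty ∧
      #(avoiding 𝒜 (insert y (C.erase x))) = #(avoiding 𝒜 C) := by
  rw [mem_sdiff] at hy
  have hyC : y ∉ C.erase x := fun h => hy.2 (mem_of_mem_erase h)
  have hC' : insert y (C.erase x) ⊆ X := insert_subset hy.1 ((erase_subset x C).trans hC)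
  have hC'c : #(insert y (C.erase x)) = c := by
    rw [card_insert_of_notMem hyC, card_erase_of_mem hx, hCc]
    have : 0 < #C := card_pos.mpr ⟨x, hx⟩
    omega
  have hx' : x ∈ X \ insert y (C.erase x) := by
    rw [mem_sdiff, mem_insert, mem_erase]
    exact ⟨hC hx, by rintro (rfl | h) <;> simp_all⟩
  have hyx : insert x (insert y (C.erase x)) = insert y C := by
    rw [insert_comm, insert_erase hx]
  have h₁ := hsec.card_avoiding_insert hδ hC hCc hP (mem_sdiff.mpr hy)
  have hP₁ : (avoiding 𝒜 (insert y C)).Nonempty :=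
    card_pos.mp (Nat.pos_of_mul_pos_left (h₁ ▸ Nat.mul_pos hb (card_pos.mpr hP)))
  have hP' : (avoiding 𝒜 (insert y (C.erase x))).Nonempty :=
    hP₁.mono (avoiding_subset_avoiding 𝒜 (insert_subset_insert y (erase_subset x C)))
  have h₂ := hsec.card_avoiding_insert hδ hC' hC'c hP' hx'
  rw [hyx] at h₂
  exact ⟨hP', Nat.eq_of_mul_eq_mul_left hb (h₂.symm.trans h₁)⟩

theorem card_avoiding_eq (hb : 1 ≤ b) (hδ : 1 ≤ δ) {C₀ C : Finset α} (hC₀ : C₀ ⊆ X)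
    (hC₀c : #C₀ = c) (hP₀ : (avoiding 𝒜 C₀).Nonempty) (hC : C ⊆ X) (hCc : #C = c) :
    (avoiding 𝒜 C).Nonempty ∧ #(avoiding 𝒜 C) = #(avoiding 𝒜 C₀) :=
  induction_on_exchange
    (p := fun C => (avoiding 𝒜 C).Nonempty ∧ #(avoiding 𝒜 C) = #(avoiding 𝒜 C₀))
    (fun _ hC hCc hpC _ hx _ hy =>
      let h := hsec.card_avoiding_exchange hb hδ hC hCc hpC.1 hx hy
      ⟨h.1, h.2.trans hpC.2⟩)
    hC₀ hC hC₀c hCc ⟨hP₀, rfl⟩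


theorem lt_of_mem_avoiding (hinf : IsInformative X b 𝒜) (hX : #X = a + b + c)
    (hhands : ∀ H ∈ 𝒜, H ⊆ X ∧ #H = a) (ha : 1 ≤ a) (hb : 1 ≤ b) (hδ : 1 ≤ δ)
    {H₁ C₀ : Finset α} (hC₀ : C₀ ⊆ X) (hC₀c : #C₀ = c) (hH₁ : H₁ ∈ avoiding 𝒜 C₀) : c < a := by
  obtain ⟨hH₁A, hdisj⟩ := mem_avoiding.mp hH₁
  obtain ⟨hH₁X, hH₁a⟩ := hhands H₁ hH₁A
  obtain ⟨z, hz⟩ : (X \ (H₁ ∪ C₀)).Nonempty := by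
    rw [← card_pos, card_sdiff_of_subset (union_subset hH₁X hC₀), card_union_of_disjoint hdisj]
    omega
  rw [mem_sdiff, mem_union, not_or] at hz
  obtain ⟨H₂, hH₂, hzH₂⟩ := hsec.exists_superset hC₀ hC₀c ⟨H₁, hH₁⟩
    (singleton_subset_iff.mpr (mem_sdiff.mpr ⟨hz.1, hz.2.2⟩)) (singleton_nonempty z)
    (by rwa [card_singleton]) (by rwa [card_singleton])
  have hne : H₁ ≠ H₂ := by
    rintro rfl
    exact hz.2.1 (singleton_subset_iff.mp hzH₂)
  have := hinf.card_inter_add_lt hX hhands hH₁A (mem_avoiding.mp hH₂).1 hne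
  omega

theorem add_lt (hinf : IsInformative X b 𝒜) (hX : #X = a + b + c)
    (hhands : ∀ H ∈ 𝒜, H ⊆ X ∧ #H = a) (hc : 1 ≤ c) (hδ : 1 ≤ δ) (hca : c < a)
    (hP : ∀ C ⊆ X, #C = c → (avoiding 𝒜 C).Nonempty) {H₁ : Finset α} (hH₁ : H₁ ∈ 𝒜) :
    δ + c < a := by
  obtain ⟨hH₁X, hH₁a⟩ := hhands H₁ hH₁
  obtain ⟨C, hC, hCc⟩ := exists_subset_card_eq (s := H₁) (n := c) (by omega)
  obtain ⟨Y, hY, hYc⟩ := exists_subset_card_eq (s := H₁ \ C) (n := min δ (a - c))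
    (by rw [card_sdiff_of_subset hC]; omega)
  obtain ⟨H₂, hH₂, hYH₂⟩ := hsec.exists_superset (hC.trans hH₁X) hCc
    (hP C (hC.trans hH₁X) hCc) (hY.trans (sdiff_subset_sdiff hH₁X subset_rfl))
    (card_pos.mp (by omega)) (by omega) (by omega)
  have hne : H₁ ≠ H₂ := by
    rintro rfl
    obtain ⟨x, hx⟩ := card_pos.mp (by omega : 0 < #C)
    exact disjoint_left.mp (mem_avoiding.mp hH₂).2 (hC hx) hx
  have hinter : #Y ≤ #(H₁ ∩ H₂) := card_le_card (subset_inter (hY.trans sdiff_subset) hYH₂)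
  have := hinf.card_inter_add_lt hX hhands hH₁ (mem_avoiding.mp hH₂).1 hne
  omega

theorem card_filter_union_subset_eq (hX : #X = a + b + c) (hhands : ∀ H ∈ 𝒜, H ⊆ X ∧ #H = a)
    {k : ℕ} (hP : ∀ C ⊆ X, #C = c → (avoiding 𝒜 C).Nonempty ∧ #(avoiding 𝒜 C) = k)
    {Y : Finset α} (hY : Y ⊆ X) (hYne : Y.Nonempty) (hYδ : #Y ≤ δ) (hYa : #Y ≤ a)
    {U U' : Finset α} (hU : U ⊆ X \ Y) (hU' : U' ⊆ X \ Y) (hUc : #U = c) (hU'c : #U' = c) :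
    #{H ∈ 𝒜 | Y ∪ U ⊆ H} = #{H ∈ 𝒜 | Y ∪ U' ⊆ H} := by
  set ℬ := {H ∈ 𝒜 | Y ⊆ H}
  have hs : ∀ H ∈ ℬ, #(H ∩ (X \ Y)) = a - #Y := by
    intro H hH
    obtain ⟨hHA, hYH⟩ := mem_filter.mp hH
    obtain ⟨hHX, hHa⟩ := hhands H hHA
    rw [← inter_sdiff_assoc, inter_eq_left.mpr hHX, card_sdiff_of_subset hYH, hHa]
  have hk : ∀ C ⊆ X \ Y, #C = c → #(avoiding ℬ C) = a.choose #Y * k / (a + b).choose #Y := by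
    intro C hC hCc
    have hCX : C ⊆ X := hC.trans sdiff_subset
    have hYC : Y ⊆ X \ C := subset_sdiff.mpr ⟨hY, disjoint_sdiff.mono_right hC⟩
    have h := hsec C hCX hCc (hP C hCX hCc).1 Y hYC hYne hYδ
    rw [(hP C hCX hCc).2] at h
    have hℬ : avoiding ℬ C = {H ∈ avoiding 𝒜 C | Y ⊆ H} := filter_comm _ _ _
    rw [hℬ, eq_comm]
    exact Nat.div_eq_of_eq_mul_left (Nat.choose_pos (by omega)) (by rw [← h, mul_comm])
  have := card_filter_superset_eq_of_card_avoiding_eq hs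
    (by rw [card_sdiff_of_subset hY, hX]; omega) hk hU hU' hUc hU'c
  simpa only [ℬ, filter_filter, union_subset_iff] using this

end IsPerfectlySecure

theorem IsInformative.add_two_mul_le (hinf : IsInformative X b 𝒜) (hX : #X = a + b + c)
    (hhands : ∀ H ∈ 𝒜, H ⊆ X ∧ #H = a) (hc : 1 ≤ c) {H₁ Y : Finset α} (hH₁ : H₁ ∈ 𝒜)
    (hY : Y ⊆ H₁) (hYc : #Y + c ≤ a)
    (hdesign : ∀ U ⊆ X \ Y, ∀ U' ⊆ X \ Y, #U = c → #U' = c →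
      #{H ∈ 𝒜 | Y ∪ U ⊆ H} = #{H ∈ 𝒜 | Y ∪ U' ⊆ H}) :
    #Y + 2 * c ≤ a := by
  obtain ⟨hH₁X, hH₁a⟩ := hhands H₁ hH₁
  have hH₁Y : #(H₁ \ Y) = a - #Y := by rw [card_sdiff_of_subset hY, hH₁a]
  have hH₁YX : H₁ \ Y ⊆ X \ Y := sdiff_subset_sdiff hH₁X subset_rfl
  obtain ⟨U, hU, hUc⟩ := exists_subset_card_eq (s := H₁ \ Y) (n := c) (by omega)
  obtain ⟨W, hW, hWc⟩ := exists_subset_card_eq (s := H₁ \ Y) (n := c - 1) (by omega)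
  obtain ⟨u, hu⟩ : (X \ H₁).Nonempty := by
    rw [← card_pos, card_sdiff_of_subset hH₁X]
    omega
  rw [mem_sdiff] at hu
  have huW : u ∉ W := fun h => hu.2 (mem_sdiff.mp (hW h)).1
  have hcount := hdesign U (hU.trans hH₁YX) (insert u W)
    (insert_subset (mem_sdiff.mpr ⟨hu.1, fun h => hu.2 (hY h)⟩) (hW.trans hH₁YX)) hUc
    (by rw [card_insert_of_notMem huW, hWc]; omega)
  obtain ⟨H₂, hH₂⟩ : {H ∈ 𝒜 | Y ∪ insert u W ⊆ H}.Nonempty := by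
    rw [← card_pos, ← hcount, card_pos]
    exact ⟨H₁, mem_filter.mpr ⟨hH₁, union_subset hY (hU.trans sdiff_subset)⟩⟩
  obtain ⟨hH₂A, hH₂⟩ := mem_filter.mp hH₂
  rw [union_subset_iff, insert_subset_iff] at hH₂
  have hne : H₁ ≠ H₂ := by
    rintro rfl
    exact hu.2 hH₂.2.1
  have hYW : #(Y ∪ W) = #Y + (c - 1) := by
    rw [card_union_of_disjoint (disjoint_sdiff.mono_right hW), hWc]
  have hinter : #(Y ∪ W) ≤ #(H₁ ∩ H₂) :=
    card_le_card <| union_subset (subset_inter hY hH₂.1)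
      (subset_inter (hW.trans sdiff_subset) hH₂.2.2)
  have := hinf.card_inter_add_lt hX hhands hH₁ hH₂A hne
  omega

end RussianCards

/-- Corollary: a nonempty announcement that is informative for Bob and perfectly
`δ`-secure against Cathy satisfies `δ ≤ a - 2c` (i.e. `δ + 2c ≤ a`). -/
theorem stmt_13 {α : Type*} [DecidableEq α] (X : Finset α) (a b c δ : ℕ)
    (ha : 1 ≤ a) (hb : 1 ≤ b) (hc : 1 ≤ c) (hδ : 1 ≤ δ)
    (hX : X.card = a + b + c)
    (𝒜 : Finset (Finset α))
    (hhands : ∀ H ∈ 𝒜, H ⊆ X ∧ H.card = a)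
    (hne : 𝒜.Nonempty)
    (hinf : ∀ HB ⊆ X, HB.card = b →
      ∀ H ∈ 𝒜, ∀ H' ∈ 𝒜, Disjoint H HB → Disjoint H' HB → H = H')
    (hsec : ∀ HC ⊆ X, HC.card = c →
      (𝒜.filter fun H => Disjoint H HC).Nonempty →
      ∀ Y ⊆ X \ HC, Y.Nonempty → Y.card ≤ δ →
        (a + b).choose Y.card *
            (((𝒜.filter fun H => Disjoint H HC)).filter fun H => Y ⊆ H).card =
          a.choose Y.card * (𝒜.filter fun H => Disjoint H HC).card) :
    δ + 2 * c ≤ a := by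
  replace hinf : IsInformative X b 𝒜 := hinf
  replace hsec : IsPerfectlySecure X a b c δ 𝒜 := hsec
  obtain ⟨H₁, hH₁⟩ := hne
  obtain ⟨hH₁X, hH₁a⟩ := hhands H₁ hH₁
  obtain ⟨C₀, hC₀, hC₀c⟩ := exists_subset_card_eq (s := X \ H₁) (n := c)
    (by rw [card_sdiff_of_subset hH₁X]; omega)
  have hH₁C₀ : H₁ ∈ avoiding 𝒜 C₀ :=
    mem_avoiding.mpr ⟨hH₁, disjoint_sdiff.mono_right hC₀⟩
  have hP : ∀ C ⊆ X, #C = c →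
      (avoiding 𝒜 C).Nonempty ∧ #(avoiding 𝒜 C) = #(avoiding 𝒜 C₀) := fun C hC hCc =>
    hsec.card_avoiding_eq hb hδ (hC₀.trans sdiff_subset) hC₀c ⟨H₁, hH₁C₀⟩ hC hCc
  have hca := hsec.lt_of_mem_avoiding hinf hX hhands ha hb hδ (hC₀.trans sdiff_subset) hC₀c hH₁C₀
  have hδca := hsec.add_lt hinf hX hhands hc hδ hca (fun C hC hCc => (hP C hC hCc).1) hH₁
  obtain ⟨Y, hY, hYc⟩ := exists_subset_card_eq (s := H₁) (n := δ) (by omega)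
  have := hinf.add_two_mul_le hX hhands hc hH₁ hY (by omega)
    fun U hU U' hU' hUc hU'c => hsec.card_filter_union_subset_eq hX hhands hP
      (hY.trans hH₁X) (card_pos.mp (by omega)) hYc.le (by omega) hU hU' hUc hU'c
  omega
end

section
/- Let (X,ℬ) be a t-(n,a,1)-design on an n-element set X (n > a ≥ t ≥ 1). For every a-element subset B of X, the number of permutations π of X such that B belongs to π(ℬ) = {π(H) : H ∈ ℬ} equals n!/C(n−t,a−t); equivalently, C(n−t,a−t)·|{π ∈ Sym(X) : B ∈ π(ℬ)}| = n!, where C denotes the binomial coefficient. (This computes the equitability parameter γ = m/C(n−t,a−t) for the strategy obtained by letting the symmetric group act on a starting design.) -/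
/-!
A permutation `σ` puts `B` into `σ(ℬ)` exactly when it carries some block onto `B`, and it carries
at most one block there. Any two `a`-sets are related by a permutation, so every block is carried
onto `B` by the same number `c` of permutations, and the count is `|ℬ| · c`; the same count for the
family of all `a`-sets gives `n! = C(n,a) · c`. Double counting the pairs `T ⊆ H` with `|T| = t`,
`H ∈ ℬ` gives `|ℬ| · C(a,t) = C(n,t)`, and `C(n,t) · C(n-t,a-t) = C(n,a) · C(a,t)` finishes.
-/

open Equiv

namespace Finset

variable {α : Type*} [DecidableEq α]

theorem exists_perm_image_eq {s t : Finset α} (h : #s = #t) :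
    ∃ σ : Perm α, s.image σ = t := by
  obtain ⟨σ, hσ⟩ := (Set.powersetCard.isPretransitive (α := α) (n := #s)).exists_smul_eq
    (Set.powersetCard.ofCard rfl) (Set.powersetCard.ofCard h.symm)
  refine ⟨σ, ?_⟩
  simpa [Finset.smul_finset_def, Perm.smul_def] using congrArg Subtype.val hσ

variable [Fintype α]

def transporter (s t : Finset α) : Finset (Perm α) := {σ | s.image σ = t}

@[simp]
theorem mem_transporter {s t : Finset α} {σ : Perm α} :
    σ ∈ transporter s t ↔ s.image σ = t := by
  simp [transporter]

theorem card_transporter_congr_left {s s' : Finset α} (h : #s = #s') (t : Finset α) :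
    #(transporter s t) = #(transporter s' t) := by
  obtain ⟨g, hg⟩ := exists_perm_image_eq h.symm
  refine card_nbij' (· * g) (· * g⁻¹) ?_ ?_ (fun σ _ => by simp) (fun σ _ => by simp)
  · intro σ hσ
    simp only [mem_coe, mem_transporter] at hσ ⊢
    rw [Perm.coe_mul, ← image_image, hg, hσ]
  · intro σ hσ
    simp only [mem_coe, mem_transporter] at hσ ⊢
    have hg' : s.image ⇑g⁻¹ = s' := by rw [← hg, image_image]; simp
    rw [Perm.coe_mul, ← image_image, hg', hσ]

theorem card_filter_mem_image_image (𝒮 : Finset (Finset α)) (t : Finset α) :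
    #{σ : Perm α | t ∈ 𝒮.image (·.image σ)} = ∑ s ∈ 𝒮, #(transporter s t) := by
  rw [← card_biUnion]
  · congr 1
    ext σ
    simp
  · intro s _ s' _ hne
    simp only [Function.onFun, disjoint_left, mem_transporter]
    rintro σ rfl hσ
    exact hne (image_injective σ.injective hσ.symm)

theorem card_filter_mem_image_image_of_card_eq {𝒮 : Finset (Finset α)} {t : Finset α}
    (h𝒮 : ∀ s ∈ 𝒮, #s = #t) :
    #{σ : Perm α | t ∈ 𝒮.image (·.image σ)} = #𝒮 * #(transporter t t) := by
  rw [card_filter_mem_image_image,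
    sum_const_nat fun s hs => card_transporter_congr_left (h𝒮 s hs) t]

theorem factorial_card_eq_choose_mul_card_transporter (t : Finset α) :
    (Fintype.card α).factorial = (Fintype.card α).choose #t * #(transporter t t) := by
  have hcount := card_filter_mem_image_image_of_card_eq (𝒮 := powersetCard #t univ) (t := t)
    (by simp)
  rw [card_powersetCard, card_univ] at hcount
  rw [← hcount, filter_true_of_mem, card_univ, Fintype.card_perm]
  intro σ _
  refine mem_image.mpr ⟨t.image σ.symm, ?_, by simp [image_image]⟩
  simp [card_image_of_injective _ σ.symm.injective]

theorem card_mul_choose_eq_choose {ℬ : Finset (Finset α)} {a t : ℕ}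
    (hblocks : ∀ H ∈ ℬ, #H = a) (hdesign : ∀ T : Finset α, #T = t → #{H ∈ ℬ | T ⊆ H} = 1) :
    #ℬ * a.choose t = (Fintype.card α).choose t := by
  have hpairs := card_mul_eq_card_mul (s := ℬ) (t := powersetCard t univ)
    (fun (H T : Finset α) => T ⊆ H) (m := a.choose t) (fun H hH => ?_)
    (fun T hT => hdesign T (mem_powersetCard.mp hT).2)
  · simpa using hpairs
  · rw [← hblocks H hH, ← card_powersetCard]
    congr 1
    ext T
    simp only [bipartiteAbove, mem_filter, mem_powersetCard, subset_univ, true_and]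
    exact and_comm

end Finset

open Finset

theorem stmt_14_general {α : Type*} [Fintype α] [DecidableEq α] (n a t : ℕ)
    (hn : Fintype.card α = n)
    (hta : t ≤ a)
    (ℬ : Finset (Finset α))
    (hblocks : ∀ H ∈ ℬ, H.card = a)
    (hdesign : ∀ T : Finset α, T.card = t → (ℬ.filter fun H => T ⊆ H).card = 1)
    (B : Finset α) (hB : B.card = a) :
    (n - t).choose (a - t) *
        (Finset.univ.filter fun π : Equiv.Perm α =>
          B ∈ ℬ.image fun H => H.image π).card = n.factorial := by
  subst hn hB
  rw [card_filter_mem_image_image_of_card_eq hblocks,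
    factorial_card_eq_choose_mul_card_transporter B, ← mul_assoc]
  congr 1
  apply Nat.eq_of_mul_eq_mul_right (Nat.choose_pos hta)
  rw [mul_assoc, card_mul_choose_eq_choose hblocks hdesign, Nat.choose_mul hta, mul_comm]

/-- Theorem: let `ℬ` be a `t-(n,a,1)`-design on the `n`-element point set `α`.
For every `a`-subset `B`, the number of permutations `π` of the point set with
`B ∈ π(ℬ)` satisfies `C(n-t, a-t) · |{π : B ∈ π(ℬ)}| = n!`. -/
theorem stmt_14 {α : Type*} [Fintype α] [DecidableEq α] (n a t : ℕ)
    (hn : Fintype.card α = n)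
    (hna : a < n) (hta : t ≤ a) (ht : 1 ≤ t)
    (ℬ : Finset (Finset α))
    (hblocks : ∀ H ∈ ℬ, H.card = a)
    (hdesign : ∀ T : Finset α, T.card = t → (ℬ.filter fun H => T ⊆ H).card = 1)
    (B : Finset α) (hB : B.card = a) :
    (n - t).choose (a - t) *
        (Finset.univ.filter fun π : Equiv.Perm α =>
          B ∈ ℬ.image fun H => H.image π).card = n.factorial :=
  stmt_14_general n a t hn hta ℬ hblocks hdesign B hB
end

section
/- Consider the transversal Russian cards problem: X is a deck of n = av cards partitioned into a piles (groups) G_1,…,G_a each of size v, with v ≥ 2 and 1 ≤ c ≤ a. Let 𝒜 be a set of transversals of the piles (possible hands for Alice). Then the following are equivalent: (i) for every Bob-hand H_B of the form X∖(T ∪ C), where T is a transversal and C is a partial transversal of size c disjoint from T, there is at most one H ∈ 𝒜 with H ∩ H_B = ∅; (ii) there do not exist two distinct H, H' ∈ 𝒜 with |H ∩ H'| ≥ a − c. -/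
open Finset

/-- Decomposition of the cardinality of a subset of a disjoint union along the parts. -/
lemma decomp15 {α : Type*} [DecidableEq α] (𝒢 : Finset (Finset α))
    (hGdisj : ∀ G ∈ 𝒢, ∀ G' ∈ 𝒢, G ≠ G' → Disjoint G G')
    (S : Finset α) (hS : S ⊆ 𝒢.biUnion id) :
    S.card = ∑ G ∈ 𝒢, (S ∩ G).card := by
  have hrep : S = 𝒢.biUnion (fun G => S ∩ G) := by
    ext x
    simp only [mem_biUnion, mem_inter, id] at *
    constructor
    · intro hx
      obtain ⟨G, hG, hxG⟩ := mem_biUnion.mp (hS hx)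
      exact ⟨G, hG, hx, hxG⟩
    · rintro ⟨G, hG, hx, -⟩; exact hx
  conv_lhs => rw [hrep]
  exact card_biUnion (fun G hG G' hG' hne =>
    (hGdisj G hG G' hG' hne).mono inter_subset_right inter_subset_right)

/-- The number of parts meeting a subset `S` is at most `S.card`. -/
lemma filtercount15 {α : Type*} [DecidableEq α] (𝒢 : Finset (Finset α))
    (hGdisj : ∀ G ∈ 𝒢, ∀ G' ∈ 𝒢, G ≠ G' → Disjoint G G')
    (S : Finset α) (hS : S ⊆ 𝒢.biUnion id) :
    (𝒢.filter (fun G => S ∩ G ≠ ∅)).card ≤ S.card := by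
  rw [decomp15 𝒢 hGdisj S hS]
  calc (𝒢.filter (fun G => S ∩ G ≠ ∅)).card
      = ∑ G ∈ 𝒢.filter (fun G => S ∩ G ≠ ∅), 1 := by rw [card_eq_sum_ones]
    _ ≤ ∑ G ∈ 𝒢.filter (fun G => S ∩ G ≠ ∅), (S ∩ G).card := by
        apply sum_le_sum
        intro G hG
        have := (mem_filter.mp hG).2
        exact Nat.one_le_iff_ne_zero.mpr (fun h => this (card_eq_zero.mp h))
    _ ≤ ∑ G ∈ 𝒢, (S ∩ G).card := sum_le_sum_of_subset (filter_subset _ _)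

/-- Theorem (informativeness criterion for the transversal Russian cards problem):
an announcement `𝒜` of transversals is informative for Bob (condition (i)) iff
no two distinct members of `𝒜` intersect in at least `a - c` points (condition (ii)). -/
theorem stmt_15 {α : Type*} [DecidableEq α] (X : Finset α) (𝒢 : Finset (Finset α))
    (a v c : ℕ)
    (hv : 2 ≤ v) (hc1 : 1 ≤ c) (hca : c ≤ a)
    (h𝒢card : 𝒢.card = a)
    (hGsize : ∀ G ∈ 𝒢, G.card = v)
    (hGdisj : ∀ G ∈ 𝒢, ∀ G' ∈ 𝒢, G ≠ G' → Disjoint G G')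
    (hGunion : X = 𝒢.biUnion id)
    (𝒜 : Finset (Finset α))
    (h𝒜 : ∀ H ∈ 𝒜, H ⊆ X ∧ ∀ G ∈ 𝒢, (H ∩ G).card = 1) :
    (∀ T C : Finset α,
        T ⊆ X → (∀ G ∈ 𝒢, (T ∩ G).card = 1) →
        C ⊆ X → (∀ G ∈ 𝒢, (C ∩ G).card ≤ 1) → C.card = c → Disjoint T C →
        ∀ H ∈ 𝒜, ∀ H' ∈ 𝒜,
          Disjoint H (X \ (T ∪ C)) → Disjoint H' (X \ (T ∪ C)) → H = H')
      ↔ ¬ ∃ H ∈ 𝒜, ∃ H' ∈ 𝒜, H ≠ H' ∧ a - c ≤ (H ∩ H').card := by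
  have hsubX : ∀ S : Finset α, S ⊆ X → S ⊆ 𝒢.biUnion id := fun S h => by
    rw [← hGunion]; exact h
  constructor
  · -- (i) → (ii)
    intro hinf
    rintro ⟨H, hH, H', hH', hne, hcard⟩
    obtain ⟨hHX, hHt⟩ := h𝒜 H hH
    obtain ⟨hH'X, hH't⟩ := h𝒜 H' hH'
    -- α is nonempty
    have ha1 : 1 ≤ a := le_trans hc1 hca
    obtain ⟨G₀, hG₀⟩ := card_pos.mp (by omega : 0 < 𝒢.card)
    obtain ⟨x₀, -⟩ := card_pos.mp (by rw [hGsize G₀ hG₀]; omega : 0 < G₀.card)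
    haveI : Nonempty α := ⟨x₀⟩
    -- card of H'
    have hcardH' : H'.card = a := by
      rw [decomp15 𝒢 hGdisj H' (hsubX H' hH'X), sum_congr rfl (fun G hG => hH't G hG)]
      simp [h𝒢card]
    obtain ⟨D, hDdef⟩ : ∃ D : Finset α, D = H' \ H := ⟨_, rfl⟩
    have hDX : D ⊆ X := by rw [hDdef]; exact (sdiff_subset).trans hH'X
    have hDcard : D.card = a - (H ∩ H').card := by
      have h1 := card_inter_add_card_sdiff H' H
      rw [inter_comm, ← hDdef] at h1
      omega
    have hDle : D.card ≤ c := by omega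
    -- groups avoided by D
    have h𝒢₀ : c - D.card ≤ (𝒢.filter (fun G => D ∩ G = ∅)).card := by
      have h1 : (𝒢.filter (fun G => D ∩ G ≠ ∅)).card ≤ D.card :=
        filtercount15 𝒢 hGdisj D (hsubX D hDX)
      have h2 := card_filter_add_card_filter_not
        (s := 𝒢) (p := fun G => D ∩ G = ∅)
      simp only [ne_eq] at h1 h2 ⊢
      omega
    obtain ⟨𝒢₁, h𝒢₁sub, h𝒢₁card⟩ := exists_subset_card_eq h𝒢₀
    have h𝒢₁G : ∀ G ∈ 𝒢₁, G ∈ 𝒢 := fun G h => filter_subset _ _ (h𝒢₁sub h)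
    have h𝒢₁D : ∀ G ∈ 𝒢₁, D ∩ G = ∅ := fun G h => (mem_filter.mp (h𝒢₁sub h)).2
    -- an element outside H in each group
    have hGH : ∀ G ∈ 𝒢, (G \ H).Nonempty := by
      intro G hG
      rw [sdiff_nonempty]
      intro hsub
      have h1 : H ∩ G = G := inter_eq_right.mpr hsub
      have h2 := hHt G hG
      rw [h1, hGsize G hG] at h2
      omega
    obtain ⟨pick, hpickdef⟩ : ∃ pick : Finset α → α,
        pick = fun G => if h : (G \ H).Nonempty then h.choose else Classical.arbitrary α :=
      ⟨_, rfl⟩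
    have hpick : ∀ G ∈ 𝒢, pick G ∈ G \ H := by
      intro G hG
      rw [hpickdef]
      simp only [dif_pos (hGH G hG)]
      exact (hGH G hG).choose_spec
    obtain ⟨E, hEdef⟩ : ∃ E : Finset α, E = 𝒢₁.image pick := ⟨_, rfl⟩
    have hEcard : E.card = c - D.card := by
      rw [hEdef, card_image_of_injOn, h𝒢₁card]
      intro G hG G' hG' heq
      by_contra hneq
      have h1 := mem_sdiff.mp (hpick G (h𝒢₁G G hG))
      have h2 := mem_sdiff.mp (hpick G' (h𝒢₁G G' hG'))
      exact disjoint_left.mp (hGdisj G (h𝒢₁G G hG) G' (h𝒢₁G G' hG') hneq)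
        h1.1 (heq ▸ h2.1)
    have hEmem : ∀ x ∈ E, ∃ G ∈ 𝒢₁, pick G = x := fun x hx => by
      rw [hEdef] at hx
      simpa using mem_image.mp hx
    obtain ⟨C, hCdef⟩ : ∃ C : Finset α, C = D ∪ E := ⟨_, rfl⟩
    -- C ⊆ X
    have hCX : C ⊆ X := by
      rw [hCdef]
      intro x hx
      rcases mem_union.mp hx with h | h
      · exact hDX h
      · obtain ⟨G, hG, rfl⟩ := hEmem x h
        have := (mem_sdiff.mp (hpick G (h𝒢₁G G hG))).1
        rw [hGunion]
        exact mem_biUnion.mpr ⟨G, h𝒢₁G G hG, this⟩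
    -- E meets each group in a controlled way
    have hEinG : ∀ G ∈ 𝒢, ∀ x ∈ E ∩ G, G ∈ 𝒢₁ ∧ x = pick G := by
      intro G hG x hx
      obtain ⟨hxE, hxG⟩ := mem_inter.mp hx
      obtain ⟨G', hG', rfl⟩ := hEmem x hxE
      have hmem := (mem_sdiff.mp (hpick G' (h𝒢₁G G' hG'))).1
      have : G' = G := by
        by_contra hneq
        exact disjoint_left.mp (hGdisj G' (h𝒢₁G G' hG') G hG hneq) hmem hxG
      subst this
      exact ⟨hG', rfl⟩
    -- C is a partial transversal
    have hCle : ∀ G ∈ 𝒢, (C ∩ G).card ≤ 1 := by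
      intro G hG
      rw [hCdef, union_inter_distrib_right]
      by_cases h1 : G ∈ 𝒢₁
      · rw [h𝒢₁D G h1, empty_union]
        have : E ∩ G ⊆ {pick G} := by
          intro x hx
          rw [mem_singleton]
          exact (hEinG G hG x hx).2
        calc (E ∩ G).card ≤ ({pick G} : Finset α).card := card_le_card this
          _ = 1 := card_singleton _
      · have hE0 : E ∩ G = ∅ := by
          rw [eq_empty_iff_forall_notMem]
          intro x hx
          exact h1 (hEinG G hG x hx).1
        rw [hE0, union_empty]
        calc (D ∩ G).card ≤ (H' ∩ G).card := by
              rw [hDdef]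
              exact card_le_card (inter_subset_inter (sdiff_subset) le_rfl)
          _ = 1 := hH't G hG
    -- Disjoint D E
    have hDE : Disjoint D E := by
      rw [disjoint_left]
      intro x hxD hxE
      obtain ⟨G, hG, rfl⟩ := hEmem x hxE
      have hmem := (mem_sdiff.mp (hpick G (h𝒢₁G G hG))).1
      have := h𝒢₁D G hG
      rw [eq_empty_iff_forall_notMem] at this
      exact this _ (mem_inter.mpr ⟨hxD, hmem⟩)
    have hCcard : C.card = c := by
      rw [hCdef, card_union_of_disjoint hDE, hEcard]
      omega
    -- Disjoint H C
    have hHC : Disjoint H C := by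
      rw [disjoint_left]
      intro x hxH hxC
      rw [hCdef] at hxC
      rcases mem_union.mp hxC with h | h
      · rw [hDdef] at h
        exact (mem_sdiff.mp h).2 hxH
      · obtain ⟨G, hG, rfl⟩ := hEmem x h
        exact (mem_sdiff.mp (hpick G (h𝒢₁G G hG))).2 hxH
    -- apply (i) with T = H
    have hd1 : Disjoint H (X \ (H ∪ C)) := by
      rw [disjoint_left]
      intro x hxH hx
      exact (mem_sdiff.mp hx).2 (mem_union_left _ hxH)
    have hd2 : Disjoint H' (X \ (H ∪ C)) := by
      rw [disjoint_left]
      intro x hxH' hx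
      apply (mem_sdiff.mp hx).2
      by_cases h : x ∈ H
      · exact mem_union_left _ h
      · refine mem_union_right _ ?_
        rw [hCdef]
        exact mem_union_left _ (by rw [hDdef]; exact mem_sdiff.mpr ⟨hxH', h⟩)
    exact hne (hinf H C hHX hHt hCX hCle hCcard hHC H hH H' hH' hd1 hd2)
  · -- (ii) → (i)
    intro hii T C hTX hT hCX hC hCc hdTC H hH H' hH' hd hd'
    by_contra hne
    apply hii
    refine ⟨H, hH, H', hH', hne, ?_⟩
    obtain ⟨hHX, hHt⟩ := h𝒜 H hH
    obtain ⟨hH'X, hH't⟩ := h𝒜 H' hH'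
    have hHsub : H ⊆ T ∪ C := by
      intro x hx
      by_contra h
      exact disjoint_left.mp hd hx (mem_sdiff.mpr ⟨hHX hx, h⟩)
    have hH'sub : H' ⊆ T ∪ C := by
      intro x hx
      by_contra h
      exact disjoint_left.mp hd' hx (mem_sdiff.mpr ⟨hH'X hx, h⟩)
    -- groups missed by C carry a common point of H and H'
    have hkey : ∀ G ∈ 𝒢, C ∩ G = ∅ → 1 ≤ (H ∩ H' ∩ G).card := by
      intro G hG hCG
      obtain ⟨x, hx⟩ := card_eq_one.mp (hHt G hG)
      obtain ⟨y, hy⟩ := card_eq_one.mp (hH't G hG)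
      obtain ⟨t, ht⟩ := card_eq_one.mp (hT G hG)
      have hxm : x ∈ H ∩ G := by rw [hx]; exact mem_singleton_self x
      have hym : y ∈ H' ∩ G := by rw [hy]; exact mem_singleton_self y
      have hxT : x ∈ T := by
        rcases mem_union.mp (hHsub (mem_inter.mp hxm).1) with h | h
        · exact h
        · exact absurd (mem_inter.mpr ⟨h, (mem_inter.mp hxm).2⟩)
            (by rw [hCG]; exact notMem_empty _)
      have hyT : y ∈ T := by
        rcases mem_union.mp (hH'sub (mem_inter.mp hym).1) with h | h
        · exact h
        · exact absurd (mem_inter.mpr ⟨h, (mem_inter.mp hym).2⟩)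
            (by rw [hCG]; exact notMem_empty _)
      have hxt : x = t := by
        have : x ∈ T ∩ G := mem_inter.mpr ⟨hxT, (mem_inter.mp hxm).2⟩
        rw [ht, mem_singleton] at this; exact this
      have hyt : y = t := by
        have : y ∈ T ∩ G := mem_inter.mpr ⟨hyT, (mem_inter.mp hym).2⟩
        rw [ht, mem_singleton] at this; exact this
      have : t ∈ H ∩ H' ∩ G :=
        mem_inter.mpr ⟨mem_inter.mpr ⟨hxt ▸ (mem_inter.mp hxm).1,
          hyt ▸ (mem_inter.mp hym).1⟩, hxt ▸ (mem_inter.mp hxm).2⟩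
      exact card_pos.mpr ⟨t, this⟩
    -- the block count
    have h𝒢₂ : a - c ≤ (𝒢.filter (fun G => C ∩ G = ∅)).card := by
      have h1 : (𝒢.filter (fun G => C ∩ G ≠ ∅)).card ≤ C.card :=
        filtercount15 𝒢 hGdisj C (hsubX C hCX)
      have h2 := card_filter_add_card_filter_not
        (s := 𝒢) (p := fun G => C ∩ G = ∅)
      simp only [ne_eq] at h1 h2 ⊢
      omega
    have hHH'X : H ∩ H' ⊆ X := (inter_subset_left).trans hHX
    calc a - c ≤ (𝒢.filter (fun G => C ∩ G = ∅)).card := h𝒢₂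
      _ = ∑ G ∈ 𝒢.filter (fun G => C ∩ G = ∅), 1 := by rw [card_eq_sum_ones]
      _ ≤ ∑ G ∈ 𝒢.filter (fun G => C ∩ G = ∅), (H ∩ H' ∩ G).card := by
          apply sum_le_sum
          intro G hG
          exact hkey G (mem_filter.mp hG).1 (mem_filter.mp hG).2
      _ ≤ ∑ G ∈ 𝒢, (H ∩ H' ∩ G).card := sum_le_sum_of_subset (filter_subset _ _)
      _ = (H ∩ H').card := (decomp15 𝒢 hGdisj _ (hsubX _ hHH'X)).symm
end

section
/- Consider the transversal Russian cards problem: X is a deck of av cards partitioned into a piles each of size v, with a > c ≥ 1. Let 𝔊 be a finite collection of announcements (sets of transversals of the piles) such that every transversal of the piles belongs to at least one member of 𝔊, and such that no member of 𝔊 contains two distinct transversals H, H' with |H ∩ H'| ≥ a − c (i.e., each announcement is informative for Bob). Then |𝔊| ≥ v^c. -/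
/-!
There are `v ^ a` transversals, and every one of them lies in some announcement of `𝔊`. Fix a set
`S` of `a - c` piles. Two hands of one informative announcement cannot agree on the piles of `S`,
since they would then share `a - c` cards; so an announcement has at most `v ^ (a - c)` hands, one
per transversal of `S`. Hence `v ^ a ≤ #𝔊 * v ^ (a - c)`.
-/

open Finset

namespace Finset

variable {α : Type*} [DecidableEq α] {𝒢 S 𝒜 : Finset (Finset α)} {T : Finset α}

def transversals (𝒢 : Finset (Finset α)) : Finset (Finset α) :=
  {T ∈ (𝒢.biUnion id).powerset | ∀ G ∈ 𝒢, #(T ∩ G) = 1}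

lemma mem_transversals :
    T ∈ transversals 𝒢 ↔ T ⊆ 𝒢.biUnion id ∧ ∀ G ∈ 𝒢, #(T ∩ G) = 1 := by
  simp [transversals]

lemma inter_biUnion_mem_transversals (hS : S ⊆ 𝒢) (hT : T ∈ transversals 𝒢) :
    T ∩ S.biUnion id ∈ transversals S := by
  refine mem_transversals.2 ⟨inter_subset_right, fun G hG => ?_⟩
  have hGS : G ⊆ S.biUnion id := subset_biUnion_of_mem id hG
  rw [inter_assoc, inter_eq_right.2 hGS]
  exact (mem_transversals.1 hT).2 G (hS hG)

section PairwiseDisjoint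

variable (h𝒢 : (𝒢 : Set (Finset α)).PairwiseDisjoint id)
include h𝒢

lemma card_of_mem_transversals (hT : T ∈ transversals 𝒢) : #T = #𝒢 := by
  obtain ⟨hT𝒢, hTG⟩ := mem_transversals.1 hT
  calc #T = #(T ∩ 𝒢.biUnion id) := by rw [inter_eq_left.2 hT𝒢]
    _ = #(𝒢.biUnion (T ∩ ·)) := by rw [inter_biUnion]; rfl
    _ = ∑ G ∈ 𝒢, #(T ∩ G) :=
        card_biUnion fun G hG G' hG' hne =>
          (h𝒢 hG hG' hne).mono inter_subset_right inter_subset_right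
    _ = #𝒢 := by rw [sum_congr rfl hTG, sum_const, smul_eq_mul, mul_one]

lemma attach_image_inter_eq_singleton {f : ∀ G ∈ 𝒢, α} (hf : f ∈ 𝒢.pi id) {G : Finset α}
    (hG : G ∈ 𝒢) : 𝒢.attach.image (fun G => f G.1 G.2) ∩ G = {f G hG} := by
  have hfG := mem_pi.1 hf
  ext x
  simp only [mem_inter, mem_image, mem_attach, true_and, Subtype.exists, mem_singleton]
  constructor
  · rintro ⟨⟨G', hG', rfl⟩, hxG⟩
    obtain rfl : G' = G := by
      by_contra hne
      exact disjoint_left.1 (h𝒢 hG' hG hne) (hfG G' hG') hxG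
    rfl
  · rintro rfl
    exact ⟨⟨G, hG, rfl⟩, hfG G hG⟩

lemma card_transversals : #(transversals 𝒢) = ∏ G ∈ 𝒢, #G := by
  rw [← card_pi]
  symm
  refine card_bij (fun f _ => 𝒢.attach.image fun G => f G.1 G.2) (fun f hf => ?_)
    (fun f hf g hg heq => ?_) (fun T hT => ?_)
  · refine mem_transversals.2 ⟨fun x hx => ?_, fun G hG => ?_⟩
    · obtain ⟨⟨G, hG⟩, -, rfl⟩ := mem_image.1 hx
      exact mem_biUnion.2 ⟨G, hG, mem_pi.1 hf G hG⟩
    · rw [attach_image_inter_eq_singleton h𝒢 hf hG, card_singleton]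
  · funext G hG
    have hmem : f G hG ∈ 𝒢.attach.image (fun G => g G.1 G.2) ∩ G := by
      rw [← heq, attach_image_inter_eq_singleton h𝒢 hf hG]
      exact mem_singleton_self _
    rw [attach_image_inter_eq_singleton h𝒢 hg hG] at hmem
    exact mem_singleton.1 hmem
  · obtain ⟨hT𝒢, hTG⟩ := mem_transversals.1 hT
    choose f hf using fun G (hG : G ∈ 𝒢) => card_eq_one.1 (hTG G hG)
    have hfT : ∀ G hG, f G hG ∈ T ∩ G := fun G hG => by rw [hf G hG]; exact mem_singleton_self _
    refine ⟨f, mem_pi.2 fun G hG => (mem_inter.1 (hfT G hG)).2, ?_⟩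
    ext x
    simp only [mem_image, mem_attach, true_and, Subtype.exists]
    constructor
    · rintro ⟨G, hG, rfl⟩
      exact (mem_inter.1 (hfT G hG)).1
    · intro hx
      obtain ⟨G, hG, hxG⟩ := mem_biUnion.1 (hT𝒢 hx)
      have : x ∈ T ∩ G := mem_inter.2 ⟨hx, hxG⟩
      rw [hf G hG, mem_singleton] at this
      exact ⟨G, hG, this.symm⟩

lemma card_le_prod_of_card_inter_lt (hS : S ⊆ 𝒢) (h𝒜 : 𝒜 ⊆ transversals 𝒢)
    (hinter : ∀ H ∈ 𝒜, ∀ H' ∈ 𝒜, H ≠ H' → #(H ∩ H') < #S) : #𝒜 ≤ ∏ G ∈ S, #G := by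
  have hSdisj := h𝒢.subset hS
  rw [← card_transversals hSdisj]
  refine card_le_card_of_injOn (· ∩ S.biUnion id)
    (fun H hH => inter_biUnion_mem_transversals hS (h𝒜 hH)) fun H hH H' hH' heq => ?_
  replace heq : H ∩ S.biUnion id = H' ∩ S.biUnion id := heq
  by_contra hne
  have hsub : H ∩ S.biUnion id ⊆ H ∩ H' :=
    subset_inter inter_subset_left (heq ▸ inter_subset_left)
  have := card_le_card hsub
  rw [card_of_mem_transversals hSdisj (inter_biUnion_mem_transversals hS (h𝒜 hH))] at this
  exact (hinter H hH H' hH' hne).not_ge this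

end PairwiseDisjoint

end Finset

theorem stmt_16_general {α : Type*} [DecidableEq α] (X : Finset α) (𝒢 : Finset (Finset α))
    (a v c : ℕ)
    (hv : 2 ≤ v) (hca : c < a)
    (h𝒢card : 𝒢.card = a)
    (hGsize : ∀ G ∈ 𝒢, G.card = v)
    (hGdisj : ∀ G ∈ 𝒢, ∀ G' ∈ 𝒢, G ≠ G' → Disjoint G G')
    (hGunion : X = 𝒢.biUnion id)
    (𝔊 : Finset (Finset (Finset α)))
    (hmem : ∀ 𝒜 ∈ 𝔊, ∀ H ∈ 𝒜, H ⊆ X ∧ ∀ G ∈ 𝒢, (H ∩ G).card = 1)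
    (hcover : ∀ T : Finset α, T ⊆ X → (∀ G ∈ 𝒢, (T ∩ G).card = 1) →
      ∃ 𝒜 ∈ 𝔊, T ∈ 𝒜)
    (hinf : ∀ 𝒜 ∈ 𝔊, ¬ ∃ H ∈ 𝒜, ∃ H' ∈ 𝒜, H ≠ H' ∧ a - c ≤ (H ∩ H').card) :
    v ^ c ≤ 𝔊.card := by
  subst hGunion
  have h𝒢 : (𝒢 : Set (Finset α)).PairwiseDisjoint id := fun G hG G' hG' => hGdisj G hG G' hG'
  obtain ⟨S, hS𝒢, hScard⟩ := exists_subset_card_eq (show a - c ≤ #𝒢 by omega)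
  have hannouncement : ∀ 𝒜 ∈ 𝔊, #𝒜 ≤ v ^ (a - c) := fun 𝒜 h𝒜 => by
    have := card_le_prod_of_card_inter_lt h𝒢 hS𝒢 (𝒜 := 𝒜)
      (fun H hH => mem_transversals.2 (hmem 𝒜 h𝒜 H hH)) fun H hH H' hH' hne => by
        by_contra! h
        exact hinf 𝒜 h𝒜 ⟨H, hH, H', hH', hne, hScard ▸ h⟩
    rwa [prod_congr rfl fun G hG => hGsize G (hS𝒢 hG), prod_const, hScard] at this
  have hcount : v ^ (a - c) * v ^ c ≤ v ^ (a - c) * #𝔊 := calc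
    v ^ (a - c) * v ^ c = #(transversals 𝒢) := by
      rw [← pow_add, Nat.sub_add_cancel hca.le, card_transversals h𝒢, prod_congr rfl hGsize,
        prod_const, h𝒢card]
    _ ≤ #(𝔊.biUnion id) := card_le_card fun T hT => by
      obtain ⟨𝒜, h𝒜, hT𝒜⟩ := hcover T (mem_transversals.1 hT).1 (mem_transversals.1 hT).2
      exact mem_biUnion.2 ⟨𝒜, h𝒜, hT𝒜⟩
    _ ≤ #𝔊 * v ^ (a - c) := card_biUnion_le_card_mul _ _ _ hannouncement
    _ = v ^ (a - c) * #𝔊 := mul_comm _ _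
  exact Nat.le_of_mul_le_mul_left hcount (pow_pos (by omega) _)

/-- Theorem (lower bound on the number of announcements in the transversal
Russian cards problem): if every transversal of the piles lies in some member of
the informative strategy `𝔊`, then `𝔊` has at least `v^c` announcements. -/
theorem stmt_16 {α : Type*} [DecidableEq α] (X : Finset α) (𝒢 : Finset (Finset α))
    (a v c : ℕ)
    (hv : 2 ≤ v) (hc1 : 1 ≤ c) (hca : c < a)
    (h𝒢card : 𝒢.card = a)
    (hGsize : ∀ G ∈ 𝒢, G.card = v)
    (hGdisj : ∀ G ∈ 𝒢, ∀ G' ∈ 𝒢, G ≠ G' → Disjoint G G')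
    (hGunion : X = 𝒢.biUnion id)
    (𝔊 : Finset (Finset (Finset α)))
    (hmem : ∀ 𝒜 ∈ 𝔊, ∀ H ∈ 𝒜, H ⊆ X ∧ ∀ G ∈ 𝒢, (H ∩ G).card = 1)
    (hcover : ∀ T : Finset α, T ⊆ X → (∀ G ∈ 𝒢, (T ∩ G).card = 1) →
      ∃ 𝒜 ∈ 𝔊, T ∈ 𝒜)
    (hinf : ∀ 𝒜 ∈ 𝔊, ¬ ∃ H ∈ 𝒜, ∃ H' ∈ 𝒜, H ≠ H' ∧ a - c ≤ (H ∩ H').card) :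
    v ^ c ≤ 𝔊.card :=
  stmt_16_general X 𝒢 a v c hv hca h𝒢card hGsize hGdisj hGunion 𝔊 hmem hcover hinf
end

section
/- Consider the transversal Russian cards problem: X is a deck of av cards partitioned into a piles each of size v, with a > c ≥ 1 and v ≥ 2. Let 𝔊 be a collection of exactly v^c announcements (sets of transversals of the piles) such that every transversal of the piles belongs to at least one member of 𝔊, and such that no member of 𝔊 contains two distinct transversals H, H' with |H ∩ H'| ≥ a − c. Then each member 𝒜 ∈ 𝔊 is a transversal design TD_1(a−c, a, v): every partial transversal of size a − c is contained in exactly one transversal belonging to 𝒜. -/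
open Finset

lemma trans_card {α : Type*} [DecidableEq α] (v : ℕ) (Ps : Finset (Finset α))
    (hsize : ∀ G ∈ Ps, G.card = v)
    (hdisj : ∀ G ∈ Ps, ∀ G' ∈ Ps, G ≠ G' → Disjoint G G') :
    (((Ps.biUnion id).powerset).filter (fun T => ∀ G ∈ Ps, (T ∩ G).card = 1)).card
      = v ^ Ps.card := by
  classical
  induction Ps using Finset.induction_on with
  | empty => simp
  | @insert G s hGs ih =>
    have hsize' : ∀ G' ∈ s, G'.card = v := fun G' h => hsize G' (mem_insert_of_mem h)
    have hdisj' : ∀ A ∈ s, ∀ B ∈ s, A ≠ B → Disjoint A B :=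
      fun A hA B hB h => hdisj A (mem_insert_of_mem hA) B (mem_insert_of_mem hB) h
    have hGdisj : ∀ G' ∈ s, Disjoint G G' := by
      intro G' hG'
      exact hdisj G (mem_insert_self _ _) G' (mem_insert_of_mem hG') (fun h => hGs (h ▸ hG'))
    set Tr : Finset (Finset α) :=
      ((s.biUnion id).powerset).filter (fun T => ∀ G ∈ s, (T ∩ G).card = 1) with hTr
    have hTsubdisj : ∀ T ∈ Tr, Disjoint T G := by
      intro T hT
      rw [hTr, mem_filter, mem_powerset] at hT
      refine disjoint_left.mpr fun x hxT hxG => ?_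
      obtain ⟨G', hG', hxG'⟩ := mem_biUnion.mp (hT.1 hxT)
      exact (disjoint_left.mp (hGdisj G' hG')) hxG hxG'
    have key : (((insert G s).biUnion id).powerset).filter
        (fun T => ∀ G' ∈ insert G s, (T ∩ G').card = 1)
        = (G ×ˢ Tr).image (fun p => insert p.1 p.2) := by
      ext T
      simp only [mem_filter, mem_powerset, mem_image, mem_product]
      constructor
      · rintro ⟨hsub, hcap⟩
        have h1 : (T ∩ G).card = 1 := hcap G (mem_insert_self _ _)
        obtain ⟨x, hx⟩ := card_eq_one.mp h1
        have hxT : x ∈ T := (mem_inter.mp (hx ▸ mem_singleton_self x)).1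
        have hxG : x ∈ G := (mem_inter.mp (hx ▸ mem_singleton_self x)).2
        refine ⟨(x, T.erase x), ⟨hxG, ?_⟩, ?_⟩
        · rw [hTr, mem_filter, mem_powerset]
          constructor
          · intro y hy
            have hyT : y ∈ T := mem_of_mem_erase hy
            have hyne : y ≠ x := ne_of_mem_erase hy
            have : y ∈ (insert G s).biUnion id := hsub hyT
            rw [biUnion_insert] at this
            rcases mem_union.mp this with h | h
            · exfalso
              have : y ∈ T ∩ G := mem_inter.mpr ⟨hyT, h⟩
              rw [hx, mem_singleton] at this
              exact hyne this
            · exact h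
          · intro G' hG'
            have hxG' : x ∉ G' := disjoint_left.mp (hGdisj G' hG') hxG
            have : T.erase x ∩ G' = T ∩ G' := by
              ext y
              simp only [mem_inter, mem_erase]
              constructor
              · rintro ⟨⟨_, hy⟩, hy'⟩; exact ⟨hy, hy'⟩
              · rintro ⟨hy, hy'⟩
                exact ⟨⟨fun h => hxG' (h ▸ hy'), hy⟩, hy'⟩
            rw [this]
            exact hcap G' (mem_insert_of_mem hG')
        · simp [insert_erase hxT]
      · rintro ⟨⟨x, T'⟩, ⟨hxG, hT'⟩, rfl⟩
        have hT'd : Disjoint T' G := hTsubdisj T' hT'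
        rw [hTr, mem_filter, mem_powerset] at hT'
        constructor
        · intro y hy
          rw [biUnion_insert, mem_union]
          rcases mem_insert.mp hy with rfl | hy
          · exact Or.inl hxG
          · exact Or.inr (hT'.1 hy)
        · intro G' hG'
          rcases mem_insert.mp hG' with rfl | hG'
          · have : insert x T' ∩ G' = {x} := by
              ext y
              simp only [mem_inter, mem_insert, mem_singleton]
              constructor
              · rintro ⟨rfl | hy, hy'⟩
                · rfl
                · exact absurd hy' (disjoint_left.mp hT'd hy)
              · rintro rfl; exact ⟨Or.inl rfl, hxG⟩
            rw [this, card_singleton]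
          · have hxG' : x ∉ G' := disjoint_left.mp (hGdisj G' hG') hxG
            have : insert x T' ∩ G' = T' ∩ G' := by
              ext y
              simp only [mem_inter, mem_insert]
              constructor
              · rintro ⟨rfl | hy, hy'⟩
                · exact absurd hy' hxG'
                · exact ⟨hy, hy'⟩
              · rintro ⟨hy, hy'⟩; exact ⟨Or.inr hy, hy'⟩
            rw [this]
            exact hT'.2 G' hG'
    rw [key, card_image_of_injOn, card_product, ih hsize' hdisj',
      card_insert_of_notMem hGs, hsize G (mem_insert_self _ _), pow_succ, mul_comm]
    rintro ⟨x, T⟩ hp ⟨y, T'⟩ hq heq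
    simp only [mem_coe, mem_product] at hp hq
    have hTd := hTsubdisj T hp.2
    have hT'd := hTsubdisj T' hq.2
    simp only at heq
    have hxy : x = y := by
      have : x ∈ insert y T' := heq ▸ mem_insert_self x T
      rcases mem_insert.mp this with h | h
      · exact h
      · exact absurd hp.1 (disjoint_left.mp hT'd h)
    subst hxy
    have hxT : x ∉ T := disjoint_right.mp hTd hp.1
    have hxT' : x ∉ T' := disjoint_right.mp hT'd hq.1
    have : T = T' := by
      have := congrArg (·.erase x) heq
      simpa [erase_insert hxT, erase_insert hxT'] using this
    simp [this]

/-- Theorem: in the transversal Russian cards problem, an optimal informative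
strategy (exactly `v^c` announcements, every transversal covered, each
announcement informative) consists of transversal designs `TD_1(a-c, a, v)`:
in each announcement, every partial transversal of size `a - c` lies in exactly
one hand. -/
theorem stmt_17 {α : Type*} [DecidableEq α] (X : Finset α) (𝒢 : Finset (Finset α))
    (a v c : ℕ)
    (hv : 2 ≤ v) (hc1 : 1 ≤ c) (hca : c < a)
    (h𝒢card : 𝒢.card = a)
    (hGsize : ∀ G ∈ 𝒢, G.card = v)
    (hGdisj : ∀ G ∈ 𝒢, ∀ G' ∈ 𝒢, G ≠ G' → Disjoint G G')
    (hGunion : X = 𝒢.biUnion id)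
    (𝔊 : Finset (Finset (Finset α)))
    (hopt : 𝔊.card = v ^ c)
    (hmem : ∀ 𝒜 ∈ 𝔊, ∀ H ∈ 𝒜, H ⊆ X ∧ ∀ G ∈ 𝒢, (H ∩ G).card = 1)
    (hcover : ∀ T : Finset α, T ⊆ X → (∀ G ∈ 𝒢, (T ∩ G).card = 1) →
      ∃ 𝒜 ∈ 𝔊, T ∈ 𝒜)
    (hinf : ∀ 𝒜 ∈ 𝔊, ¬ ∃ H ∈ 𝒜, ∃ H' ∈ 𝒜, H ≠ H' ∧ a - c ≤ (H ∩ H').card) :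
    ∀ 𝒜 ∈ 𝔊, ∀ S ⊆ X, (∀ G ∈ 𝒢, (S ∩ G).card ≤ 1) → S.card = a - c →
      (𝒜.filter fun H => S ⊆ H).card = 1 := by
  classical
  intro 𝒜 h𝒜 S hSX hSpt hScard
  -- the piles missed by S
  set P : Finset (Finset α) := 𝒢.filter (fun G => ¬ (S ∩ G).card = 1) with hP
  -- S is the union of its pile-intersections
  have hSeq : S = 𝒢.biUnion (fun G => S ∩ G) := by
    ext x
    simp only [mem_biUnion, mem_inter]
    constructor
    · intro hx
      obtain ⟨G, hG, hxG⟩ := mem_biUnion.mp (hGunion ▸ hSX hx)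
      exact ⟨G, hG, hx, hxG⟩
    · rintro ⟨G, _, hx, _⟩; exact hx
  have hsum : ∑ G ∈ 𝒢, (S ∩ G).card = a - c := by
    rw [← hScard]
    conv_rhs => rw [hSeq]
    rw [card_biUnion]
    intro G hG G' hG' hne
    exact Disjoint.mono inter_subset_right inter_subset_right (hGdisj G hG G' hG' hne)
  have hfilt1 : (𝒢.filter (fun G => (S ∩ G).card = 1)).card = a - c := by
    rw [← hsum, ← sum_filter_add_sum_filter_not 𝒢 (fun G => (S ∩ G).card = 1)]
    have h1 : ∑ G ∈ 𝒢.filter (fun G => (S ∩ G).card = 1), (S ∩ G).card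
        = (𝒢.filter (fun G => (S ∩ G).card = 1)).card := by
      rw [card_eq_sum_ones]
      exact sum_congr rfl fun G hG => (mem_filter.mp hG).2
    have h2 : ∑ G ∈ 𝒢.filter (fun G => ¬(S ∩ G).card = 1), (S ∩ G).card = 0 := by
      refine sum_eq_zero fun G hG => ?_
      have := mem_filter.mp hG
      have := hSpt G this.1
      omega
    omega
  have hPcard : P.card = c := by
    have := card_filter_add_card_filter_not (s := 𝒢)
      (p := fun G => (S ∩ G).card = 1)
    rw [hfilt1, h𝒢card] at this
    simp only [hP]
    omega
  have hPempty : ∀ G ∈ P, S ∩ G = ∅ := by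
    intro G hG
    have h := mem_filter.mp hG
    have := hSpt G h.1
    have : (S ∩ G).card = 0 := by omega
    exact card_eq_zero.mp this
  -- transversals of P
  set Tr : Finset (Finset α) :=
    ((P.biUnion id).powerset).filter (fun T => ∀ G ∈ P, (T ∩ G).card = 1) with hTrdef
  have hTrcard : Tr.card = v ^ c := by
    rw [hTrdef, trans_card v P (fun G hG => hGsize G (mem_filter.mp hG).1)
      (fun G hG G' hG' h => hGdisj G (mem_filter.mp hG).1 G' (mem_filter.mp hG').1 h), hPcard]
  -- every T ∈ Tr is disjoint from S
  have hTrS : ∀ T ∈ Tr, Disjoint S T := by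
    intro T hT
    rw [hTrdef, mem_filter, mem_powerset] at hT
    refine disjoint_right.mpr fun x hxT hxS => ?_
    obtain ⟨G, hG, hxG⟩ := mem_biUnion.mp (hT.1 hxT)
    have : x ∈ S ∩ G := mem_inter.mpr ⟨hxS, hxG⟩
    rw [hPempty G hG] at this
    exact notMem_empty x this
  -- S ∪ T is a transversal of 𝒢
  have hunion : ∀ T ∈ Tr, S ∪ T ⊆ X ∧ ∀ G ∈ 𝒢, ((S ∪ T) ∩ G).card = 1 := by
    intro T hT
    have hTr := hT
    rw [hTrdef, mem_filter, mem_powerset] at hTr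
    constructor
    · intro x hx
      rcases mem_union.mp hx with h | h
      · exact hSX h
      · have := hTr.1 h
        obtain ⟨G, hG, hxG⟩ := mem_biUnion.mp this
        rw [hGunion]
        exact mem_biUnion.mpr ⟨G, (mem_filter.mp hG).1, hxG⟩
    · intro G hG
      rw [union_inter_distrib_right]
      by_cases hGP : G ∈ P
      · rw [hPempty G hGP, empty_union]
        exact hTr.2 G hGP
      · have hS1 : (S ∩ G).card = 1 := by
          have : ¬ (S ∩ G).card ≠ 1 := fun h => hGP (mem_filter.mpr ⟨hG, h⟩)
          omega
        have hTG : T ∩ G = ∅ := by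
          rw [eq_empty_iff_forall_notMem]
          rintro x hx
          obtain ⟨hxT, hxG⟩ := mem_inter.mp hx
          obtain ⟨G', hG', hxG'⟩ := mem_biUnion.mp (hTr.1 hxT)
          have hG'𝒢 := (mem_filter.mp hG').1
          have hne : G ≠ G' := fun h => hGP (h ▸ hG')
          exact disjoint_left.mp (hGdisj G hG G' hG'𝒢 hne) hxG hxG'
        rw [hTG, union_empty]
        exact hS1
  -- choose an announcement for each S ∪ T
  have hchoice : ∀ T ∈ Tr, ∃ ℬ ∈ 𝔊, S ∪ T ∈ ℬ := by
    intro T hT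
    exact hcover (S ∪ T) (hunion T hT).1 (hunion T hT).2
  choose f hf1 hf2 using hchoice
  -- key: any two distinct hands in a common announcement containing S coincide
  have hkey : ∀ ℬ ∈ 𝔊, ∀ H ∈ ℬ, ∀ H' ∈ ℬ, S ⊆ H → S ⊆ H' → H = H' := by
    intro ℬ hℬ H hH H' hH' hSH hSH'
    by_contra hne
    refine hinf ℬ hℬ ⟨H, hH, H', hH', hne, ?_⟩
    calc a - c = S.card := hScard.symm
      _ ≤ (H ∩ H').card := card_le_card (subset_inter hSH hSH')
  -- f is injective
  have hinj : ∀ T₁ T₂ h₁ h₂, f T₁ h₁ = f T₂ h₂ → T₁ = T₂ := by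
    intro T₁ T₂ h₁ h₂ heq
    have hu : S ∪ T₁ = S ∪ T₂ := by
      refine hkey (f T₁ h₁) (hf1 T₁ h₁) (S ∪ T₁) (hf2 T₁ h₁) (S ∪ T₂)
        (heq ▸ hf2 T₂ h₂) subset_union_left subset_union_left
    have := congrArg (· \ S) hu
    simpa [union_sdiff_cancel_left (hTrS T₁ h₁), union_sdiff_cancel_left (hTrS T₂ h₂)]
      using this
  -- f is surjective onto 𝔊
  obtain ⟨T, hT, hT𝒜⟩ := surj_on_of_inj_on_of_card_le f hf1 hinj
    (by rw [hopt, hTrcard]) 𝒜 h𝒜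
  have hmem𝒜 : S ∪ T ∈ 𝒜 := hT𝒜 ▸ hf2 T hT
  -- now compute the filter
  rw [card_eq_one]
  refine ⟨S ∪ T, ?_⟩
  ext H
  simp only [mem_filter, mem_singleton]
  constructor
  · rintro ⟨hH𝒜, hSH⟩
    exact hkey 𝒜 h𝒜 H hH𝒜 (S ∪ T) hmem𝒜 hSH subset_union_left
  · rintro rfl
    exact ⟨hmem𝒜, subset_union_left⟩
end
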